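/- arXiv:2601.02610 — 3 statements merged into one kernel-verified Lean document; each statement's English description precedes it below -/
import Mathlib

section
/- Under Assumption (A1), for every α ∈ (0,1) the SLC procedure at level α satisfies bFDR(SLC) ≤ α·m0/m. -/
open MeasureTheory Finset

noncomputable section

attribute [local instance] Classical.propDecidable

/-- The conformal p-value of test point `i` (scores are `s 1, …, s (n+m)`,
calibration scores are `s 1, …, s n`, the `i`-th test score is `s (n+i)`). -/
def pval (n : ℕ) (s : ℕ → ℝ) (i : ℕ) : ℝ :=
  (1 + (((Finset.Icc 1 n)).filter (fun j => s (n + i) ≤ s j)).card) / (n + 1)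

/-- The p-value attached to the `k`-th largest test score, with the convention
`pOrd … 0 = 0`. -/
def pOrd (n : ℕ) (s : ℕ → ℝ) (σ : ℕ → ℕ) (k : ℕ) : ℝ :=
  if k = 0 then 0 else pval n s (σ k)

/-- The largest element of `argmin_{k ∈ {0,…,m}} f k`. -/
def maxArgmin (m : ℕ) (f : ℕ → ℝ) : ℕ :=
  sSup {k | k ≤ m ∧ ∀ k' ≤ m, f k ≤ f k'}

/-- The largest element of the argmin of `f` over `{k ∈ {0,…,m} | P k}`. -/
def maxArgminOn (m : ℕ) (P : ℕ → Prop) (f : ℕ → ℝ) : ℕ :=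
  sSup {k | k ≤ m ∧ P k ∧ ∀ k' ≤ m, P k' → f k ≤ f k'}

/-- The SL (support line) index `k̂_SL` at level `α`. -/
def khatSL (n m : ℕ) (α : ℝ) (s : ℕ → ℝ) (σ : ℕ → ℕ) : ℕ :=
  maxArgmin m (fun k => pOrd n s σ k - α * k / m)

/-- The SLC (support line conformal) index `k̂_SLC` at level `α`. -/
def khatSLC (n m : ℕ) (α : ℝ) (s : ℕ → ℝ) (σ : ℕ → ℕ) : ℕ :=
  maxArgmin m (fun k => pOrd n s σ k - k * max (α / m - 1 / (n + 1)) 0)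

/-- `σ` is the permutation of `{1,…,m}` ordering the test scores decreasingly,
with the convention `σ 0 = 0`. -/
def SortsTest (n m : ℕ) (s : ℕ → ℝ) (σ : ℕ → ℕ) : Prop :=
  σ 0 = 0 ∧ Set.BijOn σ (Finset.Icc 1 m) (Finset.Icc 1 m) ∧
    ∀ k ∈ Finset.Icc 1 m, ∀ k' ∈ Finset.Icc 1 m, k < k' → s (n + σ k') < s (n + σ k)

/-- `σ'` enumerates the subsample `A ⊆ {1,…,m}` so that the corresponding test
scores are decreasing, with the convention `σ' 0 = 0`. -/
def SortsSub (n : ℕ) (s : ℕ → ℝ) (A : Finset ℕ) (σ' : ℕ → ℕ) : Prop :=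
  σ' 0 = 0 ∧ Set.BijOn σ' (Finset.Icc 1 A.card) ↑A ∧
    ∀ k ∈ Finset.Icc 1 A.card, ∀ k' ∈ Finset.Icc 1 A.card, k < k' →
      s (n + σ' k') < s (n + σ' k)

/-- The indices of the calibration scores together with the indices of the
null test scores. -/
def NullIdx (n : ℕ) (H0 : Finset ℕ) : Finset ℕ :=
  Finset.Icc 1 n ∪ H0.image (fun i => n + i)

/-- Assumption (A1), first part: the joint law of the scores is invariant under any
permutation of the coordinates indexed by `{1,…,n} ∪ {n+i : i ∈ H0}` fixing all the
other coordinates. -/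
def ExchangeableNulls {Ω : Type*} [MeasurableSpace Ω] (μ : Measure Ω)
    (n : ℕ) (H0 : Finset ℕ) (S : Ω → ℕ → ℝ) : Prop :=
  ∀ e : Equiv.Perm ℕ, (∀ j ∉ NullIdx n H0, e j = j) →
    Measure.map (fun ω => fun j => S ω (e j)) μ = Measure.map S μ

/-- The event `Ω_i`: the largest test score other than `S_{n+i}` is at least the
maximum of the calibration scores and of `S_{n+i}`. -/
def OmegaEvent {Ω : Type*} (n m : ℕ) (S : Ω → ℕ → ℝ) (i : ℕ) : Set Ω :=
  {ω | ∃ j ∈ (Finset.Icc 1 m).erase i,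
    ∀ l ∈ Finset.Icc 1 n ∪ {n + i}, S ω l ≤ S ω (n + j)}

/-- The Storey estimator `π̂₀` with parameter `s0`. -/
def storey (n m s0 : ℕ) (s : ℕ → ℝ) : ℝ :=
  (1 + (((Finset.Icc 1 m)).filter
      (fun i => ((s0 : ℝ) + 1) / (n + 1) ≤ pval n s i)).card) /
    (m * (1 - ((s0 : ℝ) + 1) / (n + 1)))

/-- The adaptive SL index `k̂_ASL` at level `α` with Storey parameter `s0`. -/
def khatASL (n m s0 : ℕ) (α : ℝ) (s : ℕ → ℝ) (σ : ℕ → ℕ) : ℕ :=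
  maxArgminOn m (fun k => pOrd n s σ k ≤ (s0 : ℝ) / (n + 1))
    (fun k => pOrd n s σ k - α * k / (m * storey n m s0 s))

/-- The adaptive SLC index `k̂_ASLC` at level `α` with Storey parameter `s0`. -/
def khatASLC (n m s0 : ℕ) (α : ℝ) (s : ℕ → ℝ) (σ : ℕ → ℕ) : ℕ :=
  maxArgmin m (fun k =>
    pOrd n s σ k - k * max (α / (m * storey n m s0 s) - 1 / (n + 1)) 0)

/-- The rejection set of the top-`k` procedure: all test points whose score is at
least the `k`-th largest one in the (sub)ordering `σ'` (empty if `k = 0`). -/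
def rejSet (n m : ℕ) (s : ℕ → ℝ) (σ' : ℕ → ℕ) (k : ℕ) : Finset ℕ :=
  if k = 0 then ∅ else (Finset.Icc 1 m).filter (fun i => s (n + σ' k) ≤ s (n + i))

/-- Probability of drawing a given subsample, for the uniform distribution over
subsets of `{1,…,m}` of cardinality `t`. -/
def subProb (m t : ℕ) (A : Finset ℕ) : ENNReal :=
  if A ∈ (Finset.Icc 1 m).powersetCard t
    then (((Finset.Icc 1 m).powersetCard t).card : ENNReal)⁻¹ else 0

/-- The `q`-th largest value among `v 0, …, v (B-1)`. -/
def kthLargest (B q : ℕ) (v : ℕ → ℕ) : ℕ :=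
  sSup {t | q ≤ ((Finset.range B).filter (fun b => t ≤ v b)).card}

/-- The adaptive subsampled index: ASLC applied to a subsample of size `t`
(enumerated by `σ'`), where the Storey estimator is computed on the full test
sample of size `m`. -/
def khatASLCsub (n m t s0 : ℕ) (α : ℝ) (s : ℕ → ℝ) (σ' : ℕ → ℕ) : ℕ :=
  maxArgminOn t (fun k => pOrd n s σ' k ≤ (s0 : ℝ) / (n + 1))
    (fun k => pOrd n s σ' k - k * max (α / (storey n m s0 s * t) - 1 / (n + 1)) 0)

namespace SLCaux

/-- Number of calibration scores at least the `t`-th test score. -/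
def cnt (n : ℕ) (f : ℕ → ℝ) (t : ℕ) : ℕ :=
  ((Finset.Icc 1 n).filter (fun j => f (n + t) ≤ f j)).card

/-- Rank of the `i`-th test score among the test scores (1 = largest). -/
def rnk (n m : ℕ) (f : ℕ → ℝ) (i : ℕ) : ℕ :=
  ((Finset.Icc 1 m).filter (fun t => f (n + i) ≤ f (n + t))).card

/-- Number of test points whose `cnt` is at most `x`. -/
def Scnt (n m : ℕ) (f : ℕ → ℝ) (x : ℕ) : ℕ :=
  ((Finset.Icc 1 m).filter (fun t => cnt n f t ≤ x)).card

/-- `k`-th smallest value of `cnt` over the test points. -/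
def qkN (n m : ℕ) (f : ℕ → ℝ) (k : ℕ) : ℕ :=
  sInf {x | k ≤ Scnt n m f x}

/-- Canonical (sorter-free) version of the SLC objective function. -/
def objC (n m : ℕ) (α : ℝ) (f : ℕ → ℝ) (k : ℕ) : ℝ :=
  (if k = 0 then 0 else (1 + (qkN n m f k : ℝ)) / (n + 1))
    - k * max (α / m - 1 / (n + 1)) 0

/-- Canonical (sorter-free) version of `khatSLC`. -/
def khatC (n m : ℕ) (α : ℝ) (f : ℕ → ℝ) : ℕ := maxArgmin m (objC n m α f)

/-- The boundary-discovery event for test point `i`, as a set of score functions. -/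
def Dset (n m : ℕ) (α : ℝ) (i : ℕ) : Set (ℕ → ℝ) :=
  {f | 1 ≤ khatC n m α f ∧ rnk n m f i = khatC n m α f}

lemma pval_eq (n : ℕ) (f : ℕ → ℝ) (t : ℕ) :
    pval n f t = (1 + (cnt n f t : ℝ)) / ((n : ℝ) + 1) := rfl

section MaxArgmin

variable (m : ℕ) (f : ℕ → ℝ)

lemma argmin_nonempty : {k | k ≤ m ∧ ∀ k' ≤ m, f k ≤ f k'}.Nonempty := by
  obtain ⟨k, hk, hmin⟩ := Finset.exists_min_image (Finset.range (m+1)) f ⟨0, by simp⟩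
  exact ⟨k, Nat.lt_succ_iff.mp (Finset.mem_range.mp hk),
    fun k' hk' => hmin k' (Finset.mem_range.mpr (Nat.lt_succ_of_le hk'))⟩

lemma argmin_bdd : BddAbove {k | k ≤ m ∧ ∀ k' ≤ m, f k ≤ f k'} :=
  ⟨m, fun k hk => hk.1⟩

lemma maxArgmin_mem : maxArgmin m f ∈ {k | k ≤ m ∧ ∀ k' ≤ m, f k ≤ f k'} :=
  Nat.sSup_mem (argmin_nonempty m f) (argmin_bdd m f)

lemma maxArgmin_le : maxArgmin m f ≤ m := (maxArgmin_mem m f).1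

lemma maxArgmin_isMin : ∀ k' ≤ m, f (maxArgmin m f) ≤ f k' := (maxArgmin_mem m f).2

lemma maxArgmin_lt {l : ℕ} (hl : l ≤ m) (h : maxArgmin m f < l) :
    f (maxArgmin m f) < f l := by
  by_contra h'
  push_neg at h'
  have hmem : l ∈ {k | k ≤ m ∧ ∀ k' ≤ m, f k ≤ f k'} :=
    ⟨hl, fun k' hk' => le_trans h' (maxArgmin_isMin m f k' hk')⟩
  exact absurd (le_csSup (argmin_bdd m f) hmem) (not_le.mpr h)

lemma maxArgmin_congr {g : ℕ → ℝ} (h : ∀ k ≤ m, f k = g k) :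
    maxArgmin m f = maxArgmin m g := by
  unfold maxArgmin
  congr 1
  ext k
  constructor
  · rintro ⟨hk, hmin⟩
    exact ⟨hk, fun k' hk' => (h k hk) ▸ (h k' hk') ▸ hmin k' hk'⟩
  · rintro ⟨hk, hmin⟩
    exact ⟨hk, fun k' hk' => (h k hk) ▸ (h k' hk') ▸ hmin k' hk'⟩

lemma maxArgmin_eq_iff {k : ℕ} (hk : k ≤ m) :
    maxArgmin m f = k ↔ ((∀ l ≤ m, f k ≤ f l) ∧ ∀ l ≤ m, k < l → f k < f l) := by
  constructor
  · rintro rfl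
    exact ⟨maxArgmin_isMin m f, fun l hl hlt => maxArgmin_lt m f hl hlt⟩
  · rintro ⟨hmin, hstrict⟩
    have hmem : k ∈ {k | k ≤ m ∧ ∀ k' ≤ m, f k ≤ f k'} := ⟨hk, hmin⟩
    refine le_antisymm ?_ (le_csSup (argmin_bdd m f) hmem)
    refine csSup_le ⟨k, hmem⟩ ?_
    rintro l ⟨hl, hlmin⟩
    by_contra hkl
    push_neg at hkl
    exact absurd (hlmin k hk) (not_le.mpr (hstrict l hl hkl))

end MaxArgmin

end SLCaux
namespace SLCaux

section Basic

variable {n m : ℕ} {f : ℕ → ℝ}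

lemma cnt_mono {t t' : ℕ} (h : f (n + t') ≤ f (n + t)) : cnt n f t ≤ cnt n f t' := by
  apply Finset.card_le_card
  intro j hj
  simp only [cnt, Finset.mem_filter] at *
  exact ⟨hj.1, le_trans h hj.2⟩

lemma test_mem_range {t : ℕ} (ht : t ∈ Finset.Icc 1 m) :
    n + t ∈ (Finset.Icc 1 (n + m) : Finset ℕ) := by
  simp only [Finset.mem_Icc] at *
  omega

lemma test_eq (hf : Set.InjOn f (Finset.Icc 1 (n + m)))
    {t t' : ℕ} (ht : t ∈ Finset.Icc 1 m) (ht' : t' ∈ Finset.Icc 1 m)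
    (h : f (n + t) = f (n + t')) : t = t' := by
  have := hf (by exact_mod_cast test_mem_range ht) (by exact_mod_cast test_mem_range ht') h
  omega

lemma score_lt_of_cnt_lt (hf : Set.InjOn f (Finset.Icc 1 (n + m)))
    {t t' : ℕ} (ht : t ∈ Finset.Icc 1 m) (ht' : t' ∈ Finset.Icc 1 m)
    (h : cnt n f t < cnt n f t') : f (n + t') < f (n + t) := by
  rcases lt_trichotomy (f (n + t')) (f (n + t)) with h' | h' | h'
  · exact h'
  · exact absurd (test_eq hf ht ht' h'.symm) (by rintro rfl; exact lt_irrefl _ h)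
  · exact absurd (cnt_mono h'.le) (not_le.mpr h)

lemma rnk_pos {i : ℕ} (hi : i ∈ Finset.Icc 1 m) : 1 ≤ rnk n m f i := by
  rw [Nat.one_le_iff_ne_zero, ← Nat.pos_iff_ne_zero, rnk, Finset.card_pos]
  exact ⟨i, Finset.mem_filter.mpr ⟨hi, le_refl _⟩⟩

lemma rnk_le_m {i : ℕ} : rnk n m f i ≤ m := by
  calc rnk n m f i ≤ (Finset.Icc 1 m).card := Finset.card_le_card (Finset.filter_subset _ _)
  _ = m := by simp

lemma rnk_inj (hf : Set.InjOn f (Finset.Icc 1 (n + m)))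
    {t t' : ℕ} (ht : t ∈ Finset.Icc 1 m) (ht' : t' ∈ Finset.Icc 1 m)
    (h : rnk n m f t = rnk n m f t') : t = t' := by
  have key : ∀ u u' : ℕ, u ∈ Finset.Icc 1 m → u' ∈ Finset.Icc 1 m →
      f (n + u) < f (n + u') → rnk n m f u' < rnk n m f u := by
    intro u u' hu hu' hlt
    apply Finset.card_lt_card
    rw [Finset.ssubset_iff_of_subset]
    · exact ⟨u, Finset.mem_filter.mpr ⟨hu, le_refl _⟩,
        fun hmem => absurd (Finset.mem_filter.mp hmem).2 (not_le.mpr hlt)⟩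
    · intro x hx
      rw [Finset.mem_filter] at *
      exact ⟨hx.1, le_trans hlt.le hx.2⟩
  rcases lt_trichotomy (f (n + t)) (f (n + t')) with h' | h' | h'
  · have := key t t' ht ht' h'; omega
  · exact test_eq hf ht ht' h'
  · have := key t' t ht' ht h'; omega

lemma cnt_le_n {t : ℕ} : cnt n f t ≤ n := by
  calc cnt n f t ≤ (Finset.Icc 1 n).card := Finset.card_le_card (Finset.filter_subset _ _)
  _ = n := by simp

lemma Scnt_n : Scnt n m f n = m := by
  rw [Scnt, Finset.filter_true_of_mem (fun t _ => cnt_le_n)]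
  simp

lemma qkN_le {k x : ℕ} (h : k ≤ Scnt n m f x) : qkN n m f k ≤ x := Nat.sInf_le h

lemma qkN_mem {k : ℕ} (hk : k ≤ m) : k ≤ Scnt n m f (qkN n m f k) :=
  Nat.sInf_mem (⟨n, by simpa [Set.mem_setOf_eq, Scnt_n] using hk⟩ :
    {x | k ≤ Scnt n m f x}.Nonempty)

lemma qkN_le_n {k : ℕ} (hk : k ≤ m) : qkN n m f k ≤ n :=
  qkN_le (by rw [Scnt_n]; exact hk)

lemma qkN_rnk (hf : Set.InjOn f (Finset.Icc 1 (n + m)))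
    {i : ℕ} (hi : i ∈ Finset.Icc 1 m) : qkN n m f (rnk n m f i) = cnt n f i := by
  apply le_antisymm
  · apply qkN_le
    apply Finset.card_le_card
    intro t ht
    simp only [rnk, Scnt, Finset.mem_filter] at *
    exact ⟨ht.1, cnt_mono ht.2⟩
  · by_contra hx
    push_neg at hx
    have hmem := qkN_mem (n := n) (m := m) (f := f) (k := rnk n m f i)
      (rnk_le_m (n := n) (m := m) (f := f) (i := i))
    have hsub : (Finset.Icc 1 m).filter (fun t => cnt n f t ≤ qkN n m f (rnk n m f i)) ⊆
        ((Finset.Icc 1 m).filter (fun t => f (n + i) ≤ f (n + t))).erase i := by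
      intro t ht
      rw [Finset.mem_filter] at ht
      have hlt : cnt n f t < cnt n f i := lt_of_le_of_lt ht.2 hx
      have hscore := score_lt_of_cnt_lt hf ht.1 hi hlt
      refine Finset.mem_erase.mpr ⟨?_, Finset.mem_filter.mpr ⟨ht.1, hscore.le⟩⟩
      rintro rfl
      exact lt_irrefl _ hlt
    have hcard := Finset.card_le_card hsub
    rw [Finset.card_erase_of_mem (show i ∈ (Finset.Icc 1 m).filter
      (fun t => f (n + i) ≤ f (n + t)) from Finset.mem_filter.mpr ⟨hi, le_refl _⟩)] at hcard
    have h1 := rnk_pos (n := n) (f := f) hi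
    unfold Scnt at hmem
    have hg : rnk n m f i = ((Finset.Icc 1 m).filter (fun t => f (n + i) ≤ f (n + t))).card := rfl
    omega

end Basic

end SLCaux
namespace SLCaux

section Sorter

variable {n m : ℕ} {f : ℕ → ℝ} {σ : ℕ → ℕ}

lemma sorts_qkN (hf : Set.InjOn f (Finset.Icc 1 (n + m))) (hs : SortsTest n m f σ)
    {k : ℕ} (hk : k ∈ Finset.Icc 1 m) : qkN n m f k = cnt n f (σ k) := by
  obtain ⟨-, hbij, hsort⟩ := hs
  have hkm := Finset.mem_Icc.mp hk
  have hσk : σ k ∈ Finset.Icc 1 m := by exact_mod_cast hbij.mapsTo (by exact_mod_cast hk)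
  apply le_antisymm
  · apply qkN_le
    have himage : (Finset.Icc 1 k).image σ ⊆
        (Finset.Icc 1 m).filter (fun t => cnt n f t ≤ cnt n f (σ k)) := by
      intro t ht
      obtain ⟨l, hl, rfl⟩ := Finset.mem_image.mp ht
      have hlIcc := Finset.mem_Icc.mp hl
      have hl' : l ∈ Finset.Icc 1 m := Finset.mem_Icc.mpr ⟨hlIcc.1, le_trans hlIcc.2 hkm.2⟩
      refine Finset.mem_filter.mpr ⟨by exact_mod_cast hbij.mapsTo (by exact_mod_cast hl'), ?_⟩
      rcases eq_or_lt_of_le hlIcc.2 with rfl | hlt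
      · exact le_refl _
      · exact cnt_mono (hsort l hl' k hk hlt).le
    have hcard : ((Finset.Icc 1 k).image σ).card = k := by
      rw [Finset.card_image_of_injOn (hbij.injOn.mono ?_)]
      · simp
      · intro x hx
        simp only [Finset.coe_Icc, Set.mem_Icc] at *
        omega
    calc k = ((Finset.Icc 1 k).image σ).card := hcard.symm
    _ ≤ _ := Finset.card_le_card himage
  · have hmem := qkN_mem (n := n) (m := m) (f := f) (k := k) hkm.2
    by_contra hlt
    push_neg at hlt
    have hsub : (Finset.Icc 1 m).filter (fun t => cnt n f t ≤ qkN n m f k) ⊆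
        (Finset.Icc 1 (k - 1)).image σ := by
      intro t ht
      rw [Finset.mem_filter] at ht
      have h1 : cnt n f t < cnt n f (σ k) := lt_of_le_of_lt ht.2 hlt
      have hscore : f (n + σ k) < f (n + t) := score_lt_of_cnt_lt hf ht.1 hσk h1
      obtain ⟨l, hl, rfl⟩ := hbij.surjOn (by exact_mod_cast ht.1)
      have hl' : l ∈ Finset.Icc 1 m := by exact_mod_cast hl
      have hlk : l < k := by
        by_contra hge
        push_neg at hge
        rcases eq_or_lt_of_le hge with rfl | hgt
        · exact lt_irrefl _ hscore
        · exact absurd (hsort k hk l hl' hgt) (not_lt.mpr hscore.le)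
      refine Finset.mem_image.mpr ⟨l, ?_, rfl⟩
      have := (Finset.mem_Icc.mp hl').1
      rw [Finset.mem_Icc]
      omega
    have hcard := Finset.card_le_card hsub
    have hcard2 : ((Finset.Icc 1 (k - 1)).image σ).card ≤ k - 1 :=
      le_trans Finset.card_image_le (by simp)
    unfold Scnt at hmem
    omega

lemma sorts_rnk (hf : Set.InjOn f (Finset.Icc 1 (n + m))) (hs : SortsTest n m f σ)
    {k : ℕ} (hk : k ∈ Finset.Icc 1 m) : rnk n m f (σ k) = k := by
  obtain ⟨-, hbij, hsort⟩ := hs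
  have hkm := Finset.mem_Icc.mp hk
  have hfilter : (Finset.Icc 1 m).filter (fun t => f (n + σ k) ≤ f (n + t)) =
      (Finset.Icc 1 k).image σ := by
    ext t
    simp only [Finset.mem_filter, Finset.mem_image]
    constructor
    · rintro ⟨ht, hle⟩
      obtain ⟨l, hl, rfl⟩ := hbij.surjOn (by exact_mod_cast ht)
      have hl' : l ∈ Finset.Icc 1 m := by exact_mod_cast hl
      refine ⟨l, ?_, rfl⟩
      have hlk : l ≤ k := by
        by_contra hgt
        push_neg at hgt
        exact absurd (hsort k hk l hl' hgt) (not_lt.mpr hle)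
      have := (Finset.mem_Icc.mp hl').1
      rw [Finset.mem_Icc]
      omega
    · rintro ⟨l, hl, rfl⟩
      have hlIcc := Finset.mem_Icc.mp hl
      have hl' : l ∈ Finset.Icc 1 m := Finset.mem_Icc.mpr ⟨hlIcc.1, le_trans hlIcc.2 hkm.2⟩
      refine ⟨by exact_mod_cast hbij.mapsTo (by exact_mod_cast hl'), ?_⟩
      rcases eq_or_lt_of_le hlIcc.2 with rfl | hlt
      · exact le_refl _
      · exact (hsort l hl' k hk hlt).le
  rw [rnk, hfilter, Finset.card_image_of_injOn (hbij.injOn.mono ?_)]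
  · simp
  · intro x hx
    simp only [Finset.coe_Icc, Set.mem_Icc] at *
    omega

lemma khatSLC_eq_khatC (hf : Set.InjOn f (Finset.Icc 1 (n + m))) (hs : SortsTest n m f σ)
    (α : ℝ) : khatSLC n m α f σ = khatC n m α f := by
  unfold khatSLC khatC
  apply maxArgmin_congr
  intro k hk
  unfold objC pOrd
  by_cases hk0 : k = 0
  · simp [hk0]
  · rw [if_neg hk0, if_neg hk0, pval_eq,
      sorts_qkN hf hs (Finset.mem_Icc.mpr ⟨Nat.one_le_iff_ne_zero.mpr hk0, hk⟩)]

lemma event_mem_Dset (hf : Set.InjOn f (Finset.Icc 1 (n + m))) (hs : SortsTest n m f σ)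
    {α : ℝ} (h1 : 1 ≤ khatSLC n m α f σ) : f ∈ Dset n m α (σ (khatSLC n m α f σ)) := by
  have hkC := khatSLC_eq_khatC hf hs (σ := σ) α
  have hkm : khatSLC n m α f σ ∈ Finset.Icc 1 m :=
    Finset.mem_Icc.mpr ⟨h1, hkC ▸ maxArgmin_le m (objC n m α f)⟩
  exact ⟨hkC ▸ h1, by rw [sorts_rnk hf hs hkm, hkC]⟩

end Sorter

end SLCaux
namespace SLCaux

/-- Calibration indices together with `n + i`. -/
def Jset (n i : ℕ) : Finset ℕ := Finset.Icc 1 n ∪ {n + i}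

/-- The score function obtained by swapping coordinates `j` and `n + i`. -/
def gcfg (n i : ℕ) (f : ℕ → ℝ) (j : ℕ) : ℕ → ℝ := f ∘ (Equiv.swap j (n + i))

/-- Rank of `f j` in the pooled sample indexed by `Jset n i`. -/
def rj (n i : ℕ) (f : ℕ → ℝ) (j : ℕ) : ℕ := ((Jset n i).filter (fun l => f j ≤ f l)).card

/-- Rank that test point `i` would have among test scores if its score were `f j`. -/
def kj (n m i : ℕ) (f : ℕ → ℝ) (j : ℕ) : ℕ :=
  1 + (((Finset.Icc 1 m).erase i).filter (fun t => f j ≤ f (n + t))).card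

section Swap

variable {n m i : ℕ} {f : ℕ → ℝ}

lemma Jset_subset (hi : i ∈ Finset.Icc 1 m) : Jset n i ⊆ Finset.Icc 1 (n + m) := by
  intro x hx
  have hi' := Finset.mem_Icc.mp hi
  rcases Finset.mem_union.mp hx with h | h
  · have := Finset.mem_Icc.mp h
    rw [Finset.mem_Icc]
    omega
  · rw [Finset.mem_singleton.mp h, Finset.mem_Icc]
    omega

lemma mem_Jset_self : n + i ∈ Jset n i := Finset.mem_union_right _ (Finset.mem_singleton_self _)

lemma Jset_card (hi : 1 ≤ i) : (Jset n i).card = n + 1 := by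
  rw [Jset, Finset.card_union_of_disjoint, Nat.card_Icc, Finset.card_singleton]
  · simp
  · rw [Finset.disjoint_singleton_right, Finset.mem_Icc]
    omega

lemma swap_mem_Icc (hj : j ∈ Jset n i) (hi : i ∈ Finset.Icc 1 m) {x : ℕ}
    (hx : x ∈ Finset.Icc 1 (n + m)) : Equiv.swap j (n + i) x ∈ Finset.Icc 1 (n + m) := by
  rcases eq_or_ne x j with rfl | hxj
  · rw [Equiv.swap_apply_left]
    exact Jset_subset hi mem_Jset_self
  · rcases eq_or_ne x (n + i) with rfl | hxi
    · rw [Equiv.swap_apply_right]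
      exact Jset_subset hi hj
    · rw [Equiv.swap_apply_of_ne_of_ne hxj hxi]
      exact hx

lemma gcfg_injOn (hf : Set.InjOn f (Finset.Icc 1 (n + m))) (hi : i ∈ Finset.Icc 1 m)
    {j : ℕ} (hj : j ∈ Jset n i) :
    Set.InjOn (gcfg n i f j) (Finset.Icc 1 (n + m)) := by
  intro x hx y hy hxy
  have hx' : (x : ℕ) ∈ Finset.Icc 1 (n + m) := by exact_mod_cast hx
  have hy' : (y : ℕ) ∈ Finset.Icc 1 (n + m) := by exact_mod_cast hy
  have := hf (by exact_mod_cast swap_mem_Icc hj hi hx')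
    (by exact_mod_cast swap_mem_Icc hj hi hy') hxy
  exact (Equiv.swap j (n + i)).injective this

lemma Jset_erase_eq_image {j : ℕ} (hj : j ∈ Jset n i) (hi : 1 ≤ i) :
    (Jset n i).erase j = (Finset.Icc 1 n).image (Equiv.swap j (n + i)) := by
  ext x
  simp only [Finset.mem_erase, Finset.mem_image]
  constructor
  · rintro ⟨hxj, hx⟩
    rcases Finset.mem_union.mp hx with h | h
    · rcases eq_or_ne x (n + i) with rfl | hxi
      · exact absurd (Finset.mem_Icc.mp h).2 (by omega)
      · exact ⟨x, h, Equiv.swap_apply_of_ne_of_ne hxj hxi⟩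
    · -- x = n + i, x ≠ j, so j ∈ Icc 1 n
      obtain rfl := Finset.mem_singleton.mp h
      rcases Finset.mem_union.mp hj with h' | h'
      · exact ⟨j, h', Equiv.swap_apply_left _ _⟩
      · exact absurd (Finset.mem_singleton.mp h') (fun e => hxj e.symm)
  · rintro ⟨l, hl, rfl⟩
    have hln := Finset.mem_Icc.mp hl
    rcases eq_or_ne l j with rfl | hlj
    · rw [Equiv.swap_apply_left]
      refine ⟨by omega, mem_Jset_self⟩
    · have hlni : l ≠ n + i := by omega
      rw [Equiv.swap_apply_of_ne_of_ne hlj hlni]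
      exact ⟨hlj, Finset.mem_union_left _ hl⟩

/-- Count, in a swapped configuration, of calibration scores at least `y`. -/
lemma card_filter_swap {j : ℕ} (hj : j ∈ Jset n i) (hi : 1 ≤ i) (y : ℝ) :
    ((Finset.Icc 1 n).filter (fun l => y ≤ f (Equiv.swap j (n + i) l))).card
      = (((Jset n i).erase j).filter (fun l => y ≤ f l)).card := by
  rw [Jset_erase_eq_image hj hi, Finset.filter_image,
    Finset.card_image_of_injective _ (Equiv.swap j (n + i)).injective]

lemma cnt_gcfg_self (hi : i ∈ Finset.Icc 1 m) {j : ℕ} (hj : j ∈ Jset n i) :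
    cnt n (gcfg n i f j) i + 1 = rj n i f j := by
  have h1 : cnt n (gcfg n i f j) i
      = (((Jset n i).erase j).filter (fun l => f j ≤ f l)).card := by
    have he : gcfg n i f j (n + i) = f j := by
      simp [gcfg, Equiv.swap_apply_right]
    have he2 : ∀ l, gcfg n i f j l = f (Equiv.swap j (n + i) l) := fun l => rfl
    unfold cnt
    simp only [he, he2]
    exact card_filter_swap hj (Finset.mem_Icc.mp hi).1 (f j)
  rw [h1, Finset.filter_erase, Finset.card_erase_of_mem]
  · have hpos : 0 < ((Jset n i).filter (fun l => f j ≤ f l)).card :=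
      Finset.card_pos.mpr ⟨j, Finset.mem_filter.mpr ⟨hj, le_refl _⟩⟩
    unfold rj
    omega
  · exact Finset.mem_filter.mpr ⟨hj, le_refl _⟩

lemma gcfg_test_eq (hi : i ∈ Finset.Icc 1 m) {j : ℕ} (hj : j ∈ Jset n i)
    {t : ℕ} (ht : t ∈ Finset.Icc 1 m) (hti : t ≠ i) :
    gcfg n i f j (n + t) = f (n + t) := by
  have h1 := Finset.mem_Icc.mp ht
  have hi' := Finset.mem_Icc.mp hi
  have hj' : j ≤ n ∨ j = n + i := by
    rcases Finset.mem_union.mp hj with h | h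
    · exact Or.inl (Finset.mem_Icc.mp h).2
    · exact Or.inr (Finset.mem_singleton.mp h)
  have hntj : n + t ≠ j := by omega
  have hntni : n + t ≠ n + i := by omega
  simp [gcfg, Equiv.swap_apply_of_ne_of_ne hntj hntni]

lemma cnt_gcfg_test (hi : i ∈ Finset.Icc 1 m) {j : ℕ} (hj : j ∈ Jset n i)
    {t : ℕ} (ht : t ∈ Finset.Icc 1 m) (hti : t ≠ i) :
    cnt n (gcfg n i f j) t
      = (((Jset n i).erase j).filter (fun l => f (n + t) ≤ f l)).card := by
  unfold cnt
  have he2 : ∀ l, gcfg n i f j l = f (Equiv.swap j (n + i) l) := fun l => rfl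
  simp only [gcfg_test_eq hi hj ht hti, he2]
  exact card_filter_swap hj (Finset.mem_Icc.mp hi).1 _

lemma rnk_gcfg (hi : i ∈ Finset.Icc 1 m) {j : ℕ} (hj : j ∈ Jset n i) :
    rnk n m (gcfg n i f j) i = kj n m i f j := by
  have hgi : gcfg n i f j (n + i) = f j := by simp [gcfg, Equiv.swap_apply_right]
  unfold rnk kj
  have hsplit : (Finset.Icc 1 m).filter (fun t => gcfg n i f j (n + i) ≤ gcfg n i f j (n + t))
      = insert i (((Finset.Icc 1 m).erase i).filter (fun t => f j ≤ f (n + t))) := by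
    ext t
    simp only [Finset.mem_filter, Finset.mem_insert, Finset.mem_erase]
    constructor
    · rintro ⟨ht, hle⟩
      rcases eq_or_ne t i with rfl | hti
      · exact Or.inl rfl
      · rw [hgi, gcfg_test_eq hi hj ht hti] at hle
        exact Or.inr ⟨⟨hti, ht⟩, hle⟩
    · rintro (rfl | ⟨⟨hti, ht⟩, hle⟩)
      · exact ⟨hi, le_refl _⟩
      · exact ⟨ht, by rw [hgi, gcfg_test_eq hi hj ht hti]; exact hle⟩
  rw [hsplit, Finset.card_insert_of_notMem]
  · omega
  · intro hmem
    exact absurd (Finset.mem_erase.mp (Finset.mem_filter.mp hmem).1).1 (by simp)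

lemma kj_le_m (hm : 1 ≤ m) (hi : i ∈ Finset.Icc 1 m) {j : ℕ} :
    kj n m i f j ≤ m := by
  have h1 : (((Finset.Icc 1 m).erase i).filter (fun t => f j ≤ f (n + t))).card
      ≤ ((Finset.Icc 1 m).erase i).card :=
    Finset.card_le_card (Finset.filter_subset _ _)
  rw [Finset.card_erase_of_mem hi] at h1
  unfold kj
  have : (Finset.Icc 1 m).card = m := by simp
  omega

lemma kj_one_le {j : ℕ} : 1 ≤ kj n m i f j := Nat.le_add_right 1 _

lemma kj_mono {j j' : ℕ} (h : f j' ≤ f j) : kj n m i f j ≤ kj n m i f j' := by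
  unfold kj
  have : ((Finset.Icc 1 m).erase i).filter (fun t => f j ≤ f (n + t))
      ⊆ ((Finset.Icc 1 m).erase i).filter (fun t => f j' ≤ f (n + t)) := by
    intro t ht
    rw [Finset.mem_filter] at *
    exact ⟨ht.1, le_trans h ht.2⟩
  have := Finset.card_le_card this
  omega

lemma rj_pos {j : ℕ} (hj : j ∈ Jset n i) : 1 ≤ rj n i f j :=
  Finset.card_pos.mpr ⟨j, Finset.mem_filter.mpr ⟨hj, le_refl _⟩⟩

lemma rj_strict_mono (hf : Set.InjOn f (Finset.Icc 1 (n + m))) (hi : i ∈ Finset.Icc 1 m)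
    {j j' : ℕ} (hj : j ∈ Jset n i) (hj' : j' ∈ Jset n i) (h : f j' < f j) :
    rj n i f j < rj n i f j' := by
  apply Finset.card_lt_card
  rw [Finset.ssubset_iff_of_subset]
  · exact ⟨j', Finset.mem_filter.mpr ⟨hj', le_refl _⟩,
      fun hmem => absurd (Finset.mem_filter.mp hmem).2 (not_le.mpr h)⟩
  · intro x hx
    rw [Finset.mem_filter] at *
    exact ⟨hx.1, le_trans h.le hx.2⟩

end Swap

end SLCaux
namespace SLCaux

section Core

variable {n m i : ℕ} {f : ℕ → ℝ}

lemma ne_score_test (hf : Set.InjOn f (Finset.Icc 1 (n + m))) (hi : i ∈ Finset.Icc 1 m)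
    {j t : ℕ} (hj : j ∈ Jset n i) (ht : t ∈ Finset.Icc 1 m) (hti : t ≠ i) :
    f j ≠ f (n + t) := by
  intro h
  have heq := hf (by exact_mod_cast Jset_subset hi hj)
    (by exact_mod_cast test_mem_range ht) h
  have hj' : j ≤ n ∨ j = n + i := by
    rcases Finset.mem_union.mp hj with h' | h'
    · exact Or.inl (Finset.mem_Icc.mp h').2
    · exact Or.inr (Finset.mem_singleton.mp h')
  have ht' := Finset.mem_Icc.mp ht
  omega

lemma subB (hf : Set.InjOn f (Finset.Icc 1 (n + m))) (hi : i ∈ Finset.Icc 1 m)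
    {j j'' t : ℕ} (hj : j ∈ Jset n i) (hj'' : j'' ∈ Jset n i)
    (ht : t ∈ Finset.Icc 1 m) (hti : t ≠ i) (hth : f j ≤ f (n + t)) :
    cnt n (gcfg n i f j'') t + 1 ≤ rj n i f j := by
  rw [cnt_gcfg_test hi hj'' ht hti]
  have hlt : f j < f (n + t) := lt_of_le_of_ne hth (ne_score_test hf hi hj ht hti)
  have hsub : ((Jset n i).erase j'').filter (fun l => f (n + t) ≤ f l)
      ⊆ ((Jset n i).filter (fun l => f j ≤ f l)).erase j := by
    intro l hl
    obtain ⟨hlj'', hlJ⟩ := Finset.mem_erase.mp (Finset.mem_filter.mp hl).1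
    have hle := (Finset.mem_filter.mp hl).2
    refine Finset.mem_erase.mpr ⟨?_, Finset.mem_filter.mpr ⟨hlJ, le_trans hth hle⟩⟩
    rintro rfl
    exact absurd hle (not_le.mpr hlt)
  have hcard := Finset.card_le_card hsub
  rw [Finset.card_erase_of_mem (show j ∈ (Jset n i).filter (fun l => f j ≤ f l) from
    Finset.mem_filter.mpr ⟨hj, le_refl _⟩)] at hcard
  have hpos := rj_pos (f := f) hj
  unfold rj at *
  omega

lemma subA (hf : Set.InjOn f (Finset.Icc 1 (n + m))) (hi : i ∈ Finset.Icc 1 m)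
    {j j' t : ℕ} (hj : j ∈ Jset n i) (hj' : j' ∈ Jset n i) (hjj' : f j' < f j)
    (ht : t ∈ Finset.Icc 1 m) (hti : t ≠ i) (hth : f j' ≤ f (n + t)) :
    cnt n (gcfg n i f j) t + 2 ≤ rj n i f j' := by
  rw [cnt_gcfg_test hi hj ht hti]
  have hlt : f j' < f (n + t) := lt_of_le_of_ne hth (ne_score_test hf hi hj' ht hti)
  have hjne : j ≠ j' := by rintro rfl; exact lt_irrefl _ hjj'
  have hsub : ((Jset n i).erase j).filter (fun l => f (n + t) ≤ f l)
      ⊆ (((Jset n i).filter (fun l => f j' ≤ f l)).erase j).erase j' := by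
    intro l hl
    obtain ⟨hlj, hlJ⟩ := Finset.mem_erase.mp (Finset.mem_filter.mp hl).1
    have hle := (Finset.mem_filter.mp hl).2
    refine Finset.mem_erase.mpr ⟨?_, Finset.mem_erase.mpr
      ⟨hlj, Finset.mem_filter.mpr ⟨hlJ, le_trans hlt.le hle⟩⟩⟩
    rintro rfl
    exact absurd hle (not_le.mpr hlt)
  have hcard := Finset.card_le_card hsub
  have hjmem : j ∈ (Jset n i).filter (fun l => f j' ≤ f l) :=
    Finset.mem_filter.mpr ⟨hj, hjj'.le⟩
  have hj'mem : j' ∈ ((Jset n i).filter (fun l => f j' ≤ f l)).erase j :=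
    Finset.mem_erase.mpr ⟨fun e => hjne e.symm, Finset.mem_filter.mpr ⟨hj', le_refl _⟩⟩
  rw [Finset.card_erase_of_mem hj'mem, Finset.card_erase_of_mem hjmem] at hcard
  have hpos : 0 < ((Jset n i).filter (fun l => f j' ≤ f l)).card :=
    Finset.card_pos.mpr ⟨j', Finset.mem_filter.mpr ⟨hj', le_refl _⟩⟩
  have h2 : 2 ≤ ((Jset n i).filter (fun l => f j' ≤ f l)).card := by
    have : {j, j'} ⊆ (Jset n i).filter (fun l => f j' ≤ f l) := by
      intro x hx
      rcases Finset.mem_insert.mp hx with rfl | hx'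
      · exact hjmem
      · rw [Finset.mem_singleton.mp hx']
        exact Finset.mem_filter.mpr ⟨hj', le_refl _⟩
    have := Finset.card_le_card this
    rwa [Finset.card_insert_of_notMem (by simp [hjne]), Finset.card_singleton] at this
  unfold rj at *
  omega

lemma qkN_A (hf : Set.InjOn f (Finset.Icc 1 (n + m))) (hi : i ∈ Finset.Icc 1 m)
    {j j' : ℕ} (hj : j ∈ Jset n i) (hj' : j' ∈ Jset n i) (hjj' : f j' < f j) :
    qkN n m (gcfg n i f j) (kj n m i f j') + 2 ≤ rj n i f j' := by
  have hrr := rj_strict_mono hf hi hj hj' hjj'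
  have hr1 := rj_pos (f := f) hj
  have hle : qkN n m (gcfg n i f j) (kj n m i f j') ≤ rj n i f j' - 2 := by
    apply qkN_le
    have hsub : insert i (((Finset.Icc 1 m).erase i).filter (fun t => f j' ≤ f (n + t)))
        ⊆ (Finset.Icc 1 m).filter (fun t => cnt n (gcfg n i f j) t ≤ rj n i f j' - 2) := by
      intro t ht
      rcases Finset.mem_insert.mp ht with rfl | ht'
      · refine Finset.mem_filter.mpr ⟨hi, ?_⟩
        have := cnt_gcfg_self (f := f) hi hj
        omega
      · obtain ⟨hti, htm⟩ := Finset.mem_erase.mp (Finset.mem_filter.mp ht').1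
        have := subA hf hi hj hj' hjj' htm hti (Finset.mem_filter.mp ht').2
        refine Finset.mem_filter.mpr ⟨htm, by omega⟩
    have hcard := Finset.card_le_card hsub
    rw [Finset.card_insert_of_notMem (by simp)] at hcard
    unfold Scnt kj
    omega
  omega

lemma qkN_B (hf : Set.InjOn f (Finset.Icc 1 (n + m))) (hi : i ∈ Finset.Icc 1 m)
    {j j' : ℕ} (hj : j ∈ Jset n i) (hj' : j' ∈ Jset n i) :
    qkN n m (gcfg n i f j') (kj n m i f j - 1) + 1 ≤ rj n i f j := by
  have hr1 := rj_pos (f := f) hj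
  have hle : qkN n m (gcfg n i f j') (kj n m i f j - 1) ≤ rj n i f j - 1 := by
    apply qkN_le
    have hsub : ((Finset.Icc 1 m).erase i).filter (fun t => f j ≤ f (n + t))
        ⊆ (Finset.Icc 1 m).filter (fun t => cnt n (gcfg n i f j') t ≤ rj n i f j - 1) := by
      intro t ht
      obtain ⟨hti, htm⟩ := Finset.mem_erase.mp (Finset.mem_filter.mp ht).1
      have := subB hf hi hj hj' htm hti (Finset.mem_filter.mp ht).2
      exact Finset.mem_filter.mpr ⟨htm, by omega⟩
    have hcard := Finset.card_le_card hsub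
    unfold Scnt kj
    omega
  omega

end Core

end SLCaux
namespace SLCaux

section CoreIneq

variable {n m i : ℕ} {f : ℕ → ℝ} {α : ℝ}

lemma objC_at_kj (hf : Set.InjOn f (Finset.Icc 1 (n + m))) (hi : i ∈ Finset.Icc 1 m)
    {j : ℕ} (hj : j ∈ Jset n i) :
    objC n m α (gcfg n i f j) (kj n m i f j)
      = (rj n i f j : ℝ) / ((n : ℝ) + 1)
        - (kj n m i f j) * max (α / m - 1 / ((n : ℝ) + 1)) 0 := by
  have hq1 : qkN n m (gcfg n i f j) (kj n m i f j) = cnt n (gcfg n i f j) i := by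
    have := qkN_rnk (gcfg_injOn hf hi hj) hi
    rwa [rnk_gcfg hi hj] at this
  have hcnt1 := cnt_gcfg_self (f := f) hi hj
  have hk1 : kj n m i f j ≠ 0 := by have := kj_one_le (n := n) (m := m) (i := i) (f := f) (j := j); omega
  unfold objC
  rw [if_neg hk1, hq1]
  have hc : (1 : ℝ) + (cnt n (gcfg n i f j) i : ℝ) = (rj n i f j : ℝ) := by
    rw [← hcnt1]; push_cast; ring
  rw [hc]

lemma core_a (hf : Set.InjOn f (Finset.Icc 1 (n + m))) (hi : i ∈ Finset.Icc 1 m)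
    (hm : 1 ≤ m) {j j' : ℕ} (hj : j ∈ Jset n i) (hj' : j' ∈ Jset n i) (hjj' : f j' < f j)
    (hDj : gcfg n i f j ∈ Dset n m α i) :
    (rj n i f j : ℝ) - (kj n m i f j) * (((n : ℝ) + 1) * max (α / m - 1 / ((n : ℝ) + 1)) 0) + 1
      ≤ (rj n i f j' : ℝ)
        - (kj n m i f j') * (((n : ℝ) + 1) * max (α / m - 1 / ((n : ℝ) + 1)) 0) := by
  have hN : (0 : ℝ) < (n : ℝ) + 1 := by positivity
  obtain ⟨h1, h2⟩ := hDj
  have hkhat : khatC n m α (gcfg n i f j) = kj n m i f j := by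
    rw [← h2, rnk_gcfg hi hj]
  have hkk : kj n m i f j ≤ kj n m i f j' := kj_mono hjj'.le
  have hrr : rj n i f j < rj n i f j' := rj_strict_mono hf hi hj hj' hjj'
  rcases eq_or_lt_of_le hkk with heq | hltk
  · rw [← heq]
    have : (rj n i f j : ℝ) + 1 ≤ (rj n i f j' : ℝ) := by exact_mod_cast hrr
    linarith
  · have hobj : objC n m α (gcfg n i f j) (kj n m i f j)
        < objC n m α (gcfg n i f j) (kj n m i f j') := by
      have := maxArgmin_lt m (objC n m α (gcfg n i f j)) (kj_le_m hm hi) (by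
        rw [show maxArgmin m (objC n m α (gcfg n i f j)) = khatC n m α (gcfg n i f j) from rfl,
          hkhat]
        exact hltk)
      rwa [show maxArgmin m (objC n m α (gcfg n i f j)) = khatC n m α (gcfg n i f j) from rfl,
        hkhat] at this
    rw [objC_at_kj hf hi hj] at hobj
    have hqA := qkN_A hf hi hj hj' hjj'
    have hk'0 : kj n m i f j' ≠ 0 := by
      have := kj_one_le (n := n) (m := m) (i := i) (f := f) (j := j'); omega
    have hobj2 : objC n m α (gcfg n i f j) (kj n m i f j')
        ≤ ((rj n i f j' : ℝ) - 1) / ((n : ℝ) + 1)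
          - (kj n m i f j') * max (α / m - 1 / ((n : ℝ) + 1)) 0 := by
      unfold objC
      rw [if_neg hk'0]
      have hcast : (1 : ℝ) + (qkN n m (gcfg n i f j) (kj n m i f j') : ℝ)
          ≤ (rj n i f j' : ℝ) - 1 := by
        have : (qkN n m (gcfg n i f j) (kj n m i f j') : ℝ) + 2 ≤ (rj n i f j' : ℝ) := by
          exact_mod_cast hqA
        linarith
      have hdiv : ((1 : ℝ) + (qkN n m (gcfg n i f j) (kj n m i f j') : ℝ)) / ((n : ℝ) + 1)
          ≤ ((rj n i f j' : ℝ) - 1) / ((n : ℝ) + 1) := by gcongr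
      linarith
    have hlt2 := lt_of_lt_of_le hobj hobj2
    have hmul := mul_lt_mul_of_pos_right hlt2 hN
    rw [sub_mul, sub_mul, div_mul_cancel₀ _ hN.ne', div_mul_cancel₀ _ hN.ne'] at hmul
    nlinarith [hmul]

end CoreIneq

end SLCaux
namespace SLCaux

section CoreIneqB

variable {n m i : ℕ} {f : ℕ → ℝ} {α : ℝ}

lemma core_b (hf : Set.InjOn f (Finset.Icc 1 (n + m))) (hi : i ∈ Finset.Icc 1 m)
    (hm : 1 ≤ m) {j j' : ℕ} (hj : j ∈ Jset n i) (hj' : j' ∈ Jset n i) (hjj' : f j' < f j)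
    (hDj' : gcfg n i f j' ∈ Dset n m α i) :
    (rj n i f j' : ℝ)
        - (kj n m i f j') * (((n : ℝ) + 1) * max (α / m - 1 / ((n : ℝ) + 1)) 0)
      ≤ (rj n i f j : ℝ)
        - ((kj n m i f j : ℝ) - 1) * (((n : ℝ) + 1) * max (α / m - 1 / ((n : ℝ) + 1)) 0) := by
  have hN : (0 : ℝ) < (n : ℝ) + 1 := by positivity
  obtain ⟨h1, h2⟩ := hDj'
  have hkhat : khatC n m α (gcfg n i f j') = kj n m i f j' := by
    rw [← h2, rnk_gcfg hi hj']
  have hrpos : 1 ≤ rj n i f j := rj_pos hj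
  have hrpos' : (1 : ℝ) ≤ (rj n i f j : ℝ) := by exact_mod_cast hrpos
  have hcnonneg : (0 : ℝ) ≤ max (α / m - 1 / ((n : ℝ) + 1)) 0 := le_max_right _ _
  have hkj1 : 1 ≤ kj n m i f j := kj_one_le
  by_cases hk1 : kj n m i f j = 1
  · -- compare with index 0
    have hmin := maxArgmin_isMin m (objC n m α (gcfg n i f j')) 0 (Nat.zero_le m)
    rw [show maxArgmin m (objC n m α (gcfg n i f j')) = khatC n m α (gcfg n i f j') from rfl,
      hkhat, objC_at_kj hf hi hj'] at hmin
    have hobj0 : objC n m α (gcfg n i f j') 0 = 0 := by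
      unfold objC
      simp
    rw [hobj0] at hmin
    have hmul := mul_le_mul_of_nonneg_right hmin hN.le
    rw [sub_mul, div_mul_cancel₀ _ hN.ne', zero_mul] at hmul
    rw [hk1]
    push_cast
    nlinarith [hmul]
  · have hk2 : 2 ≤ kj n m i f j := by omega
    have hmin := maxArgmin_isMin m (objC n m α (gcfg n i f j')) (kj n m i f j - 1)
      (by have := kj_le_m (n := n) (m := m) (i := i) (f := f) (j := j) hm hi; omega)
    rw [show maxArgmin m (objC n m α (gcfg n i f j')) = khatC n m α (gcfg n i f j') from rfl,
      hkhat, objC_at_kj hf hi hj'] at hmin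
    have hqB := qkN_B hf hi hj hj'
    have hobj2 : objC n m α (gcfg n i f j') (kj n m i f j - 1)
        ≤ (rj n i f j : ℝ) / ((n : ℝ) + 1)
          - ((kj n m i f j : ℝ) - 1) * max (α / m - 1 / ((n : ℝ) + 1)) 0 := by
      unfold objC
      rw [if_neg (by omega : ¬ kj n m i f j - 1 = 0)]
      have hcast : (1 : ℝ) + (qkN n m (gcfg n i f j') (kj n m i f j - 1) : ℝ)
          ≤ (rj n i f j : ℝ) := by
        have : (qkN n m (gcfg n i f j') (kj n m i f j - 1) : ℝ) + 1 ≤ (rj n i f j : ℝ) := by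
          exact_mod_cast hqB
        linarith
      have hdiv : ((1 : ℝ) + (qkN n m (gcfg n i f j') (kj n m i f j - 1) : ℝ)) / ((n : ℝ) + 1)
          ≤ (rj n i f j : ℝ) / ((n : ℝ) + 1) := by gcongr
      have hcastk : ((kj n m i f j - 1 : ℕ) : ℝ) = (kj n m i f j : ℝ) - 1 := by
        push_cast [Nat.cast_sub hkj1]
        ring
      rw [hcastk]
      linarith
    have hle2 := le_trans hmin hobj2
    have hmul := mul_le_mul_of_nonneg_right hle2 hN.le
    rw [sub_mul, sub_mul, div_mul_cancel₀ _ hN.ne', div_mul_cancel₀ _ hN.ne'] at hmul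
    nlinarith [hmul]

end CoreIneqB

end SLCaux
namespace SLCaux

section Count

variable {n m i : ℕ} {f : ℕ → ℝ} {α : ℝ}

lemma khatC_eq_zero {g : ℕ → ℝ} (hc : max (α / (m : ℝ) - 1 / ((n : ℝ) + 1)) 0 = 0) :
    khatC n m α g = 0 := by
  unfold khatC
  rw [maxArgmin_eq_iff m _ (Nat.zero_le m)]
  have h0 : objC n m α g 0 = 0 := by unfold objC; simp
  have hpos : ∀ l ≤ m, l ≠ 0 → 0 < objC n m α g l := by
    intro l hl hl0
    unfold objC
    rw [if_neg hl0, hc, mul_zero, sub_zero]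
    positivity
  refine ⟨fun l hl => ?_, fun l hl hl0 => ?_⟩
  · rcases eq_or_ne l 0 with rfl | hl0
    · exact le_refl _
    · rw [h0]; exact (hpos l hl hl0).le
  · rw [h0]; exact hpos l hl (by omega)

lemma card_bound (hf : Set.InjOn f (Finset.Icc 1 (n + m))) (hi : i ∈ Finset.Icc 1 m)
    (hm : 1 ≤ m) (hα : 0 < α) :
    (((Jset n i).filter (fun j => gcfg n i f j ∈ Dset n m α i)).card : ℝ)
      ≤ ((n : ℝ) + 1) * α / m := by
  have hN : (0 : ℝ) < (n : ℝ) + 1 := by positivity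
  have hm0 : (0 : ℝ) < (m : ℝ) := by exact_mod_cast hm
  have hRHS : (0 : ℝ) ≤ ((n : ℝ) + 1) * α / m := by positivity
  by_cases hc0 : max (α / (m : ℝ) - 1 / ((n : ℝ) + 1)) 0 = 0
  · rw [Finset.filter_false_of_mem, Finset.card_empty]
    · simpa using hRHS
    · intro j hj hD
      have := hD.1
      rw [khatC_eq_zero hc0] at this
      omega
  · have hapos : 0 < α / (m : ℝ) - 1 / ((n : ℝ) + 1) := by
      by_contra h
      push_neg at h
      exact hc0 (max_eq_right h)
    have hceq : max (α / (m : ℝ) - 1 / ((n : ℝ) + 1)) 0 = α / (m : ℝ) - 1 / ((n : ℝ) + 1) :=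
      max_eq_left hapos.le
    set R := (Jset n i).filter (fun j => gcfg n i f j ∈ Dset n m α i) with hRdef
    rcases R.eq_empty_or_nonempty with hRe | hRne
    · rw [hRe]; simpa using hRHS
    · obtain ⟨j₀, hj₀R, hj₀max⟩ := Finset.exists_max_image R f hRne
      have hRJ : R ⊆ Jset n i := Finset.filter_subset _ _
      have hRD : ∀ j ∈ R, gcfg n i f j ∈ Dset n m α i := fun j hj =>
        (Finset.mem_filter.mp hj).2
      set Nc := ((n : ℝ) + 1) * max (α / (m : ℝ) - 1 / ((n : ℝ) + 1)) 0 with hNcdef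
      have hNcpos : 0 < Nc := by
        rw [hNcdef, hceq]
        exact mul_pos hN hapos
      set G : ℕ → ℝ := fun j => (rj n i f j : ℝ) - (kj n m i f j) * Nc with hG
      have hfne : ∀ j ∈ R, ∀ j' ∈ R, j ≠ j' → f j ≠ f j' := by
        intro j hj j' hj' hne he
        exact hne (hf (by exact_mod_cast Jset_subset hi (hRJ hj))
          (by exact_mod_cast Jset_subset hi (hRJ hj')) he)
      have key1 : ∀ j ∈ R, ∀ j' ∈ R, f j' < f j → G j + 1 ≤ G j' := fun j hj j' hj' hlt =>
        core_a hf hi hm (hRJ hj) (hRJ hj') hlt (hRD j hj)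
      have key2 : ∀ j ∈ R, ∀ j' ∈ R, f j' < f j → G j' ≤ G j + Nc := by
        intro j hj j' hj' hlt
        have h := core_b hf hi hm (hRJ hj) (hRJ hj') hlt (hRD j' hj')
        simp only [hG]
        nlinarith [h]
      have hbound : ∀ j ∈ R, 0 ≤ G j - G j₀ ∧ G j - G j₀ ≤ Nc := by
        intro j hj
        rcases eq_or_ne j j₀ with rfl | hne
        · exact ⟨by linarith, by linarith [hNcpos.le]⟩
        · have hlt : f j < f j₀ := lt_of_le_of_ne (hj₀max j hj) (hfne j hj j₀ hj₀R hne)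
          have h1 := key1 j₀ hj₀R j hj hlt
          have h2 := key2 j₀ hj₀R j hj hlt
          exact ⟨by linarith, by linarith⟩
      have hmaps : ∀ j ∈ R, (⌊G j - G j₀⌋).toNat ∈ Finset.range (⌊Nc⌋.toNat + 1) := by
        intro j hj
        rw [Finset.mem_range, Nat.lt_succ_iff]
        exact Int.toNat_le_toNat (Int.floor_le_floor (hbound j hj).2)
      have hinj : Set.InjOn (fun j => (⌊G j - G j₀⌋).toNat) ↑R := by
        intro j hj j' hj' heq
        have hjR : j ∈ R := by exact_mod_cast hj
        have hj'R : j' ∈ R := by exact_mod_cast hj'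
        by_contra hne
        have hfl : ∀ x (hx : x ∈ R), ((⌊G x - G j₀⌋).toNat : ℤ) = ⌊G x - G j₀⌋ := fun x hx =>
          Int.toNat_of_nonneg (Int.floor_nonneg.mpr (hbound x hx).1)
        have heqZ : ⌊G j - G j₀⌋ = ⌊G j' - G j₀⌋ := by
          rw [← hfl j hjR, ← hfl j' hj'R]
          exact_mod_cast heq
        rcases lt_trichotomy (f j) (f j') with hlt | he | hlt
        · have hk := key1 j' hj'R j hjR hlt
          have hfloor2 : ⌊G j' - G j₀ + 1⌋ ≤ ⌊G j - G j₀⌋ := Int.floor_le_floor (by linarith)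
          rw [Int.floor_add_one] at hfloor2
          omega
        · exact hfne j hjR j' hj'R hne he
        · have hk := key1 j hjR j' hj'R hlt
          have hfloor2 : ⌊G j - G j₀ + 1⌋ ≤ ⌊G j' - G j₀⌋ := Int.floor_le_floor (by linarith)
          rw [Int.floor_add_one] at hfloor2
          omega
      have hcard := Finset.card_le_card_of_injOn _ hmaps hinj
      rw [Finset.card_range] at hcard
      have h2 : ((⌊Nc⌋.toNat : ℕ) : ℝ) ≤ Nc := by
        rw [← Int.cast_natCast, Int.toNat_of_nonneg (Int.floor_nonneg.mpr hNcpos.le)]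
        exact Int.floor_le Nc
      have h3 : (R.card : ℝ) ≤ Nc + 1 := by
        have : (R.card : ℝ) ≤ ((⌊Nc⌋.toNat : ℕ) : ℝ) + 1 := by exact_mod_cast hcard
        linarith
      have h4 : Nc + 1 = ((n : ℝ) + 1) * α / m := by
        rw [hNcdef, hceq]
        field_simp
        ring
      linarith
end Count

end SLCaux
namespace SLCaux

section Meas

variable {n m : ℕ} {α : ℝ}

lemma measurableSet_card_filter_eq {X : Type*} [MeasurableSpace X] (base : Finset ℕ)
    (p : X → ℕ → Prop) [inst : ∀ x l, Decidable (p x l)]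
    (hp : ∀ l ∈ base, MeasurableSet {x | p x l}) (v : ℕ) :
    MeasurableSet {x | (base.filter (fun l => p x l)).card = v} := by
  have hset : {x | (base.filter (fun l => p x l)).card = v}
      = ⋃ T ∈ base.powersetCard v, ⋂ l ∈ base, {x | p x l ↔ l ∈ T} := by
    ext x
    simp only [Set.mem_setOf_eq, Set.mem_iUnion, Set.mem_iInter, Set.mem_setOf_eq]
    constructor
    · intro hcard
      refine ⟨base.filter (fun l => p x l), ?_, ?_⟩
      · exact Finset.mem_powersetCard.mpr ⟨Finset.filter_subset _ _, hcard⟩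
      · intro l hl
        simp [Finset.mem_filter, hl]
    · rintro ⟨T, hT, hiff⟩
      obtain ⟨hTsub, hTcard⟩ := Finset.mem_powersetCard.mp hT
      have : base.filter (fun l => p x l) = T := by
        ext l
        rw [Finset.mem_filter]
        constructor
        · rintro ⟨hl, hpl⟩
          exact (hiff l hl).mp hpl
        · intro hlT
          have hl := hTsub hlT
          exact ⟨hl, (hiff l hl).mpr hlT⟩
      rw [this, hTcard]
  rw [hset]
  refine MeasurableSet.biUnion (base.powersetCard v).countable_toSet (fun T _ => ?_)
  refine MeasurableSet.biInter base.countable_toSet (fun l hl => ?_)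
  by_cases hlT : l ∈ T
  · simp only [hlT, iff_true]
    exact hp l hl
  · simp only [hlT, iff_false]
    exact (hp l hl).compl

lemma meas_cnt_eq (t v : ℕ) : MeasurableSet {f : ℕ → ℝ | cnt n f t = v} := by
  have h := measurableSet_card_filter_eq (X := ℕ → ℝ) (Finset.Icc 1 n)
    (fun f l => f (n + t) ≤ f l)
    (fun l _ => measurableSet_le (measurable_pi_apply (n + t)) (measurable_pi_apply l)) v
  exact h

lemma meas_rnk_eq (i v : ℕ) : MeasurableSet {f : ℕ → ℝ | rnk n m f i = v} := by
  have h := measurableSet_card_filter_eq (X := ℕ → ℝ) (Finset.Icc 1 m)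
    (fun f t => f (n + i) ≤ f (n + t))
    (fun t _ => measurableSet_le (measurable_pi_apply (n + i)) (measurable_pi_apply (n + t))) v
  exact h

lemma meas_cnt_le (t x : ℕ) : MeasurableSet {f : ℕ → ℝ | cnt n f t ≤ x} := by
  have : {f : ℕ → ℝ | cnt n f t ≤ x} = ⋃ v ∈ Finset.range (x + 1), {f | cnt n f t = v} := by
    ext f
    simp only [Set.mem_setOf_eq, Set.mem_iUnion, Finset.mem_range, Nat.lt_succ_iff]
    exact ⟨fun h => ⟨cnt n f t, h, rfl⟩, by rintro ⟨v, hv, rfl⟩; exact hv⟩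
  rw [this]
  exact MeasurableSet.biUnion (Finset.range (x + 1)).countable_toSet
    (fun v _ => meas_cnt_eq t v)

lemma meas_Scnt_eq (x v : ℕ) : MeasurableSet {f : ℕ → ℝ | Scnt n m f x = v} := by
  have h := measurableSet_card_filter_eq (X := ℕ → ℝ) (Finset.Icc 1 m)
    (fun f t => cnt n f t ≤ x) (fun t _ => meas_cnt_le t x) v
  exact h

lemma meas_Scnt_le (x k : ℕ) : MeasurableSet {f : ℕ → ℝ | k ≤ Scnt n m f x} := by
  have hb : ∀ f : ℕ → ℝ, Scnt n m f x ≤ m := fun f => by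
    calc Scnt n m f x ≤ (Finset.Icc 1 m).card := Finset.card_le_card (Finset.filter_subset _ _)
    _ = m := by simp
  have : {f : ℕ → ℝ | k ≤ Scnt n m f x} = ⋃ v ∈ Finset.Icc k m, {f | Scnt n m f x = v} := by
    ext f
    simp only [Set.mem_setOf_eq, Set.mem_iUnion, Finset.mem_Icc]
    exact ⟨fun h => ⟨Scnt n m f x, ⟨h, hb f⟩, rfl⟩, by rintro ⟨v, hv, rfl⟩; exact hv.1⟩
  rw [this]
  exact MeasurableSet.biUnion (Finset.Icc k m).countable_toSet (fun v _ => meas_Scnt_eq x v)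

lemma qkN_eq_iff {f : ℕ → ℝ} {k v : ℕ} (hk : k ≤ m) :
    qkN n m f k = v ↔ (k ≤ Scnt n m f v ∧ ∀ w < v, ¬ k ≤ Scnt n m f w) := by
  have hne : {x | k ≤ Scnt n m f x}.Nonempty := ⟨n, by
    simp only [Set.mem_setOf_eq, Scnt_n]; exact hk⟩
  constructor
  · rintro rfl
    refine ⟨Nat.sInf_mem hne, fun w hw =>
      Nat.notMem_of_lt_sInf (s := {x | k ≤ Scnt n m f x}) hw⟩
  · rintro ⟨h1, h2⟩
    apply le_antisymm (Nat.sInf_le (show v ∈ {x | k ≤ Scnt n m f x} from h1))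
    by_contra hlt
    push_neg at hlt
    exact h2 _ hlt (Nat.sInf_mem hne)

lemma meas_qkN_eq (k v : ℕ) (hk : k ≤ m) : MeasurableSet {f : ℕ → ℝ | qkN n m f k = v} := by
  have : {f : ℕ → ℝ | qkN n m f k = v}
      = {f | k ≤ Scnt n m f v} ∩ ⋂ w ∈ Finset.range v, {f | ¬ k ≤ Scnt n m f w} := by
    ext f
    simp only [Set.mem_setOf_eq, Set.mem_inter_iff, Set.mem_iInter, Finset.mem_range,
      qkN_eq_iff hk]
  rw [this]
  exact (meas_Scnt_le v k).inter (MeasurableSet.biInter (Finset.range v).countable_toSet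
    (fun w _ => (meas_Scnt_le w k).compl))

/-- `objC` as a function of the value of `qkN`. -/
def objV (n : ℕ) (m : ℕ) (α : ℝ) (k v : ℕ) : ℝ :=
  (if k = 0 then 0 else (1 + (v : ℝ)) / ((n : ℝ) + 1)) - k * max (α / m - 1 / ((n : ℝ) + 1)) 0

lemma objC_eq_objV (f : ℕ → ℝ) (k : ℕ) : objC n m α f k = objV n m α k (qkN n m f k) := rfl

lemma meas_objC_rel (r : ℝ → ℝ → Prop) {k l : ℕ} (hk : k ≤ m) (hl : l ≤ m) :
    MeasurableSet {f : ℕ → ℝ | r (objC n m α f k) (objC n m α f l)} := by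
  have hset : {f : ℕ → ℝ | r (objC n m α f k) (objC n m α f l)}
      = ⋃ v ∈ Finset.range (n + 1), ⋃ w ∈ Finset.range (n + 1),
          ({f : ℕ → ℝ | qkN n m f k = v} ∩ {f | qkN n m f l = w}
            ∩ {f | r (objV n m α k v) (objV n m α l w)}) := by
    ext f
    simp only [Set.mem_setOf_eq, Set.mem_iUnion, Set.mem_inter_iff, Set.mem_setOf_eq,
      Finset.mem_range, Nat.lt_succ_iff]
    constructor
    · intro hr
      exact ⟨qkN n m f k, qkN_le_n hk, qkN n m f l, qkN_le_n hl, ⟨rfl, rfl⟩,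
        by rwa [← objC_eq_objV, ← objC_eq_objV]⟩
    · rintro ⟨v, hv, w, hw, ⟨hv2, hw2⟩, hr⟩
      rw [objC_eq_objV, objC_eq_objV, hv2, hw2]
      exact hr
  rw [hset]
  refine MeasurableSet.biUnion (Finset.range (n + 1)).countable_toSet (fun v _ => ?_)
  refine MeasurableSet.biUnion (Finset.range (n + 1)).countable_toSet (fun w _ => ?_)
  exact ((meas_qkN_eq k v hk).inter (meas_qkN_eq l w hl)).inter (MeasurableSet.const _)

lemma meas_khatC_eq {k : ℕ} (hk : k ≤ m) :
    MeasurableSet {f : ℕ → ℝ | khatC n m α f = k} := by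
  have hset : {f : ℕ → ℝ | khatC n m α f = k}
      = (⋂ l ∈ Finset.range (m + 1), {f : ℕ → ℝ | objC n m α f k ≤ objC n m α f l})
        ∩ ⋂ l ∈ (Finset.range (m + 1)).filter (fun l => k < l),
            {f : ℕ → ℝ | objC n m α f k < objC n m α f l} := by
    ext f
    simp only [Set.mem_setOf_eq, Set.mem_inter_iff, Set.mem_iInter, Finset.mem_filter,
      Finset.mem_range, Nat.lt_succ_iff]
    rw [show (khatC n m α f = k) ↔ (maxArgmin m (objC n m α f) = k) from Iff.rfl,
      maxArgmin_eq_iff m _ hk]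
    constructor
    · rintro ⟨h1, h2⟩
      exact ⟨fun l hl => h1 l hl, fun l hl => h2 l hl.1 hl.2⟩
    · rintro ⟨h1, h2⟩
      exact ⟨fun l hl => h1 l hl, fun l hl hkl => h2 l ⟨hl, hkl⟩⟩
  rw [hset]
  refine MeasurableSet.inter ?_ ?_
  · refine MeasurableSet.biInter (Finset.range (m + 1)).countable_toSet (fun l hl => ?_)
    have hl' : l ∈ Finset.range (m + 1) := by exact_mod_cast hl
    exact meas_objC_rel (· ≤ ·) hk (Nat.lt_succ_iff.mp (Finset.mem_range.mp hl'))
  · refine MeasurableSet.biInter ((Finset.range (m + 1)).filter _).countable_toSet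
      (fun l hl => ?_)
    have hl' : l ∈ Finset.range (m + 1) := (Finset.mem_filter.mp (by exact_mod_cast hl)).1
    exact meas_objC_rel (· < ·) hk (Nat.lt_succ_iff.mp (Finset.mem_range.mp hl'))

lemma meas_Dset (i : ℕ) : MeasurableSet (Dset n m α i) := by
  have hset : Dset n m α i
      = ⋃ k ∈ Finset.Icc 1 m, ({f : ℕ → ℝ | rnk n m f i = k} ∩ {f | khatC n m α f = k}) := by
    ext f
    simp only [Dset, Set.mem_setOf_eq, Set.mem_iUnion, Set.mem_inter_iff, Finset.mem_Icc]
    constructor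
    · rintro ⟨h1, h2⟩
      exact ⟨khatC n m α f, ⟨h1, maxArgmin_le m _⟩, h2, rfl⟩
    · rintro ⟨k, hk, h1, h2⟩
      constructor
      · rw [h2]; exact hk.1
      · exact h1.trans h2.symm
  rw [hset]
  refine MeasurableSet.biUnion (Finset.Icc 1 m).countable_toSet (fun k hk => ?_)
  have hk' : k ∈ Finset.Icc 1 m := by exact_mod_cast hk
  exact (meas_rnk_eq i k).inter (meas_khatC_eq (Finset.mem_Icc.mp hk').2)

end Meas

end SLCaux
/-- Corollary 2.5 of the paper: under Assumption (A1), the SLC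
procedure at level `α ∈ (0,1)` satisfies `bFDR(SLC) ≤ α·m₀/m`. -/
theorem SLC_bFDR_control
    {Ω : Type*} [MeasurableSpace Ω] (μ : Measure Ω) [IsProbabilityMeasure μ]
    (n m : ℕ) (hn : 1 ≤ n) (hm : 1 ≤ m)
    (α : ℝ) (hα : α ∈ Set.Ioo (0 : ℝ) 1)
    (S : Ω → ℕ → ℝ) (hS : Measurable S)
    (H0 : Finset ℕ) (hH0 : H0 ⊆ Finset.Icc 1 m)
    (hexch : ExchangeableNulls μ n H0 S)
    (hdist : ∀ᵐ ω ∂μ, Set.InjOn (S ω) (Finset.Icc 1 (n + m)))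
    (σ : Ω → ℕ → ℕ) (hσ : ∀ᵐ ω ∂μ, SortsTest n m (S ω) (σ ω)) :
    μ {ω | 1 ≤ khatSLC n m α (S ω) (σ ω) ∧ σ ω (khatSLC n m α (S ω) (σ ω)) ∈ H0}
      ≤ ENNReal.ofReal (α * H0.card / m) := by
  have hα0 : (0 : ℝ) < α := hα.1
  have hm0 : (0 : ℝ) < (m : ℝ) := by exact_mod_cast hm
  have hDmeas : ∀ i : ℕ, MeasurableSet (SLCaux.Dset n m α i) := fun i => SLCaux.meas_Dset i
  -- per-null bound
  have hkey : ∀ i ∈ H0, μ (S ⁻¹' SLCaux.Dset n m α i) ≤ ENNReal.ofReal (α / m) := by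
    intro i hiH
    have hi : i ∈ Finset.Icc 1 m := hH0 hiH
    have hi1 : 1 ≤ i := (Finset.mem_Icc.mp hi).1
    set J := SLCaux.Jset n i with hJ
    set pre : ℕ → Set Ω :=
      fun j => (fun ω => fun l => S ω ((Equiv.swap j (n + i)) l)) ⁻¹' (SLCaux.Dset n m α i)
      with hpre
    have hFmeas : ∀ j, Measurable (fun ω => fun l => S ω ((Equiv.swap j (n + i)) l)) :=
      fun j => measurable_pi_lambda _ (fun l => (measurable_pi_apply _).comp hS)
    have hpremeas : ∀ j, MeasurableSet (pre j) := fun j => hFmeas j (hDmeas i)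
    have hswap : ∀ j ∈ J, μ (pre j) = μ (S ⁻¹' SLCaux.Dset n m α i) := by
      intro j hj
      have hiN : n + i ∈ NullIdx n H0 :=
        Finset.mem_union_right _ (Finset.mem_image.mpr ⟨i, hiH, rfl⟩)
      have hjN : j ∈ NullIdx n H0 := by
        rcases Finset.mem_union.mp hj with h | h
        · exact Finset.mem_union_left _ h
        · rw [Finset.mem_singleton.mp h]
          exact hiN
      have hfix : ∀ l ∉ NullIdx n H0, Equiv.swap j (n + i) l = l := by
        intro l hl
        exact Equiv.swap_apply_of_ne_of_ne (by rintro rfl; exact hl hjN)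
          (by rintro rfl; exact hl hiN)
      have hmap := hexch (Equiv.swap j (n + i)) hfix
      rw [hpre]
      rw [← Measure.map_apply (hFmeas j) (hDmeas i), hmap,
        Measure.map_apply hS (hDmeas i)]
    have hcardJ : J.card = n + 1 := SLCaux.Jset_card hi1
    have hsum1 : ∑ j ∈ J, μ (pre j) = ((n + 1 : ℕ) : ENNReal) * μ (S ⁻¹' SLCaux.Dset n m α i) := by
      rw [Finset.sum_congr rfl hswap, Finset.sum_const, hcardJ, nsmul_eq_mul]
    have hcount : ∀ ω, Set.InjOn (S ω) (Finset.Icc 1 (n + m)) →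
        (∑ j ∈ J, (pre j).indicator (fun _ => (1 : ENNReal)) ω)
          ≤ ENNReal.ofReal (((n : ℝ) + 1) * α / m) := by
      intro ω hinj
      have h1 : (∑ j ∈ J, (pre j).indicator (fun _ => (1 : ENNReal)) ω)
          = ((J.filter (fun j => ω ∈ pre j)).card : ENNReal) := by
        simp only [Set.indicator_apply]
        rw [Finset.sum_boole]
      have hb := SLCaux.card_bound hinj hi hm hα0
      have h2 : ((J.filter (fun j => ω ∈ pre j)).card : ℝ) ≤ ((n : ℝ) + 1) * α / m := hb
      rw [h1, ← ENNReal.ofReal_natCast]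
      exact ENNReal.ofReal_le_ofReal h2
    have hsum2 : ∑ j ∈ J, μ (pre j) ≤ ENNReal.ofReal (((n : ℝ) + 1) * α / m) := by
      have heq : ∑ j ∈ J, μ (pre j)
          = ∫⁻ ω, ∑ j ∈ J, (pre j).indicator (fun _ => (1 : ENNReal)) ω ∂μ := by
        rw [MeasureTheory.lintegral_finset_sum _
          (fun j _ => (measurable_const.indicator (hpremeas j)))]
        refine Finset.sum_congr rfl (fun j _ => ?_)
        rw [MeasureTheory.lintegral_indicator_const (hpremeas j), one_mul]
      rw [heq]
      calc ∫⁻ ω, ∑ j ∈ J, (pre j).indicator (fun _ => (1 : ENNReal)) ω ∂μ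
          ≤ ∫⁻ _, ENNReal.ofReal (((n : ℝ) + 1) * α / m) ∂μ := by
            refine MeasureTheory.lintegral_mono_ae ?_
            filter_upwards [hdist] with ω h using hcount ω h
        _ = ENNReal.ofReal (((n : ℝ) + 1) * α / m) := by
            rw [MeasureTheory.lintegral_const, measure_univ, mul_one]
    have hfinal : ((n + 1 : ℕ) : ENNReal) * μ (S ⁻¹' SLCaux.Dset n m α i)
        ≤ ((n + 1 : ℕ) : ENNReal) * ENNReal.ofReal (α / m) := by
      rw [← hsum1]
      refine hsum2.trans (le_of_eq ?_)
      rw [show ((n : ℝ) + 1) * α / m = ((n + 1 : ℕ) : ℝ) * (α / m) by push_cast; ring,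
        ENNReal.ofReal_mul (by positivity), ENNReal.ofReal_natCast]
    exact (ENNReal.mul_le_mul_iff_right (by simp) (by simp)).mp hfinal
  -- assembly
  have hsub : {ω | 1 ≤ khatSLC n m α (S ω) (σ ω) ∧ σ ω (khatSLC n m α (S ω) (σ ω)) ∈ H0}
      ⊆ (⋃ i ∈ H0, S ⁻¹' SLCaux.Dset n m α i)
        ∪ {ω | ¬ (Set.InjOn (S ω) (Finset.Icc 1 (n + m)) ∧ SortsTest n m (S ω) (σ ω))} := by
    intro ω hω
    by_cases hgood : Set.InjOn (S ω) (Finset.Icc 1 (n + m)) ∧ SortsTest n m (S ω) (σ ω)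
    · left
      exact Set.mem_iUnion₂.mpr ⟨σ ω (khatSLC n m α (S ω) (σ ω)), hω.2,
        Set.mem_preimage.mpr (SLCaux.event_mem_Dset hgood.1 hgood.2 hω.1)⟩
    · right
      exact hgood
  have hnull : μ {ω | ¬ (Set.InjOn (S ω) (Finset.Icc 1 (n + m))
      ∧ SortsTest n m (S ω) (σ ω))} = 0 := by
    have hae := hdist.and hσ
    exact (MeasureTheory.ae_iff).mp hae
  calc μ {ω | 1 ≤ khatSLC n m α (S ω) (σ ω) ∧ σ ω (khatSLC n m α (S ω) (σ ω)) ∈ H0}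
      ≤ μ ((⋃ i ∈ H0, S ⁻¹' SLCaux.Dset n m α i)
        ∪ {ω | ¬ (Set.InjOn (S ω) (Finset.Icc 1 (n + m)) ∧ SortsTest n m (S ω) (σ ω))}) :=
        measure_mono hsub
    _ ≤ μ (⋃ i ∈ H0, S ⁻¹' SLCaux.Dset n m α i)
        + μ {ω | ¬ (Set.InjOn (S ω) (Finset.Icc 1 (n + m)) ∧ SortsTest n m (S ω) (σ ω))} :=
        measure_union_le _ _
    _ = μ (⋃ i ∈ H0, S ⁻¹' SLCaux.Dset n m α i) := by rw [hnull, add_zero]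
    _ ≤ ∑ i ∈ H0, μ (S ⁻¹' SLCaux.Dset n m α i) := measure_biUnion_finset_le H0 _
    _ ≤ ∑ _i ∈ H0, ENNReal.ofReal (α / m) := Finset.sum_le_sum hkey
    _ = ENNReal.ofReal (α * H0.card / m) := by
        rw [Finset.sum_const, nsmul_eq_mul, ← ENNReal.ofReal_natCast H0.card,
          ← ENNReal.ofReal_mul (by positivity)]
        congr 1
        ring

end
end

section
/- Suppose 1 ≤ m0 < m, the variables S_1,…,S_n and (S_{n+i})_{i∈H0} are i.i.d. Uniform(0,1), the variables (S_{n+i})_{i∉H0} are i.i.d. Uniform(1,2), and all of these are mutually independent. If α ∈ (0,1) satisfies α ≥ 1/((n+1)·(1 − m0/m)), then the SL procedure at level α satisfies bFDR(SL) ≥ m0/(m0 + n). In particular, if additionally α < m/(m0 + n), then bFDR(SL) > α·m0/m, so the SL procedure fails to control the bFDR at level α·m0/m in the conformal setting. -/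
open MeasureTheory Finset

noncomputable section

attribute [local instance] Classical.propDecidable

section AuxProb
variable {Ω : Type*} [MeasurableSpace Ω] {μ : Measure Ω} [IsProbabilityMeasure μ]

/-- law of independent tuple is the product measure -/
lemma aux_tuple_law {ι : Type*} [Fintype ι] (f : ι → Ω → ℝ)
    (hf : ∀ i, Measurable (f i))
    (hindep : ProbabilityTheory.iIndepFun f μ) :
    Measure.pi (fun i => μ.map (f i)) = μ.map (fun ω => fun i => f i ω) := by
  haveI : ∀ i, SigmaFinite (μ.map (f i)) := fun i =>
    haveI : IsProbabilityMeasure (μ.map (f i)) := Measure.isProbabilityMeasure_map (hf i).aemeasurable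
    inferInstance
  refine Measure.pi_eq fun s hs => ?_
  have hT : Measurable (fun ω => fun i => f i ω) :=
    measurable_pi_lambda _ fun i => hf i
  rw [Measure.map_apply hT (MeasurableSet.univ_pi hs)]
  have hpre : (fun ω => fun i => f i ω) ⁻¹' (Set.pi Set.univ s)
      = ⋂ i ∈ (Finset.univ : Finset ι), f i ⁻¹' s i := by
    ext ω; simp [Set.mem_pi]
  rw [hpre, hindep.measure_inter_preimage_eq_mul Finset.univ (fun i _ => hs i)]
  exact Finset.prod_congr rfl fun i _ => (Measure.map_apply (hf i) (hs i)).symm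

/-- pi measure invariant under component-preserving permutation -/
lemma aux_pi_perm {ι : Type*} [Fintype ι] (law : ι → Measure ℝ)
    [∀ i, IsProbabilityMeasure (law i)] (e : Equiv.Perm ι)
    (hlaw : ∀ i, law (e i) = law i) :
    Measure.map (fun x (i : ι) => x (e i)) (Measure.pi law) = Measure.pi law := by
  refine (Measure.pi_eq fun s hs => ?_).symm
  have hM : Measurable (fun (x : ι → ℝ) (i : ι) => x (e i)) :=
    measurable_pi_lambda _ fun i => measurable_pi_apply _
  rw [Measure.map_apply hM (MeasurableSet.univ_pi hs)]
  have hpre : (fun (x : ι → ℝ) (i : ι) => x (e i)) ⁻¹' (Set.pi Set.univ s)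
      = Set.pi Set.univ (fun k => s (e.symm k)) := by
    ext x
    simp only [Set.mem_preimage, Set.mem_pi, Set.mem_univ, true_imp_iff]
    constructor
    · intro h k; have := h (e.symm k); simpa using this
    · intro h i; have := h (e i); simpa using this
  rw [hpre, Measure.pi_pi]
  rw [← Equiv.prod_comp e (fun k => law k (s (e.symm k)))]
  refine Finset.prod_congr rfl fun i _ => ?_
  rw [hlaw i, Equiv.symm_apply_apply]

/-- independent with atomless second law implies a.s. different -/
lemma aux_ne_ae {X Y : Ω → ℝ} (hX : Measurable X) (hY : Measurable Y)
    (h : ProbabilityTheory.IndepFun X Y μ) [NullSingletonClass (μ.map Y)] :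
    μ {ω | X ω = Y ω} = 0 := by
  have hmap : μ.map (fun ω => (X ω, Y ω)) = (μ.map X).prod (μ.map Y) :=
    (ProbabilityTheory.indepFun_iff_map_prod_eq_prod_map_map hX.aemeasurable
      hY.aemeasurable).mp h
  have hD : MeasurableSet {p : ℝ × ℝ | p.1 = p.2} :=
    measurableSet_eq_fun measurable_fst measurable_snd
  have h1 : μ {ω | X ω = Y ω}
      = (μ.map (fun ω => (X ω, Y ω))) {p : ℝ × ℝ | p.1 = p.2} := by
    rw [Measure.map_apply (hX.prodMk hY) hD]; rfl
  rw [h1, hmap, Measure.prod_apply hD]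
  have : ∀ x : ℝ, (Prod.mk x ⁻¹' {p : ℝ × ℝ | p.1 = p.2}) = {x} := by
    intro x; ext y; simp [eq_comm]
  simp only [this]
  simp [measure_singleton]

end AuxProb

lemma det_key (n m : ℕ) (hn : 1 ≤ n) (H0 : Finset ℕ) (hH0 : H0 ⊆ Finset.Icc 1 m)
    (hm0 : 1 ≤ H0.card) (hm0m : H0.card < m)
    (s : ℕ → ℝ) (σ : ℕ → ℕ) (hst : SortsTest n m s σ)
    (hnul : ∀ j ∈ NullIdx n H0, s j < 1)
    (hnn : ∀ i ∈ Finset.Icc 1 m, i ∉ H0 → 1 < s (n + i))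
    (hmaxE : ∃ i ∈ H0, ∀ l ∈ NullIdx n H0, l ≠ n + i → s l < s (n + i))
    (α : ℝ) (hα : α ∈ Set.Ioo (0 : ℝ) 1)
    (hαlow : 1 / (((n : ℝ) + 1) * (1 - (H0.card : ℝ) / m)) ≤ α) :
    1 ≤ khatSL n m α s σ ∧ σ (khatSL n m α s σ) ∈ H0 := by
  obtain ⟨hσ0, hbij, hmono⟩ := hst
  set m0 := H0.card with hm0def
  set m1 := m - m0 with hm1def
  have hm1m : m1 < m := by omega
  have hm11 : 1 ≤ m1 := by omega
  have hmpos : 0 < m := by omega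
  -- membership helpers
  have hnullmem : ∀ i ∈ H0, n + i ∈ NullIdx n H0 := by
    intro i hi
    exact Finset.mem_union_right _ (Finset.mem_image_of_mem _ hi)
  have hcalmem : ∀ j ∈ Finset.Icc 1 n, j ∈ NullIdx n H0 := fun j hj =>
    Finset.mem_union_left _ hj
  have hσmem : ∀ k ∈ Finset.Icc 1 m, σ k ∈ Finset.Icc 1 m := by
    intro k hk
    have := hbij.mapsTo (by exact_mod_cast hk)
    exact_mod_cast this
  -- sortedness non-strict version
  have hmono' : ∀ k ∈ Finset.Icc 1 m, ∀ k' ∈ Finset.Icc 1 m, k ≤ k' →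
      s (n + σ k') ≤ s (n + σ k) := by
    intro k hk k' hk' hle
    rcases lt_or_eq_of_le hle with h | h
    · exact (hmono k hk k' hk' h).le
    · rw [h]
  -- Claim 1
  have claim1 : ∀ k, 1 ≤ k → k ≤ m1 → σ k ∉ H0 := by
    intro k hk1 hk2 hmem
    have hkm : k ∈ Finset.Icc 1 m := Finset.mem_Icc.mpr ⟨hk1, le_trans hk2 hm1m.le⟩
    have himg : ∀ k' ∈ Finset.Icc k m, σ k' ∈ H0 := by
      intro k' hk'
      rw [Finset.mem_Icc] at hk'
      have hk'm : k' ∈ Finset.Icc 1 m := Finset.mem_Icc.mpr ⟨le_trans hk1 hk'.1, hk'.2⟩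
      have hlt : s (n + σ k') < 1 := by
        have h1 : s (n + σ k) < 1 := hnul _ (hnullmem _ hmem)
        calc s (n + σ k') ≤ s (n + σ k) := hmono' k hkm k' hk'm hk'.1
        _ < 1 := h1
      by_contra hnot
      exact absurd (hnn (σ k') (hσmem k' hk'm) hnot) (by linarith)
    have hsub : (Finset.Icc k m).image σ ⊆ H0 := by
      intro x hx
      obtain ⟨k', hk', rfl⟩ := Finset.mem_image.mp hx
      exact himg k' hk'
    have hinj : Set.InjOn σ ↑(Finset.Icc k m) := by
      refine Set.InjOn.mono ?_ hbij.injOn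
      intro x hx
      simp only [Finset.coe_Icc, Set.mem_Icc] at hx ⊢
      exact ⟨le_trans hk1 hx.1, hx.2⟩
    have hcard : ((Finset.Icc k m).image σ).card = (Finset.Icc k m).card :=
      Finset.card_image_of_injOn hinj
    have := Finset.card_le_card hsub
    rw [hcard, Nat.card_Icc] at this
    omega
  -- Claim 2
  have claim2 : ∀ k, m1 < k → k ≤ m → σ k ∈ H0 := by
    intro k hk1 hk2
    by_contra hmem
    have hkm : k ∈ Finset.Icc 1 m := Finset.mem_Icc.mpr ⟨by omega, hk2⟩
    have himg : ∀ k' ∈ Finset.Icc 1 k, σ k' ∉ H0 := by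
      intro k' hk'
      rw [Finset.mem_Icc] at hk'
      have hk'm : k' ∈ Finset.Icc 1 m := Finset.mem_Icc.mpr ⟨hk'.1, le_trans hk'.2 hk2⟩
      have hgt : 1 < s (n + σ k') := by
        have h1 : 1 < s (n + σ k) := hnn (σ k) (hσmem k hkm) hmem
        calc (1:ℝ) < s (n + σ k) := h1
        _ ≤ s (n + σ k') := hmono' k' hk'm k hkm hk'.2
      intro hin
      exact absurd (hnul _ (hnullmem _ hin)) (by linarith)
    have hsub : (Finset.Icc 1 k).image σ ⊆ (Finset.Icc 1 m) \ H0 := by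
      intro x hx
      obtain ⟨k', hk', rfl⟩ := Finset.mem_image.mp hx
      have hk'm : k' ∈ Finset.Icc 1 m := by
        rw [Finset.mem_Icc] at hk' ⊢; exact ⟨hk'.1, le_trans hk'.2 hk2⟩
      exact Finset.mem_sdiff.mpr ⟨hσmem k' hk'm, himg k' hk'⟩
    have hinj : Set.InjOn σ ↑(Finset.Icc 1 k) := by
      refine Set.InjOn.mono ?_ hbij.injOn
      intro x hx
      simp only [Finset.coe_Icc, Set.mem_Icc] at hx ⊢
      exact ⟨hx.1, le_trans hx.2 hk2⟩
    have hcard : ((Finset.Icc 1 k).image σ).card = (Finset.Icc 1 k).card :=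
      Finset.card_image_of_injOn hinj
    have h1 := Finset.card_le_card hsub
    rw [hcard, Nat.card_Icc, Finset.card_sdiff_of_subset hH0, Nat.card_Icc] at h1
    omega
  -- pOrd values
  have hpval : ∀ i, 1 < s (n + i) → pval n s i = 1 / ((n:ℝ) + 1) := by
    intro i hi
    have hfil : (Finset.Icc 1 n).filter (fun j => s (n + i) ≤ s j) = ∅ := by
      refine Finset.filter_eq_empty_iff.mpr ?_
      intro j hj
      have := hnul j (hcalmem j hj)
      push_neg
      linarith
    rw [pval, hfil]
    simp
  have claim3a : ∀ k, 1 ≤ k → k ≤ m1 → pOrd n s σ k = 1 / ((n:ℝ) + 1) := by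
    intro k hk1 hk2
    have hkm : k ∈ Finset.Icc 1 m := Finset.mem_Icc.mpr ⟨hk1, le_trans hk2 hm1m.le⟩
    rw [pOrd, if_neg (by omega)]
    exact hpval _ (hnn (σ k) (hσmem k hkm) (claim1 k hk1 hk2))
  -- the strict max null score
  obtain ⟨istar, histar, hstarmax⟩ := hmaxE
  have claim3b : pOrd n s σ (m1 + 1) = 1 / ((n:ℝ) + 1) := by
    have hm1m' : m1 + 1 ∈ Finset.Icc 1 m := Finset.mem_Icc.mpr ⟨by omega, by omega⟩
    -- find k* with σ k* = istar
    obtain ⟨kstar, hkstar, hkeq⟩ := hbij.surjOn (show (istar : ℕ) ∈ ↑(Finset.Icc 1 m) by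
      exact_mod_cast hH0 histar)
    have hkstar' : kstar ∈ Finset.Icc 1 m := by exact_mod_cast hkstar
    have hkstar1 : m1 < kstar := by
      by_contra h
      push_neg at h
      have h1 : 1 ≤ kstar := (Finset.mem_Icc.mp hkstar').1
      exact claim1 kstar h1 h (hkeq ▸ histar)
    have hge : s (n + istar) ≤ s (n + σ (m1 + 1)) := by
      rw [← hkeq]
      exact hmono' (m1+1) hm1m' kstar hkstar' (by omega)
    rw [pOrd, if_neg (by omega), pval]
    have hfil : (Finset.Icc 1 n).filter (fun j => s (n + σ (m1+1)) ≤ s j) = ∅ := by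
      refine Finset.filter_eq_empty_iff.mpr ?_
      intro j hj
      have hjne : j ≠ n + istar := by
        have := (Finset.mem_Icc.mp hj).2
        have : j ≤ n := this
        have hi1 : 1 ≤ istar := (Finset.mem_Icc.mp (hH0 histar)).1
        omega
      have := hstarmax j (hcalmem j hj) hjne
      push_neg
      linarith
    rw [hfil]
    simp
  -- the objective
  set f : ℕ → ℝ := fun k => pOrd n s σ k - α * k / m with hfdef
  obtain ⟨hα0, hα1⟩ := hα
  have hm1cast : (m1 : ℝ) = (m : ℝ) - m0 := by
    rw [hm1def]
    push_cast [Nat.cast_sub (le_of_lt hm0m)]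
    ring
  have hcpos : (0:ℝ) < (m1 : ℝ) / m := by positivity
  have hαm1 : 1 / ((n:ℝ) + 1) ≤ α * ((m1:ℝ) / m) := by
    have h1 : 1 - (m0 : ℝ) / m = (m1 : ℝ) / m := by
      rw [hm1cast]
      field_simp
    rw [h1] at hαlow
    have hne : ((n:ℝ) + 1) * ((m1:ℝ)/m) > 0 := by positivity
    rw [div_le_iff₀ hne] at hαlow
    calc 1 / ((n:ℝ)+1) = (1 / ((n:ℝ)+1)) * 1 := by ring
    _ ≤ (1 / ((n:ℝ)+1)) * (α * (((n:ℝ)+1) * ((m1:ℝ)/m))) := by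
        apply mul_le_mul_of_nonneg_left (by linarith) (by positivity)
    _ = α * ((m1:ℝ)/m) := by field_simp
  have claim4 : ∀ k ≤ m1, f (m1 + 1) < f k := by
    intro k hk
    have hfm1 : f (m1 + 1) = 1 / ((n:ℝ)+1) - α * (m1+1) / m := by
      rw [hfdef]
      simp only [claim3b]
      push_cast
      ring_nf
    rcases Nat.eq_zero_or_pos k with rfl | hk1
    · have hf0 : f 0 = 0 := by simp [hfdef, pOrd]
      rw [hf0, hfm1]
      have h2 : α * ((m1:ℝ)+1) / m = α * ((m1:ℝ)/m) + α / m := by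
        field_simp
      have h3 : 0 < α / (m:ℝ) := by positivity
      rw [h2]
      linarith
    · have hfk : f k = 1 / ((n:ℝ)+1) - α * k / m := by
        rw [hfdef]
        simp only [claim3a k hk1 hk]
      rw [hfk, hfm1]
      have hkc : (k : ℝ) < (m1 : ℝ) + 1 := by exact_mod_cast Nat.lt_succ_of_le hk
      have hm' : (0:ℝ) < m := by exact_mod_cast hmpos
      have : α * (k:ℝ) / m < α * ((m1:ℝ)+1) / m := by
        have h5 : α * (k:ℝ) < α * ((m1:ℝ)+1) := by nlinarith
        first
        | exact div_lt_div_of_lt hm' h5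
        | exact (div_lt_div_iff_of_pos_right hm').mpr h5
        | exact (div_lt_div_right hm').mpr h5
        | (gcongr <;> assumption)
      linarith
  -- maxArgmin properties
  obtain ⟨k0, hk0mem, hk0min⟩ := Finset.exists_min_image (Finset.range (m+1)) f
    ⟨0, Finset.mem_range.mpr (by omega)⟩
  have hk0 : k0 ∈ {k | k ≤ m ∧ ∀ k' ≤ m, f k ≤ f k'} := by
    refine ⟨Finset.mem_range_succ_iff.mp hk0mem, fun k' hk' => ?_⟩
    exact hk0min k' (Finset.mem_range_succ_iff.mpr hk')
  have hbdd : BddAbove {k | k ≤ m ∧ ∀ k' ≤ m, f k ≤ f k'} := ⟨m, fun x hx => hx.1⟩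
  have hkhat : khatSL n m α s σ ∈ {k | k ≤ m ∧ ∀ k' ≤ m, f k ≤ f k'} := by
    rw [khatSL, maxArgmin]
    exact Nat.sSup_mem ⟨k0, hk0⟩ hbdd
  obtain ⟨hkm, hkmin⟩ := hkhat
  have hklarge : m1 + 1 ≤ khatSL n m α s σ := by
    by_contra h
    push_neg at h
    have h1 : f (khatSL n m α s σ) ≤ f (m1+1) := hkmin (m1+1) (by omega)
    have h2 : f (m1+1) < f (khatSL n m α s σ) := claim4 _ (by omega)
    linarith
  exact ⟨by omega, claim2 _ (by omega) hkm⟩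

set_option maxHeartbeats 1600000 in
/-- Proposition 2.1 of the paper: in the "Dirac–Uniform"-type
configuration (nulls and calibration scores i.i.d. `U(0,1)`, alternatives i.i.d.
`U(1,2)`, all independent), if `α ≥ 1/((n+1)(1 − m₀/m))` then
`bFDR(SL) ≥ m₀/(m₀+n)`; in particular if moreover `α < m/(m₀+n)` then
`bFDR(SL) > α·m₀/m`, so SL fails to control the bFDR at level `α·m₀/m`. -/
theorem SL_bFDR_counterexample
    {Ω : Type*} [MeasurableSpace Ω] (μ : Measure Ω) [IsProbabilityMeasure μ]
    (n m : ℕ) (hn : 1 ≤ n)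
    (H0 : Finset ℕ) (hH0 : H0 ⊆ Finset.Icc 1 m)
    (hm0 : 1 ≤ H0.card) (hm0m : H0.card < m)
    (S : Ω → ℕ → ℝ) (hS : Measurable S)
    (hindep : ProbabilityTheory.iIndepFun
      (fun j : (Finset.Icc 1 (n + m) : Finset ℕ) => fun ω => S ω (j : ℕ)) μ)
    (hlaw0 : ∀ j ∈ NullIdx n H0,
      Measure.map (fun ω => S ω j) μ = volume.restrict (Set.Ioo (0 : ℝ) 1))
    (hlaw1 : ∀ i ∈ Finset.Icc 1 m, i ∉ H0 →
      Measure.map (fun ω => S ω (n + i)) μ = volume.restrict (Set.Ioo (1 : ℝ) 2))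
    (σ : Ω → ℕ → ℕ) (hσ : ∀ᵐ ω ∂μ, SortsTest n m (S ω) (σ ω))
    (α : ℝ) (hα : α ∈ Set.Ioo (0 : ℝ) 1)
    (hαlow : 1 / (((n : ℝ) + 1) * (1 - (H0.card : ℝ) / m)) ≤ α) :
    ENNReal.ofReal ((H0.card : ℝ) / ((H0.card : ℝ) + n))
        ≤ μ {ω | 1 ≤ khatSL n m α (S ω) (σ ω) ∧ σ ω (khatSL n m α (S ω) (σ ω)) ∈ H0}
      ∧
    (α < (m : ℝ) / ((H0.card : ℝ) + n) →
      ENNReal.ofReal (α * H0.card / m)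
        < μ {ω | 1 ≤ khatSL n m α (S ω) (σ ω) ∧ σ ω (khatSL n m α (S ω) (σ ω)) ∈ H0}) := by
  classical
  -- coordinate measurability
  have hSj : ∀ j : ℕ, Measurable (fun ω => S ω j) := fun j => (measurable_pi_apply j).comp hS
  have hNsub : NullIdx n H0 ⊆ Finset.Icc 1 (n + m) := by
    intro j hj
    rcases Finset.mem_union.mp hj with h | h
    · rw [Finset.mem_Icc] at h ⊢; omega
    · obtain ⟨i, hi, rfl⟩ := Finset.mem_image.mp h
      have := Finset.mem_Icc.mp (hH0 hi)
      rw [Finset.mem_Icc]; omega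
  -- the tuple and its law
  set ι := ((Finset.Icc 1 (n + m) : Finset ℕ) : Type) with hιdef
  set T : Ω → ι → ℝ := fun ω => fun j : ι => S ω (j : ℕ) with hTdef
  have hTmeas : Measurable T := measurable_pi_lambda _ fun j => hSj (j : ℕ)
  set law : ι → Measure ℝ := fun j => μ.map (fun ω => S ω (j : ℕ)) with hlawdef
  haveI hlawprob : ∀ j : ι, IsProbabilityMeasure (law j) := fun j =>
    Measure.isProbabilityMeasure_map (hSj (j : ℕ)).aemeasurable
  have htuple : Measure.pi law = μ.map T :=
    aux_tuple_law (fun j : ι => fun ω => S ω (j : ℕ)) (fun j => hSj (j : ℕ)) hindep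
  -- the argmax events
  set A : ℕ → Set Ω := fun j => {ω | ∀ l ∈ NullIdx n H0, l ≠ j → S ω l < S ω j} with hAdef
  have hAmeas : ∀ j, MeasurableSet (A j) := by
    intro j
    have : A j = ⋂ l ∈ (↑(NullIdx n H0) : Set ℕ), {ω | l ≠ j → S ω l < S ω j} := by
      ext ω; simp [hAdef]
    rw [this]
    refine MeasurableSet.biInter (NullIdx n H0).countable_toSet fun l _ => ?_
    by_cases hl : l = j
    · simp [hl]
    · simp only [hl, ne_eq, not_false_iff, true_implies]
      exact measurableSet_lt (hSj l) (hSj j)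
  set B : ι → Set (ι → ℝ) :=
    fun j => {x | ∀ l : ι, (l : ℕ) ∈ NullIdx n H0 → l ≠ j → x l < x j} with hBdef
  have hBmeas : ∀ j, MeasurableSet (B j) := by
    intro j
    have : B j = ⋂ l : ι, {x : ι → ℝ | (l : ℕ) ∈ NullIdx n H0 → l ≠ j → x l < x j} := by
      ext x; simp [hBdef]
    rw [this]
    refine MeasurableSet.iInter fun l => ?_
    by_cases h1 : (l : ℕ) ∈ NullIdx n H0
    · by_cases h2 : l = j
      · simp [h1, h2]
      · simp only [h1, h2, ne_eq, not_false_iff, true_implies]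
        exact measurableSet_lt (measurable_pi_apply l) (measurable_pi_apply j)
    · simp [h1]
  have hApre : ∀ (j : ℕ) (hj : j ∈ NullIdx n H0), A j = T ⁻¹' B ⟨j, hNsub hj⟩ := by
    intro j hj
    ext ω
    constructor
    · intro hω l hl hlne
      exact hω (l : ℕ) hl (fun h => hlne (Subtype.ext h))
    · intro hω l hl hlne
      exact hω ⟨l, hNsub hl⟩ hl (fun h => hlne (congrArg Subtype.val h))
  have hAeq : ∀ (j : ℕ) (hj : j ∈ NullIdx n H0), μ (A j) = Measure.pi law (B ⟨j, hNsub hj⟩) := by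
    intro j hj
    rw [hApre j hj, ← Measure.map_apply hTmeas (hBmeas _), ← htuple]
  -- exchangeability: all μ (A j), j null, are equal
  have hswap : ∀ j ∈ NullIdx n H0, ∀ j' ∈ NullIdx n H0, μ (A j) = μ (A j') := by
    intro j hj j' hj'
    rcases eq_or_ne j j' with rfl | hne
    · rfl
    set jA : ι := ⟨j, hNsub hj⟩
    set jB : ι := ⟨j', hNsub hj'⟩
    have hjAne : jA ≠ jB := fun h => hne (congrArg Subtype.val h)
    set e : Equiv.Perm ι := Equiv.swap jA jB with hedef
    have hlawnull : ∀ k : ι, (k : ℕ) ∈ NullIdx n H0 →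
        law k = volume.restrict (Set.Ioo (0 : ℝ) 1) := fun k hk => hlaw0 _ hk
    have henull : ∀ l : ι, (l : ℕ) ∈ NullIdx n H0 → ((e l : ι) : ℕ) ∈ NullIdx n H0 := by
      intro l hl
      rcases eq_or_ne l jA with rfl | h1
      · rw [hedef, Equiv.swap_apply_left]; exact hj'
      rcases eq_or_ne l jB with rfl | h2
      · rw [hedef, Equiv.swap_apply_right]; exact hj
      · rw [hedef, Equiv.swap_apply_of_ne_of_ne h1 h2]; exact hl
    have hlawe : ∀ k : ι, law (e k) = law k := by
      intro k
      rcases eq_or_ne k jA with rfl | h1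
      · rw [hedef, Equiv.swap_apply_left, hlawnull _ hj', hlawnull _ hj]
      rcases eq_or_ne k jB with rfl | h2
      · rw [hedef, Equiv.swap_apply_right, hlawnull _ hj, hlawnull _ hj']
      · rw [hedef, Equiv.swap_apply_of_ne_of_ne h1 h2]
    have hperm := aux_pi_perm law e hlawe
    have hpreB : (fun (x : ι → ℝ) (k : ι) => x (e k)) ⁻¹' (B jA) = B jB := by
      ext x
      simp only [Set.mem_preimage, hBdef, Set.mem_setOf_eq]
      constructor
      · intro h l' hl' hl'ne
        have h1 : e l' ≠ jA := by
          intro hc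
          apply hl'ne
          have := congrArg e hc
          rwa [Equiv.swap_apply_self, hedef, Equiv.swap_apply_left] at this
        have h2 := h (e l') (henull l' hl') h1
        rwa [Equiv.swap_apply_self, hedef, Equiv.swap_apply_left] at h2
      · intro h l hl hlne
        have h1 : e l ≠ jB := by
          intro hc
          apply hlne
          have := congrArg e hc
          rwa [Equiv.swap_apply_self, hedef, Equiv.swap_apply_right] at this
        have h2 := h (e l) (henull l hl) h1
        rwa [hedef, Equiv.swap_apply_left]
    rw [hAeq j hj, hAeq j' hj']
    have hM : Measurable (fun (x : ι → ℝ) (k : ι) => x (e k)) :=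
      measurable_pi_lambda _ fun k => measurable_pi_apply _
    calc Measure.pi law (B ⟨j, hNsub hj⟩)
        = (Measure.map (fun (x : ι → ℝ) (k : ι) => x (e k)) (Measure.pi law)) (B jA) := by
          rw [hperm]
      _ = Measure.pi law ((fun (x : ι → ℝ) (k : ι) => x (e k)) ⁻¹' (B jA)) :=
          Measure.map_apply hM (hBmeas jA)
      _ = Measure.pi law (B ⟨j', hNsub hj'⟩) := by rw [hpreB]
  -- disjointness
  have hdisj : (↑(NullIdx n H0) : Set ℕ).PairwiseDisjoint A := by
    intro j hj j' hj' hne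
    refine Set.disjoint_left.mpr fun ω hωj hωj' => ?_
    have h1 := hωj j' hj' (Ne.symm hne)
    have h2 := hωj' j hj hne
    exact absurd h2 (not_lt.mpr h1.le)
  -- a.s. all null scores distinct
  have hkey : ∀ j ∈ NullIdx n H0, ∀ j' ∈ NullIdx n H0, j ≠ j' →
      μ {ω | S ω j = S ω j'} = 0 := by
    intro j hj j' hj' hne
    haveI : NullSingletonClass (μ.map (fun ω => S ω j')) := by
      rw [hlaw0 j' hj']; infer_instance
    have hne' : (⟨j, hNsub hj⟩ : ι) ≠ ⟨j', hNsub hj'⟩ := fun h =>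
      hne (congrArg Subtype.val h)
    exact aux_ne_ae (hSj j) (hSj j') (hindep.indepFun hne')
  have hdistinct : ∀ᵐ ω ∂μ, ∀ j ∈ NullIdx n H0, ∀ j' ∈ NullIdx n H0, j ≠ j' →
      S ω j ≠ S ω j' := by
    refine (ae_ball_iff (NullIdx n H0).countable_toSet).mpr fun j hj => ?_
    refine (ae_ball_iff (NullIdx n H0).countable_toSet).mpr fun j' hj' => ?_
    by_cases hne : j = j'
    · exact Filter.Eventually.of_forall fun ω h => absurd hne h
    · have h0 := hkey j hj j' hj' hne
      have : ∀ᵐ ω ∂μ, S ω j ≠ S ω j' := by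
        rw [ae_iff]; simpa using h0
      exact this.mono fun ω h _ => h
  -- the union of the A j has full measure
  have hNne : (NullIdx n H0).Nonempty :=
    ⟨1, Finset.mem_union_left _ (Finset.mem_Icc.mpr ⟨le_refl 1, hn⟩)⟩
  have hcover : ∀ᵐ ω ∂μ, ω ∈ ⋃ j ∈ NullIdx n H0, A j := by
    refine hdistinct.mono fun ω hω => ?_
    obtain ⟨j, hj, hmax⟩ := Finset.exists_max_image (NullIdx n H0) (fun l => S ω l) hNne
    refine Set.mem_biUnion hj ?_
    intro l hl hlne
    exact lt_of_le_of_ne (hmax l hl) (hω l hl j hj hlne)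
  have hone : ∑ j ∈ NullIdx n H0, μ (A j) = 1 := by
    rw [← measure_biUnion_finset hdisj (fun j _ => hAmeas j)]
    have : (⋃ j ∈ NullIdx n H0, A j) =ᵐ[μ] Set.univ := by
      rw [Filter.eventuallyEq_univ]; exact hcover
    rw [measure_congr this, measure_univ]
  have hcardN : (NullIdx n H0).card = n + H0.card := by
    rw [NullIdx, Finset.card_union_of_disjoint, Nat.card_Icc,
      Finset.card_image_of_injective _ (add_right_injective n)]
    · omega
    · refine Finset.disjoint_left.mpr fun x hx hx' => ?_
      obtain ⟨i, hi, rfl⟩ := Finset.mem_image.mp hx'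
      have h1 := Finset.mem_Icc.mp hx
      have h2 := Finset.mem_Icc.mp (hH0 hi)
      omega
  -- each A j has measure 1/(n+m0)
  have hconst : ∀ j ∈ NullIdx n H0, μ (A j) = ((n + H0.card : ℕ) : ENNReal)⁻¹ := by
    intro j hj
    have hsum : ∑ j' ∈ NullIdx n H0, μ (A j') = ((n + H0.card : ℕ) : ENNReal) * μ (A j) := by
      rw [Finset.sum_congr rfl fun j' hj' => hswap j' hj' j hj, Finset.sum_const,
        hcardN, nsmul_eq_mul]
    rw [hsum] at hone
    have hc0 : ((n + H0.card : ℕ) : ENNReal) ≠ 0 := by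
      simp; omega
    have hctop : ((n + H0.card : ℕ) : ENNReal) ≠ ⊤ := ENNReal.natCast_ne_top _
    calc μ (A j) = (((n + H0.card : ℕ) : ENNReal))⁻¹ * (((n + H0.card : ℕ) : ENNReal) * μ (A j)) := by
          rw [← mul_assoc, ENNReal.inv_mul_cancel hc0 hctop, one_mul]
      _ = (((n + H0.card : ℕ) : ENNReal))⁻¹ := by rw [hone, mul_one]
  -- the event E
  set E : Set Ω := ⋃ i ∈ H0, A (n + i) with hEdef
  have hEmeas : μ E = (H0.card : ENNReal) * ((n + H0.card : ℕ) : ENNReal)⁻¹ := by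
    rw [hEdef, measure_biUnion_finset ?disj (fun i _ => hAmeas (n + i))]
    · rw [Finset.sum_congr rfl fun i hi => hconst (n + i)
        (Finset.mem_union_right _ (Finset.mem_image_of_mem _ hi)), Finset.sum_const,
        nsmul_eq_mul]
    case disj =>
      intro i hi i' hi' hne
      exact hdisj (Finset.mem_coe.mpr (Finset.mem_union_right _
          (Finset.mem_image_of_mem _ hi)))
        (Finset.mem_coe.mpr (Finset.mem_union_right _ (Finset.mem_image_of_mem _ hi')))
        (fun h => hne (by omega))
  -- good event
  have hnullae : ∀ᵐ ω ∂μ, ∀ j ∈ NullIdx n H0, S ω j < 1 := by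
    refine (ae_ball_iff (NullIdx n H0).countable_toSet).mpr fun j hj => ?_
    have h1 : μ ((fun ω => S ω j) ⁻¹' (Set.Ioo (0:ℝ) 1)) = 1 := by
      rw [← Measure.map_apply (hSj j) measurableSet_Ioo, hlaw0 j hj,
        Measure.restrict_apply measurableSet_Ioo]
      simp [Real.volume_Ioo]
    have h2 : μ ((fun ω => S ω j) ⁻¹' (Set.Ioo (0:ℝ) 1))ᶜ = 0 := by
      rw [measure_compl ((hSj j) measurableSet_Ioo) (measure_ne_top μ _), h1, measure_univ]
      simp
    rw [ae_iff]
    refine measure_mono_null ?_ h2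
    intro ω hω
    simp only [Set.mem_compl_iff, Set.mem_preimage, Set.mem_Ioo, not_and_or, not_lt] at hω ⊢
    simp only [Set.mem_setOf_eq, not_lt] at hω
    right; exact hω
  have hnnae : ∀ᵐ ω ∂μ, ∀ i ∈ Finset.Icc 1 m, i ∉ H0 → 1 < S ω (n + i) := by
    refine (ae_ball_iff (Finset.Icc 1 m).countable_toSet).mpr fun i hi => ?_
    by_cases hiH : i ∈ H0
    · exact Filter.Eventually.of_forall fun ω h => absurd hiH h
    · have h1 : μ ((fun ω => S ω (n + i)) ⁻¹' (Set.Ioo (1:ℝ) 2)) = 1 := by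
        rw [← Measure.map_apply (hSj (n + i)) measurableSet_Ioo, hlaw1 i hi hiH,
          Measure.restrict_apply measurableSet_Ioo]
        norm_num [Real.volume_Ioo]
      have h2 : μ ((fun ω => S ω (n + i)) ⁻¹' (Set.Ioo (1:ℝ) 2))ᶜ = 0 := by
        rw [measure_compl ((hSj (n + i)) measurableSet_Ioo) (measure_ne_top μ _), h1,
          measure_univ]
        simp
      rw [ae_iff]
      refine measure_mono_null ?_ h2
      intro ω hω
      simp only [Set.mem_setOf_eq, not_forall, not_lt] at hω
      simp only [Set.mem_compl_iff, Set.mem_preimage, Set.mem_Ioo, not_and_or, not_lt]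
      left
      exact hω.2
  have hgood : ∀ᵐ ω ∂μ, SortsTest n m (S ω) (σ ω) ∧ (∀ j ∈ NullIdx n H0, S ω j < 1) ∧
      (∀ i ∈ Finset.Icc 1 m, i ∉ H0 → 1 < S ω (n + i)) := hσ.and (hnullae.and hnnae)
  set G : Set Ω := {ω | SortsTest n m (S ω) (σ ω) ∧ (∀ j ∈ NullIdx n H0, S ω j < 1) ∧
      (∀ i ∈ Finset.Icc 1 m, i ∉ H0 → 1 < S ω (n + i))} with hGdef
  have hGc : μ Gᶜ = 0 := by
    rw [ae_iff] at hgood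
    convert hgood using 1
    rfl
  -- inclusion in the target
  set Targ : Set Ω := {ω | 1 ≤ khatSL n m α (S ω) (σ ω) ∧
      σ ω (khatSL n m α (S ω) (σ ω)) ∈ H0} with hTargdef
  have hincl : E ∩ G ⊆ Targ := by
    rintro ω ⟨hωE, hωG⟩
    obtain ⟨hsort, hnul, hnn⟩ := hωG
    have hmaxE : ∃ i ∈ H0, ∀ l ∈ NullIdx n H0, l ≠ n + i → S ω l < S ω (n + i) := by
      rw [hEdef, Set.mem_iUnion₂] at hωE
      obtain ⟨i, hi, hωA⟩ := hωE
      exact ⟨i, hi, hωA⟩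
    exact det_key n m hn H0 hH0 hm0 hm0m (S ω) (σ ω) hsort hnul hnn hmaxE α hα hαlow
  have hmain : (H0.card : ENNReal) * ((n + H0.card : ℕ) : ENNReal)⁻¹ ≤ μ Targ := by
    calc (H0.card : ENNReal) * ((n + H0.card : ℕ) : ENNReal)⁻¹ = μ E := hEmeas.symm
      _ = μ (E ∩ G) := (measure_inter_conull hGc).symm
      _ ≤ μ Targ := measure_mono hincl
  -- numeric identification
  have hofReal : ENNReal.ofReal ((H0.card : ℝ) / ((H0.card : ℝ) + n))
      = (H0.card : ENNReal) * ((n + H0.card : ℕ) : ENNReal)⁻¹ := by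
    have h1 : (1:ℝ) ≤ (H0.card : ℝ) := by exact_mod_cast hm0
    have hpos : (0:ℝ) < (H0.card : ℝ) + n := by
      have h2 : (0:ℝ) ≤ (n:ℝ) := Nat.cast_nonneg n
      linarith
    have hcast : ((H0.card : ℝ) + n) = ((n + H0.card : ℕ) : ℝ) := by push_cast; ring
    rw [ENNReal.ofReal_div_of_pos hpos, ENNReal.ofReal_natCast, hcast,
      ENNReal.ofReal_natCast, div_eq_mul_inv]
  constructor
  · rw [hofReal]; exact hmain
  · intro hαup
    have hm0pos : (0:ℝ) < (H0.card : ℝ) := by exact_mod_cast hm0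
    have hmpos : (0:ℝ) < (m : ℝ) := by
      have : 0 < m := by omega
      exact_mod_cast this
    have hden : (0:ℝ) < (H0.card : ℝ) + n := by positivity
    have hlt : α * (H0.card : ℝ) / m < (H0.card : ℝ) / ((H0.card : ℝ) + n) := by
      rw [div_lt_div_iff₀ hmpos hden]
      have h1 : α * ((H0.card : ℝ) + n) < (m : ℝ) := by
        have := mul_lt_mul_of_pos_right hαup hden
        rwa [div_mul_cancel₀ _ (ne_of_gt hden)] at this
      nlinarith
    have h0 : (0:ℝ) < (H0.card : ℝ) / ((H0.card : ℝ) + n) := by positivity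
    calc ENNReal.ofReal (α * (H0.card : ℝ) / m)
        < ENNReal.ofReal ((H0.card : ℝ) / ((H0.card : ℝ) + n)) :=
          (ENNReal.ofReal_lt_ofReal_iff h0).mpr hlt
      _ ≤ μ Targ := by rw [hofReal]; exact hmain


end
end

section
/- Under Assumption (A1), for every α ∈ (0,1) and every subsample size s ∈ {1,…,m}, the single-subsampled procedure SLC+ satisfies bFDR(SLC+) ≤ α·m0/m, where the probability in the bFDR is taken marginally over both the scores and the subsampling randomization. -/
open MeasureTheory Finset
open scoped ENNReal

noncomputable section

attribute [local instance] Classical.propDecidable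

namespace SLCAux

open scoped ENNReal

/-! ### maxArgmin lemmas -/

lemma argset_nonempty (m : ℕ) (f : ℕ → ℝ) :
    ∃ k, k ≤ m ∧ ∀ k' ≤ m, f k ≤ f k' := by
  obtain ⟨k, hk, hmin⟩ := Finset.exists_min_image (Finset.range (m+1)) f
    ⟨0, by simp⟩
  exact ⟨k, Nat.lt_succ_iff.mp (Finset.mem_range.mp hk),
    fun k' hk' => hmin k' (Finset.mem_range.mpr (Nat.lt_succ_iff.mpr hk'))⟩

lemma argset_bddAbove (m : ℕ) (f : ℕ → ℝ) :
    BddAbove {k | k ≤ m ∧ ∀ k' ≤ m, f k ≤ f k'} :=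
  ⟨m, fun _ hk => hk.1⟩

lemma maxArgmin_mem (m : ℕ) (f : ℕ → ℝ) :
    maxArgmin m f ≤ m ∧ ∀ k' ≤ m, f (maxArgmin m f) ≤ f k' := by
  have h := Nat.sSup_mem (s := {k | k ≤ m ∧ ∀ k' ≤ m, f k ≤ f k'})
    (by obtain ⟨k, hk⟩ := argset_nonempty m f; exact ⟨k, hk⟩)
    (argset_bddAbove m f)
  exact h

lemma le_maxArgmin (m : ℕ) (f : ℕ → ℝ) (k : ℕ) (hk : k ≤ m)
    (hmin : ∀ k' ≤ m, f k ≤ f k') : k ≤ maxArgmin m f :=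
  le_csSup (argset_bddAbove m f) ⟨hk, hmin⟩

lemma maxArgmin_lt_strict (m : ℕ) (f : ℕ → ℝ) (k' : ℕ) (hk' : k' ≤ m)
    (hlt : maxArgmin m f < k') : f (maxArgmin m f) < f k' := by
  rcases lt_or_ge (f (maxArgmin m f)) (f k') with h | h
  · exact h
  · exfalso
    have hmin := (maxArgmin_mem m f).2
    have : ∀ k'' ≤ m, f k' ≤ f k'' := fun k'' hk'' => h.trans (hmin k'' hk'')
    exact absurd (le_maxArgmin m f k' hk' this) (not_le.mpr hlt)

lemma maxArgmin_congr (m : ℕ) {f g : ℕ → ℝ} (h : ∀ k ≤ m, f k = g k) :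
    maxArgmin m f = maxArgmin m g := by
  unfold maxArgmin
  congr 1
  ext k
  constructor
  · rintro ⟨hk, hmin⟩
    exact ⟨hk, fun k' hk' => by rw [← h k hk, ← h k' hk']; exact hmin k' hk'⟩
  · rintro ⟨hk, hmin⟩
    exact ⟨hk, fun k' hk' => by rw [h k hk, h k' hk']; exact hmin k' hk'⟩

lemma maxArgmin_eq_zero (m : ℕ) (f : ℕ → ℝ)
    (hpos : ∀ k, 1 ≤ k → k ≤ m → f 0 < f k) : maxArgmin m f = 0 := by
  by_contra hne
  have h1 : 1 ≤ maxArgmin m f := Nat.one_le_iff_ne_zero.mpr hne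
  have hmem := maxArgmin_mem m f
  exact absurd (hmem.2 0 (Nat.zero_le m)) (not_le.mpr (hpos _ h1 hmem.1))

/-! ### rank lemmas -/

/-- The rank (from the top) of `j` among `B` according to scores `f`. -/
def rk (B : Finset ℕ) (f : ℕ → ℝ) (j : ℕ) : ℕ :=
  (B.filter (fun l => f j ≤ f l)).card

lemma rk_lt_of_lt {B : Finset ℕ} {f : ℕ → ℝ} {j j' : ℕ}
    (hj : j ∈ B) (hj' : j' ∈ B) (h : f j < f j') : rk B f j' < rk B f j := by
  apply Finset.card_lt_card
  rw [Finset.ssubset_iff_of_subset]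
  · exact ⟨j, Finset.mem_filter.mpr ⟨hj, le_refl _⟩,
      fun hc => absurd (Finset.mem_filter.mp hc).2 (not_le.mpr h)⟩
  · intro l hl
    rcases Finset.mem_filter.mp hl with ⟨hlB, hle⟩
    exact Finset.mem_filter.mpr ⟨hlB, (le_of_lt h).trans hle⟩

lemma rk_injOn {B : Finset ℕ} {f : ℕ → ℝ} (hinj : Set.InjOn f B) :
    Set.InjOn (rk B f) B := by
  intro j hj j' hj' heq
  by_contra hne
  have hfne : f j ≠ f j' := fun h => hne (hinj hj hj' h)
  have hjB : j ∈ B := by simpa using hj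
  have hj'B : j' ∈ B := by simpa using hj'
  rcases lt_or_gt_of_ne hfne with h | h
  · exact absurd heq (rk_lt_of_lt hjB hj'B h).ne'
  · exact absurd heq (rk_lt_of_lt hj'B hjB h).ne

lemma rk_mem_Icc {B : Finset ℕ} {f : ℕ → ℝ} {j : ℕ} (hj : j ∈ B) :
    rk B f j ∈ Finset.Icc 1 B.card := by
  rw [Finset.mem_Icc]
  constructor
  · exact Finset.card_pos.mpr ⟨j, Finset.mem_filter.mpr ⟨hj, le_refl _⟩⟩
  · exact Finset.card_le_card (Finset.filter_subset _ _)

lemma rk_image {B : Finset ℕ} {f : ℕ → ℝ} (hinj : Set.InjOn f B) :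
    B.image (rk B f) = Finset.Icc 1 B.card := by
  apply Finset.eq_of_subset_of_card_le
  · intro k hk
    obtain ⟨j, hj, rfl⟩ := Finset.mem_image.mp hk
    exact rk_mem_Icc hj
  · rw [Nat.card_Icc]
    simp only [Nat.add_sub_cancel]
    rw [Finset.card_image_of_injOn (by exact_mod_cast rk_injOn hinj)]

lemma rk_surj {B : Finset ℕ} {f : ℕ → ℝ} (hinj : Set.InjOn f B)
    {k : ℕ} (hk : k ∈ Finset.Icc 1 B.card) : ∃ j ∈ B, rk B f j = k := by
  have := rk_image hinj
  rw [← this] at hk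
  obtain ⟨j, hj, hjk⟩ := Finset.mem_image.mp hk
  exact ⟨j, hj, hjk⟩

/-- ranks are anti-monotone: `rk j' ≤ rk j ↔ f j ≤ f j'` for `j, j' ∈ B`. -/
lemma rk_le_iff {B : Finset ℕ} {f : ℕ → ℝ} (hinj : Set.InjOn f B)
    {j j' : ℕ} (hj : j ∈ B) (hj' : j' ∈ B) :
    rk B f j' ≤ rk B f j ↔ f j ≤ f j' := by
  constructor
  · intro h
    by_contra hc
    exact absurd h (not_le.mpr (rk_lt_of_lt hj' hj (not_le.mp hc)))
  · intro h
    rcases eq_or_lt_of_le h with heq | hlt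
    · rw [hinj hj hj' heq]
    · exact le_of_lt (rk_lt_of_lt hj hj' hlt)

/-! ### Stage B: canonical versions -/

/-- test-score function -/
def tf (n : ℕ) (v : ℕ → ℝ) : ℕ → ℝ := fun l => v (n + l)

/-- canonical ordered p-value: p-value of the rank-`k` element of `A`. -/
def POv (n : ℕ) (A : Finset ℕ) (v : ℕ → ℝ) (k : ℕ) : ℝ :=
  ∑ j ∈ A, if rk A (tf n v) j = k then pval n v j else 0

/-- canonical SLC index. -/
def KHv (n t : ℕ) (α : ℝ) (A : Finset ℕ) (v : ℕ → ℝ) : ℕ :=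
  maxArgmin t (fun k => (if k = 0 then (0:ℝ) else POv n A v k)
    - k * max (α / t - 1 / (n + 1)) 0)

/-- the bad event: the procedure rejects and its boundary point is `i`. -/
def Bev (n t : ℕ) (α : ℝ) (A : Finset ℕ) (i : ℕ) : Set (ℕ → ℝ) :=
  {v | 1 ≤ KHv n t α A v ∧ rk A (tf n v) i = KHv n t α A v}

lemma sortsSub_rk {n : ℕ} {v : ℕ → ℝ} {A : Finset ℕ} {σ₀ : ℕ → ℕ}
    (hs : SortsSub n v A σ₀) (hinj : Set.InjOn (tf n v) A) :
    ∀ k ∈ Finset.Icc 1 A.card, rk A (tf n v) (σ₀ k) = k := by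
  obtain ⟨-, hbij, hmono⟩ := hs
  intro k hk
  set T := A.card with hT
  have hmem : ∀ k' ∈ Finset.Icc 1 T, σ₀ k' ∈ A := fun k' hk' => by
    have := hbij.mapsTo (by exact_mod_cast hk')
    exact_mod_cast this
  have hcard : (A.filter (fun l => tf n v (σ₀ k) ≤ tf n v l)).card
      = ((Finset.Icc 1 T).filter (fun k' => tf n v (σ₀ k) ≤ tf n v (σ₀ k'))).card := by
    symm
    apply Finset.card_bij (fun k' _ => σ₀ k')
    · intro k' hk'
      rcases Finset.mem_filter.mp hk' with ⟨h1, h2⟩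
      exact Finset.mem_filter.mpr ⟨hmem k' h1, h2⟩
    · intro l hl l' hl' heq
      exact hbij.injOn (by exact_mod_cast (Finset.mem_filter.mp hl).1)
        (by exact_mod_cast (Finset.mem_filter.mp hl').1) heq
    · intro a ha
      rcases Finset.mem_filter.mp ha with ⟨ha1, ha2⟩
      obtain ⟨k', hk', hk'a⟩ := hbij.surjOn (by exact_mod_cast ha1 : a ∈ (A : Set ℕ))
      have hk'' : k' ∈ Finset.Icc 1 T := by exact_mod_cast hk'
      refine ⟨k', Finset.mem_filter.mpr ⟨hk'', ?_⟩, hk'a⟩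
      rw [hk'a]; exact ha2
  have hset : ((Finset.Icc 1 T).filter (fun k' => tf n v (σ₀ k) ≤ tf n v (σ₀ k')))
      = Finset.Icc 1 k := by
    ext k'
    rcases Finset.mem_Icc.mp hk with ⟨hk1, hk2⟩
    simp only [Finset.mem_filter, Finset.mem_Icc]
    constructor
    · rintro ⟨⟨h1, h2⟩, hle⟩
      refine ⟨h1, ?_⟩
      by_contra hc
      exact absurd hle (not_le.mpr (hmono k hk k' (Finset.mem_Icc.mpr ⟨h1, h2⟩)
        (not_le.mp hc)))
    · rintro ⟨h1, h2⟩
      refine ⟨⟨h1, h2.trans hk2⟩, ?_⟩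
      rcases eq_or_lt_of_le h2 with rfl | hlt
      · exact le_refl _
      · exact le_of_lt (hmono k' (Finset.mem_Icc.mpr ⟨h1, h2.trans hk2⟩) k hk hlt)
  rw [rk, hcard, hset, Nat.card_Icc]
  omega

lemma sortsSub_pOrd {n : ℕ} {v : ℕ → ℝ} {A : Finset ℕ} {σ₀ : ℕ → ℕ}
    (hs : SortsSub n v A σ₀) (hinj : Set.InjOn (tf n v) A) :
    ∀ k ≤ A.card, pOrd n v σ₀ k = if k = 0 then (0:ℝ) else POv n A v k := by
  intro k hk
  rcases Nat.eq_zero_or_pos k with rfl | hk1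
  · simp [pOrd]
  have hkI : k ∈ Finset.Icc 1 A.card := Finset.mem_Icc.mpr ⟨hk1, hk⟩
  have hσk : σ₀ k ∈ A := by
    have := hs.2.1.mapsTo (by exact_mod_cast hkI)
    exact_mod_cast this
  have hk0 : k ≠ 0 := Nat.pos_iff_ne_zero.mp hk1
  simp only [pOrd, if_neg hk0, POv]
  rw [Finset.sum_eq_single_of_mem (σ₀ k) hσk]
  · rw [if_pos (sortsSub_rk hs hinj k hkI)]
  · intro j hj hne
    rw [if_neg]
    intro hrk
    exact hne (rk_injOn hinj (by exact_mod_cast hj) (by exact_mod_cast hσk)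
      (by rw [hrk, sortsSub_rk hs hinj k hkI]))

lemma sortsSub_khat {n t : ℕ} {α : ℝ} {v : ℕ → ℝ} {A : Finset ℕ} {σ₀ : ℕ → ℕ}
    (hs : SortsSub n v A σ₀) (hinj : Set.InjOn (tf n v) A) (hT : A.card = t) :
    khatSLC n t α v σ₀ = KHv n t α A v := by
  apply maxArgmin_congr
  intro k hk
  rw [sortsSub_pOrd hs hinj k (by omega)]

lemma KHv_le (n t : ℕ) (α : ℝ) (A : Finset ℕ) (v : ℕ → ℝ) :
    KHv n t α A v ≤ t := (maxArgmin_mem _ _).1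

/-! ### Stage C: boundary identification -/

lemma sortsTest_sortsSub {n m : ℕ} {v : ℕ → ℝ} {σ : ℕ → ℕ}
    (h : SortsTest n m v σ) : SortsSub n v (Finset.Icc 1 m) σ := by
  have hc : (Finset.Icc 1 m).card = m := by rw [Nat.card_Icc]; omega
  exact ⟨h.1, by rw [hc]; exact h.2.1, by rw [hc]; exact h.2.2⟩

lemma sortsTest_inv {n m : ℕ} {v : ℕ → ℝ} {σ : ℕ → ℕ}
    (h : SortsTest n m v σ) (hinj : Set.InjOn (tf n v) (Finset.Icc 1 m))
    {j : ℕ} (hj : j ∈ Finset.Icc 1 m) :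
    σ (rk (Finset.Icc 1 m) (tf n v) j) = j := by
  have hc : (Finset.Icc 1 m).card = m := by rw [Nat.card_Icc]; omega
  have hr : rk (Finset.Icc 1 m) (tf n v) j ∈ Finset.Icc 1 m := by
    have := rk_mem_Icc (B := Finset.Icc 1 m) (f := tf n v) hj
    rwa [hc] at this
  have hσr : σ (rk (Finset.Icc 1 m) (tf n v) j) ∈ Finset.Icc 1 m := by
    have := h.2.1.mapsTo (by exact_mod_cast hr)
    exact_mod_cast this
  have := sortsSub_rk (sortsTest_sortsSub h) hinj (rk (Finset.Icc 1 m) (tf n v) j) (by rwa [hc])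
  exact rk_injOn hinj (by exact_mod_cast hσr) (by exact_mod_cast hj) this

/-- Pointwise event inclusion: if the procedure rejects with a boundary in `H0`,
then for `i := σ' k̂ ∈ A ∩ H0` the score vector lies in `Bev n t α A i`. -/
lemma event_incl {n m t : ℕ} {α : ℝ} {v : ℕ → ℝ} {σ σ' : ℕ → ℕ}
    {A H0 : Finset ℕ} (hA : A ⊆ Finset.Icc 1 m) (hAc : A.card = t)
    (hst : SortsTest n m v σ) (hss : SortsSub n v A σ')
    (hinjm : Set.InjOn (tf n v) (Finset.Icc 1 m))
    (hne : rejSet n m v σ' (khatSLC n t α v σ') ≠ ∅)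
    (hH : σ (rejSet n m v σ' (khatSLC n t α v σ')).card ∈ H0) :
    ∃ i, i ∈ A ∧ i ∈ H0 ∧ v ∈ Bev n t α A i := by
  have hinjA : Set.InjOn (tf n v) A := hinjm.mono (by exact_mod_cast hA)
  set khat := khatSLC n t α v σ' with hkh
  have hKH : khat = KHv n t α A v := sortsSub_khat hss hinjA hAc
  have hk0 : khat ≠ 0 := by
    intro h
    exact hne (by rw [rejSet, if_pos h])
  have hk1 : 1 ≤ khat := Nat.one_le_iff_ne_zero.mpr hk0
  have hkt : khat ≤ t := by rw [hKH]; exact KHv_le n t α A v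
  have hkI : khat ∈ Finset.Icc 1 A.card := by rw [hAc]; exact Finset.mem_Icc.mpr ⟨hk1, hkt⟩
  set i := σ' khat with hi
  have hiA : i ∈ A := by
    have := hss.2.1.mapsTo (by exact_mod_cast hkI)
    exact_mod_cast this
  have him : i ∈ Finset.Icc 1 m := hA hiA
  have hrkA : rk A (tf n v) i = khat := sortsSub_rk hss hinjA khat hkI
  have hrej : rejSet n m v σ' khat
      = (Finset.Icc 1 m).filter (fun i' => tf n v i ≤ tf n v i') := by
    rw [rejSet, if_neg hk0]; rfl
  have hcard : (rejSet n m v σ' khat).card = rk (Finset.Icc 1 m) (tf n v) i := by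
    rw [hrej, rk]
  have hσc : σ (rejSet n m v σ' khat).card = i := by
    rw [hcard]; exact sortsTest_inv hst hinjm him
  refine ⟨i, hiA, ?_, ?_⟩
  · rwa [hσc] at hH
  · exact ⟨by rw [← hKH]; exact hk1, by rw [← hKH]; exact hrkA⟩

/-! ### Stage D: measurability -/

lemma measurable_card_filter (g : ℕ → ℕ) (h : ℕ → ℕ) (B : Finset ℕ) :
    Measurable (fun v : ℕ → ℝ => (B.filter (fun l => v (g l) ≤ v (h l))).card) := by
  have : (fun v : ℕ → ℝ => (B.filter (fun l => v (g l) ≤ v (h l))).card)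
      = fun v => ∑ l ∈ B, if v (g l) ≤ v (h l) then 1 else 0 := by
    funext v
    rw [Finset.card_filter]
  rw [this]
  apply Finset.measurable_sum
  intro l _
  exact Measurable.ite (measurableSet_le (measurable_pi_apply _) (measurable_pi_apply _))
    measurable_const measurable_const

lemma measurable_rk (n : ℕ) (A : Finset ℕ) (j : ℕ) :
    Measurable (fun v : ℕ → ℝ => rk A (tf n v) j) :=
  measurable_card_filter (fun _ => n + j) (fun l => n + l) A

lemma measurable_pval (n i : ℕ) : Measurable (fun v : ℕ → ℝ => pval n v i) := by
  unfold pval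
  apply Measurable.div _ measurable_const
  apply Measurable.add measurable_const
  exact measurable_from_top.comp
    (measurable_card_filter (fun _ => n + i) (fun l => l) (Finset.Icc 1 n))

lemma measurable_POv (n : ℕ) (A : Finset ℕ) (k : ℕ) :
    Measurable (fun v : ℕ → ℝ => POv n A v k) := by
  unfold POv
  apply Finset.measurable_sum
  intro j _
  apply Measurable.ite _ (measurable_pval n j) measurable_const
  exact (measurable_rk n A j) (measurableSet_singleton k)

lemma maxArgmin_eq_iff (m : ℕ) (f : ℕ → ℝ) (k : ℕ) :
    maxArgmin m f = k ↔
      ((k ≤ m ∧ ∀ k' ≤ m, f k ≤ f k') ∧ ∀ k' ≤ m, k < k' → ¬(∀ k'' ≤ m, f k' ≤ f k'')) := by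
  constructor
  · rintro rfl
    refine ⟨maxArgmin_mem m f, fun k' hk' hlt hmin => ?_⟩
    exact absurd (le_maxArgmin m f k' hk' hmin) (not_le.mpr hlt)
  · rintro ⟨⟨hk, hmin⟩, hmax⟩
    have h1 : k ≤ maxArgmin m f := le_maxArgmin m f k hk hmin
    rcases eq_or_lt_of_le h1 with heq | hlt
    · exact heq.symm
    · exact absurd ((maxArgmin_mem m f).2) (hmax _ (maxArgmin_mem m f).1 hlt)

lemma measurable_KHv (n t : ℕ) (α : ℝ) (A : Finset ℕ) :
    Measurable (fun v : ℕ → ℝ => KHv n t α A v) := by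
  set F : (ℕ → ℝ) → ℕ → ℝ := fun v k =>
    (if k = 0 then (0:ℝ) else POv n A v k) - k * max (α / t - 1 / (n + 1)) 0 with hFdef
  have hF : ∀ k : ℕ, Measurable (fun v : ℕ → ℝ => F v k) := by
    intro k
    apply Measurable.sub _ measurable_const
    rcases eq_or_ne k 0 with rfl | hk
    · simp only [if_pos rfl]; exact measurable_const
    · simp only [if_neg hk]; exact measurable_POv n A k
  have hle : ∀ k1 k2 : ℕ, MeasurableSet {v : ℕ → ℝ | F v k1 ≤ F v k2} :=
    fun k1 k2 => measurableSet_le (hF k1) (hF k2)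
  apply measurable_to_countable'
  intro k
  by_cases hkt : k ≤ t
  · have : (fun v : ℕ → ℝ => KHv n t α A v) ⁻¹' {k} =
        (⋂ (k' : ℕ), ⋂ (_ : k' ≤ t), {v : ℕ → ℝ | F v k ≤ F v k'}) ∩
        (⋂ (k' : ℕ), ⋂ (_ : k' ≤ t), ⋂ (_ : k < k'),
          (⋃ (k'' : ℕ), ⋃ (_ : k'' ≤ t), {v : ℕ → ℝ | F v k' ≤ F v k''}ᶜ)) := by
      ext v
      simp only [Set.mem_preimage, Set.mem_singleton_iff, Set.mem_inter_iff,
        Set.mem_iInter, Set.mem_iUnion, Set.mem_compl_iff, Set.mem_setOf_eq]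
      rw [KHv, maxArgmin_eq_iff]
      constructor
      · rintro ⟨⟨-, hmin⟩, hmax⟩
        refine ⟨hmin, fun k' hk' hlt => ?_⟩
        have := hmax k' hk' hlt
        push_neg at this
        obtain ⟨k'', hk'', hlt'⟩ := this
        exact ⟨k'', hk'', not_le.mpr hlt'⟩
      · rintro ⟨hmin, hmax⟩
        refine ⟨⟨hkt, hmin⟩, fun k' hk' hlt hall => ?_⟩
        obtain ⟨k'', hk'', hnle⟩ := hmax k' hk' hlt
        exact hnle (hall k'' hk'')
    rw [this]
    apply MeasurableSet.inter
    · exact MeasurableSet.iInter fun k' => MeasurableSet.iInter fun _ => hle k k'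
    · exact MeasurableSet.iInter fun k' => MeasurableSet.iInter fun _ =>
        MeasurableSet.iInter fun _ => MeasurableSet.iUnion fun k'' =>
          MeasurableSet.iUnion fun _ => (hle k' k'').compl
  · have : (fun v : ℕ → ℝ => KHv n t α A v) ⁻¹' {k} = ∅ := by
      ext v
      simp only [Set.mem_preimage, Set.mem_singleton_iff, Set.mem_empty_iff_false,
        iff_false]
      intro h
      exact hkt (h ▸ KHv_le n t α A v)
    rw [this]
    exact MeasurableSet.empty

lemma measurable_Bev (n t : ℕ) (α : ℝ) (A : Finset ℕ) (i : ℕ) :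
    MeasurableSet (Bev n t α A i) := by
  have : Bev n t α A i = ⋃ k : ℕ, ⋃ (_ : 1 ≤ k),
      ((fun v : ℕ → ℝ => KHv n t α A v) ⁻¹' {k}
        ∩ (fun v : ℕ → ℝ => rk A (tf n v) i) ⁻¹' {k}) := by
    ext v
    simp only [Bev, Set.mem_setOf_eq, Set.mem_iUnion, Set.mem_inter_iff,
      Set.mem_preimage, Set.mem_singleton_iff]
    constructor
    · rintro ⟨h1, h2⟩
      exact ⟨KHv n t α A v, h1, rfl, h2⟩
    · rintro ⟨k, hk, h1, h2⟩
      exact ⟨by rw [h1]; exact hk, by rw [h2, h1]⟩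
  rw [this]
  apply MeasurableSet.iUnion; intro k
  apply MeasurableSet.iUnion; intro _
  exact ((measurable_KHv n t α A) (measurableSet_singleton k)).inter
    ((measurable_rk n A i) (measurableSet_singleton k))

/-! ### Stage E: the counting lemma -/

lemma class_bound {G : Finset ℕ} {K Q : ℕ → ℕ} {k : ℕ}
    (hne : (G.filter (fun a => K a = k)).Nonempty)
    (hpos : ∀ a ∈ G, 1 ≤ a)
    (hlow : ∀ a ∈ G, 2 ≤ K a → Q (K a - 1) ≤ a) :
    ((G.filter (fun a => K a = k)).card : ℝ)
      ≤ ((G.filter (fun a => K a = k)).max' hne : ℝ)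
        - (if 2 ≤ k then (Q (k-1) : ℝ) - 1 else 0) := by
  set cls := G.filter (fun a => K a = k) with hcls
  set amax := cls.max' hne with hamax
  set lb : ℕ := if 2 ≤ k then Q (k-1) else 1 with hlb
  have hmem : ∀ a ∈ cls, lb ≤ a ∧ a ≤ amax := by
    intro a ha
    refine ⟨?_, Finset.le_max' _ _ ha⟩
    rcases Finset.mem_filter.mp ha with ⟨haG, haK⟩
    rw [hlb]
    by_cases h2 : 2 ≤ k
    · rw [if_pos h2]
      have := hlow a haG (by omega)
      rwa [haK] at this
    · rw [if_neg h2]; exact hpos a haG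
  have hsub : cls ⊆ Finset.Icc lb amax := fun a ha =>
    Finset.mem_Icc.mpr (hmem a ha)
  have hcard : cls.card ≤ amax + 1 - lb := by
    have := Finset.card_le_card hsub
    rwa [Nat.card_Icc] at this
  have hlbamax : lb ≤ amax := (hmem amax (cls.max'_mem hne)).1
  have : (cls.card : ℝ) ≤ (amax : ℝ) + 1 - lb := by
    have h1 : ((amax + 1 - lb : ℕ) : ℝ) = (amax : ℝ) + 1 - lb := by
      rw [Nat.cast_sub (by omega)]; push_cast; ring
    calc (cls.card : ℝ) ≤ ((amax + 1 - lb : ℕ) : ℝ) := by exact_mod_cast hcard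
      _ = _ := h1
  refine this.trans ?_
  rw [hlb]
  by_cases h2 : 2 ≤ k
  · rw [if_pos h2, if_pos h2]; ring_nf; exact le_refl _
  · rw [if_neg h2, if_neg h2]; push_cast; linarith

lemma count_core (t : ℕ) (C : ℝ) (hC : 0 < C) (Q : ℕ → ℕ)
    (G : Finset ℕ) (K : ℕ → ℕ)
    (hKmem : ∀ a ∈ G, 1 ≤ K a ∧ K a ≤ t)
    (hpos : ∀ a ∈ G, 1 ≤ a)
    (h0 : ∀ a ∈ G, (a:ℝ) ≤ K a * C)
    (hlow : ∀ a ∈ G, 2 ≤ K a → Q (K a - 1) ≤ a)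
    (hlt : ∀ a ∈ G, ∀ k', 1 ≤ k' → k' < K a →
      (a:ℝ) ≤ (Q k' : ℝ) + ((K a : ℝ) - k') * C)
    (hgt : ∀ a ∈ G, ∀ k', k' ≤ t → K a < k' →
      (a:ℝ) < (Q (k'-1) : ℝ) - 1 - ((k' : ℝ) - K a) * C) :
    (G.card : ℝ) ≤ C + 1 := by
  rcases G.eq_empty_or_nonempty with rfl | hGne
  · simp; linarith
  set Kcl := G.image K with hKcl
  have hKclne : Kcl.Nonempty := hGne.image K
  set kmin := Kcl.min' hKclne with hkmin
  set β : ℕ → ℝ := fun k => if 2 ≤ k then (Q (k-1) : ℝ) - 1 else 0 with hβ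
  have hclsne : ∀ k ∈ Kcl, (G.filter (fun a => K a = k)).Nonempty := by
    intro k hk
    obtain ⟨a, haG, haK⟩ := Finset.mem_image.mp hk
    exact ⟨a, Finset.mem_filter.mpr ⟨haG, haK⟩⟩
  -- main induction
  have main : ∀ k, ∀ hk : k ∈ Kcl,
      ((G.filter (fun a => K a ≤ k)).card : ℝ)
        ≤ ((G.filter (fun a => K a = k)).max' (hclsne k hk) : ℝ)
          - β kmin - ((k : ℝ) - kmin) * C := by
    intro k
    induction k using Nat.strong_induction_on with
    | _ k IH =>
      intro hk
      set Prev := Kcl.filter (fun k' => k' < k) with hPrev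
      have hkminle : kmin ≤ k := Finset.min'_le _ _ hk
      rcases Prev.eq_empty_or_nonempty with hPe | hPne
      · -- base case : k is the smallest active class
        have hkmineq : kmin = k := by
          rcases eq_or_lt_of_le hkminle with h | h
          · exact h
          · exfalso
            have : kmin ∈ Prev := Finset.mem_filter.mpr ⟨Kcl.min'_mem hKclne, h⟩
            rw [hPe] at this
            exact absurd this (Finset.notMem_empty _)
        have hfe : G.filter (fun a => K a ≤ k) = G.filter (fun a => K a = k) := by
          apply Finset.filter_congr
          intro a haG
          constructor
          · intro hle
            rcases eq_or_lt_of_le hle with h | h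
            · exact h
            · exfalso
              have : K a ∈ Prev := Finset.mem_filter.mpr
                ⟨Finset.mem_image.mpr ⟨a, haG, rfl⟩, h⟩
              rw [hPe] at this
              exact absurd this (Finset.notMem_empty _)
          · intro h; omega
        rw [hfe]
        have hcb := class_bound (hclsne k hk) hpos hlow
        have hβk : β k = if 2 ≤ k then ((Q (k-1)) : ℝ) - 1 else 0 := rfl
        have hβeq : β kmin = β k := by rw [hkmineq]
        have hkr : (kmin : ℝ) = (k : ℝ) := by exact_mod_cast hkmineq
        rw [hβeq, hβk, hkr]
        have hz : ((k:ℝ) - (k:ℝ)) * C = 0 := by ring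
        linarith [hcb]
      · -- inductive step
        set k'' := Prev.max' hPne with hk''
        have hk''mem : k'' ∈ Prev := Prev.max'_mem hPne
        have hk''Kcl : k'' ∈ Kcl := (Finset.mem_filter.mp hk''mem).1
        have hk''lt : k'' < k := (Finset.mem_filter.mp hk''mem).2
        have hIH := IH k'' hk''lt hk''Kcl
        -- split the filter
        have hsplit : G.filter (fun a => K a ≤ k)
            = (G.filter (fun a => K a ≤ k'')) ∪ (G.filter (fun a => K a = k)) := by
          ext a
          simp only [Finset.mem_union, Finset.mem_filter]
          constructor
          · rintro ⟨haG, hle⟩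
            rcases eq_or_lt_of_le hle with h | h
            · exact Or.inr ⟨haG, h⟩
            · left
              refine ⟨haG, ?_⟩
              have hmemP : K a ∈ Prev := Finset.mem_filter.mpr
                ⟨Finset.mem_image.mpr ⟨a, haG, rfl⟩, h⟩
              exact Finset.le_max' Prev (K a) hmemP
          · rintro (⟨haG, hle⟩ | ⟨haG, heq⟩)
            · exact ⟨haG, by omega⟩
            · exact ⟨haG, by omega⟩
        have hdisj : Disjoint (G.filter (fun a => K a ≤ k''))
            (G.filter (fun a => K a = k)) := by
          rw [Finset.disjoint_left]
          intro a ha1 ha2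
          have h1 := (Finset.mem_filter.mp ha1).2
          have h2 := (Finset.mem_filter.mp ha2).2
          omega
        have hcards : ((G.filter (fun a => K a ≤ k)).card : ℝ)
            = ((G.filter (fun a => K a ≤ k'')).card : ℝ)
              + ((G.filter (fun a => K a = k)).card : ℝ) := by
          rw [hsplit, Finset.card_union_of_disjoint hdisj]
          push_cast; ring
        -- gap bound : the top of class k'' is well below the bottom fence of class k
        have hk2 : 2 ≤ k := by
          have h1 := (hKmem _ (Finset.mem_filter.mp
            ((G.filter (fun a => K a = k'')).max'_mem (hclsne k'' hk''Kcl))).1).1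
          have : 1 ≤ k'' := by
            have := (Finset.mem_filter.mp
              ((G.filter (fun a => K a = k'')).max'_mem (hclsne k'' hk''Kcl))).2
            omega
          omega
        have hgap : ((G.filter (fun a => K a = k'')).max' (hclsne k'' hk''Kcl) : ℝ)
            < β k - ((k : ℝ) - k'') * C := by
          set a2 := (G.filter (fun a => K a = k'')).max' (hclsne k'' hk''Kcl) with ha2
          have ha2mem := (G.filter (fun a => K a = k'')).max'_mem (hclsne k'' hk''Kcl)
          have ha2G := (Finset.mem_filter.mp ha2mem).1
          have ha2K : K a2 = k'' := (Finset.mem_filter.mp ha2mem).2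
          have hkt : k ≤ t := by
            obtain ⟨a, haG, haK⟩ := Finset.mem_image.mp hk
            have := (hKmem a haG).2
            omega
          have := hgt a2 ha2G k hkt (by omega)
          rw [ha2K] at this
          rw [hβ]
          simp only [if_pos hk2]
          exact this
        have hclsb := class_bound (hclsne k hk) hpos hlow
        rw [hcards]
        have hβk : (if 2 ≤ k then (Q (k-1) : ℝ) - 1 else 0) = β k := by rw [hβ]
        rw [hβk] at hclsb
        have : ((G.filter (fun a => K a ≤ k'')).card : ℝ)
            ≤ β k - ((k:ℝ) - k'') * C - β kmin - ((k'':ℝ) - kmin) * C := by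
          calc ((G.filter (fun a => K a ≤ k'')).card : ℝ)
              ≤ _ := hIH
            _ ≤ β k - ((k:ℝ) - k'') * C - β kmin - ((k'':ℝ) - kmin) * C := by
                have := hgap
                linarith
        have hkk'' : (kmin : ℝ) ≤ (k'' : ℝ) := by
          exact_mod_cast Finset.min'_le _ _ hk''Kcl
        nlinarith [this, hclsb]
  -- conclusion
  set kmax := Kcl.max' hKclne with hkmax
  have hkmaxKcl : kmax ∈ Kcl := Kcl.max'_mem hKclne
  have hall : G.filter (fun a => K a ≤ kmax) = G := by
    apply Finset.filter_true_of_mem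
    intro a haG
    exact Finset.le_max' _ _ (Finset.mem_image.mpr ⟨a, haG, rfl⟩)
  have hmain := main kmax hkmaxKcl
  rw [hall] at hmain
  set atop := (G.filter (fun a => K a = kmax)).max' (hclsne kmax hkmaxKcl) with hatop
  have hatopmem := (G.filter (fun a => K a = kmax)).max'_mem (hclsne kmax hkmaxKcl)
  have hatopG := (Finset.mem_filter.mp hatopmem).1
  have hatopK : K atop = kmax := (Finset.mem_filter.mp hatopmem).2
  have hkminmax : kmin ≤ kmax := Finset.min'_le _ _ hkmaxKcl
  by_cases h2 : 2 ≤ kmin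
  · -- use hlt at k' = kmin - 1
    have h1k : 1 ≤ kmin - 1 := by omega
    have hklt : kmin - 1 < K atop := by omega
    have := hlt atop hatopG (kmin - 1) h1k hklt
    rw [hatopK] at this
    have hβmin : β kmin = (Q (kmin - 1) : ℝ) - 1 := by rw [hβ]; simp [h2]
    have hcast : ((kmin : ℝ) - 1) = ((kmin - 1 : ℕ) : ℝ) := by
      rw [Nat.cast_sub (by omega)]; push_cast; ring
    have hup : (atop : ℝ) ≤ β kmin + 1 + ((kmax : ℝ) - kmin + 1) * C := by
      rw [hβmin]
      calc (atop : ℝ) ≤ (Q (kmin-1) : ℝ) + ((kmax : ℝ) - (kmin - 1 : ℕ)) * C := this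
        _ = (Q (kmin-1) : ℝ) - 1 + 1 + ((kmax : ℝ) - kmin + 1) * C := by
            rw [← hcast]; ring
    linarith [hmain, hup]
  · -- kmin = 1 : use h0
    have hkmin1 : kmin = 1 := by
      have : 1 ≤ kmin := by
        obtain ⟨a, haG, haK⟩ := Finset.mem_image.mp (Kcl.min'_mem hKclne)
        have := (hKmem a haG).1
        omega
      omega
    have hβmin : β kmin = 0 := by rw [hβ]; simp [hkmin1]
    have := h0 atop hatopG
    rw [hatopK] at this
    rw [hβmin, hkmin1] at hmain
    push_cast at hmain
    nlinarith [hmain, this, hC]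

/-! ### Stage F1: swap configuration analysis -/

def Dset (n i : ℕ) : Finset ℕ := Finset.Icc 1 n ∪ {n + i}

lemma mem_Dset {n i j : ℕ} : j ∈ Dset n i ↔ (j ∈ Finset.Icc 1 n ∨ j = n + i) := by
  rw [Dset, Finset.mem_union, Finset.mem_singleton]

lemma nplus_not_mem_Dset {n i l : ℕ} (hl : 1 ≤ l) (hli : l ≠ i) :
    n + l ∉ Dset n i := by
  rw [mem_Dset]
  rintro (h | h)
  · rcases Finset.mem_Icc.mp h with ⟨-, h2⟩; omega
  · omega

lemma Dset_card (n i : ℕ) (hi : 1 ≤ i) : (Dset n i).card = n + 1 := by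
  rw [Dset, Finset.card_union_of_disjoint, Nat.card_Icc, Finset.card_singleton]
  · omega
  · rw [Finset.disjoint_singleton_right]
    intro h
    rcases Finset.mem_Icc.mp h with ⟨-, h2⟩; omega

lemma Dset_subset {n m i : ℕ} (hi1 : 1 ≤ i) (hi2 : i ≤ m) :
    Dset n i ⊆ Finset.Icc 1 (n + m) := by
  intro j hj
  rcases mem_Dset.mp hj with h | rfl
  · rcases Finset.mem_Icc.mp h with ⟨h1, h2⟩
    exact Finset.mem_Icc.mpr ⟨h1, by omega⟩
  · exact Finset.mem_Icc.mpr ⟨by omega, by omega⟩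

/-- Counting calibration indices after the swap = counting `Dset.erase j`. -/
lemma cal_count {n i j : ℕ} (hi : 1 ≤ i) (hj : j ∈ Dset n i)
    (v : ℕ → ℝ) (P : ℝ → Prop) :
    ((Finset.Icc 1 n).filter (fun l => P (v (Equiv.swap (n+i) j l)))).card
      = (((Dset n i).erase j).filter (fun l => P (v l))).card := by
  have hne : ∀ l ∈ Finset.Icc 1 n, l ≠ n + i := by
    intro l hl
    rcases Finset.mem_Icc.mp hl with ⟨-, h2⟩; omega
  apply Finset.card_bij (fun l _ => Equiv.swap (n+i) j l)
  · intro l hl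
    rcases Finset.mem_filter.mp hl with ⟨hl1, hl2⟩
    rcases eq_or_ne l j with rfl | hlj
    · rw [Equiv.swap_apply_right] at hl2 ⊢
      refine Finset.mem_filter.mpr ⟨Finset.mem_erase.mpr ⟨?_, ?_⟩, hl2⟩
      · exact fun h => hne l hl1 h.symm
      · rw [mem_Dset]; right; rfl
    · rw [Equiv.swap_apply_of_ne_of_ne (hne l hl1) hlj] at hl2 ⊢
      refine Finset.mem_filter.mpr ⟨Finset.mem_erase.mpr ⟨hlj, ?_⟩, hl2⟩
      rw [mem_Dset]; left; exact hl1
  · intro l hl l' hl' heq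
    exact (Equiv.swap (n+i) j).injective heq
  · intro y hy
    rcases Finset.mem_filter.mp hy with ⟨hy1, hy2⟩
    rcases Finset.mem_erase.mp hy1 with ⟨hyj, hyD⟩
    rcases eq_or_ne y (n+i) with rfl | hyni
    · -- y = n+i, preimage is j, and j must be a calibration index
      have hjcal : j ∈ Finset.Icc 1 n := by
        rcases mem_Dset.mp hj with h | rfl
        · exact h
        · exact absurd rfl hyj
      refine ⟨j, Finset.mem_filter.mpr ⟨hjcal, ?_⟩, Equiv.swap_apply_right _ _⟩
      rw [Equiv.swap_apply_right]; exact hy2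
    · have hycal : y ∈ Finset.Icc 1 n := by
        rcases mem_Dset.mp hyD with h | h
        · exact h
        · exact absurd h hyni
      refine ⟨y, Finset.mem_filter.mpr ⟨hycal, ?_⟩, Equiv.swap_apply_of_ne_of_ne hyni hyj⟩
      rw [Equiv.swap_apply_of_ne_of_ne hyni hyj]; exact hy2

/-- p-value of the null point `i` after the swap. -/
lemma pval_swap_self {n i j : ℕ} (hi : 1 ≤ i) (hj : j ∈ Dset n i) (v : ℕ → ℝ) :
    pval n (v ∘ Equiv.swap (n+i) j) i = (rk (Dset n i) v j : ℝ) / (n + 1) := by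
  have hswap : (v ∘ Equiv.swap (n+i) j) (n + i) = v j := by
    simp [Equiv.swap_apply_left]
  rw [pval]
  have hcount : ((Finset.Icc 1 n).filter
      (fun l => (v ∘ Equiv.swap (n+i) j) (n+i) ≤ (v ∘ Equiv.swap (n+i) j) l)).card
      = (((Dset n i).erase j).filter (fun l => v j ≤ v l)).card := by
    have hpred : (Finset.Icc 1 n).filter
        (fun l => (v ∘ Equiv.swap (n+i) j) (n+i) ≤ (v ∘ Equiv.swap (n+i) j) l)
        = (Finset.Icc 1 n).filter (fun l => v j ≤ v (Equiv.swap (n+i) j l)) :=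
      Finset.filter_congr (fun l _ => by rw [hswap]; exact Iff.rfl)
    rw [hpred]
    exact cal_count hi hj v (fun y => v j ≤ y)
  have herase : (((Dset n i).erase j).filter (fun l => v j ≤ v l)).card
      = rk (Dset n i) v j - 1 := by
    rw [rk, Finset.filter_erase, Finset.card_erase_of_mem]
    exact Finset.mem_filter.mpr ⟨hj, le_refl _⟩
  have h1 : 1 ≤ rk (Dset n i) v j := (Finset.mem_Icc.mp (rk_mem_Icc hj)).1
  rw [hcount, herase]
  rw [Nat.cast_sub h1]
  push_cast
  ring

/-- p-value of a non-null test point `i'` after the swap. -/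
lemma pval_swap_other {n m i j i' : ℕ} (hi1 : 1 ≤ i) (hi2 : i ≤ m)
    (hj : j ∈ Dset n i) (hi'1 : 1 ≤ i') (hi'2 : i' ≤ m) (hi'i : i' ≠ i) (v : ℕ → ℝ) :
    pval n (v ∘ Equiv.swap (n+i) j) i'
      = ((1 + rk (Dset n i) v (n + i') : ℝ)
          - (if v (n + i') ≤ v j then 1 else 0)) / (n + 1) := by
  have hni' : n + i' ∉ Dset n i := nplus_not_mem_Dset hi'1 hi'i
  have hswap : (v ∘ Equiv.swap (n+i) j) (n + i') = v (n + i') := by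
    have h1 : n + i' ≠ n + i := by omega
    have h2 : n + i' ≠ j := fun h => hni' (h ▸ hj)
    simp only [Function.comp_apply, Equiv.swap_apply_of_ne_of_ne h1 h2]
  rw [pval]
  have hcount : ((Finset.Icc 1 n).filter
      (fun l => (v ∘ Equiv.swap (n+i) j) (n+i') ≤ (v ∘ Equiv.swap (n+i) j) l)).card
      = (((Dset n i).erase j).filter (fun l => v (n+i') ≤ v l)).card := by
    have hpred : (Finset.Icc 1 n).filter
        (fun l => (v ∘ Equiv.swap (n+i) j) (n+i') ≤ (v ∘ Equiv.swap (n+i) j) l)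
        = (Finset.Icc 1 n).filter (fun l => v (n+i') ≤ v (Equiv.swap (n+i) j l)) :=
      Finset.filter_congr (fun l _ => by rw [hswap]; exact Iff.rfl)
    rw [hpred]
    exact cal_count hi1 hj v (fun y => v (n+i') ≤ y)
  have herase : ((((Dset n i).erase j).filter (fun l => v (n+i') ≤ v l)).card : ℝ)
      = (rk (Dset n i) v (n+i') : ℝ) - (if v (n + i') ≤ v j then 1 else 0) := by
    rw [Finset.filter_erase]
    by_cases hjf : j ∈ (Dset n i).filter (fun l => v (n+i') ≤ v l)
    · rw [Finset.card_erase_of_mem hjf, if_pos (Finset.mem_filter.mp hjf).2]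
      have h1 : 1 ≤ ((Dset n i).filter (fun l => v (n+i') ≤ v l)).card :=
        Finset.card_pos.mpr ⟨j, hjf⟩
      rw [rk, Nat.cast_sub h1]
      push_cast; ring
    · rw [Finset.erase_eq_of_notMem hjf, if_neg]
      · rw [rk]; ring
      · intro h
        exact hjf (Finset.mem_filter.mpr ⟨hj, h⟩)
  rw [hcount, herase]
  ring

/-! ### Stage F2: ranks after the swap -/

lemma tf_swap_eq {n m i j : ℕ} {A : Finset ℕ} (hA : A ⊆ Finset.Icc 1 m)
    (hj : j ∈ Dset n i) (v : ℕ → ℝ) {l : ℕ} (hl : l ∈ A) (hli : l ≠ i) :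
    tf n (v ∘ Equiv.swap (n+i) j) l = tf n v l := by
  have hl1 : 1 ≤ l := (Finset.mem_Icc.mp (hA hl)).1
  have h1 : n + l ≠ n + i := by omega
  have h2 : n + l ≠ j := fun h => (nplus_not_mem_Dset hl1 hli) (h ▸ hj)
  simp only [tf, Function.comp_apply, Equiv.swap_apply_of_ne_of_ne h1 h2]

lemma tf_swap_self {n i j : ℕ} (v : ℕ → ℝ) :
    tf n (v ∘ Equiv.swap (n+i) j) i = v j := by
  simp [tf, Equiv.swap_apply_left]

lemma card_filter_split {A : Finset ℕ} {i : ℕ} (hiA : i ∈ A) (p : ℕ → Prop) :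
    (A.filter p).card = ((A.erase i).filter p).card + (if p i then 1 else 0) := by
  conv_lhs => rw [← Finset.insert_erase hiA]
  rw [Finset.filter_insert]
  by_cases h : p i
  · rw [if_pos h, if_pos h, Finset.card_insert_of_notMem
      (fun hc => (Finset.mem_erase.mp (Finset.mem_of_mem_filter i hc)).1 rfl)]
  · rw [if_neg h, if_neg h, add_zero]

lemma rk_swap_null {n m i j : ℕ} {A : Finset ℕ} (hA : A ⊆ Finset.Icc 1 m)
    (hiA : i ∈ A) (hj : j ∈ Dset n i) (v : ℕ → ℝ) :
    rk A (tf n (v ∘ Equiv.swap (n+i) j)) i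
      = 1 + ((A.erase i).filter (fun l => v j ≤ v (n+l))).card := by
  rw [rk, card_filter_split hiA, if_pos (le_refl _), Nat.add_comm]
  have hfe : (A.erase i).filter (fun l => tf n (v ∘ Equiv.swap (n+i) j) i
        ≤ tf n (v ∘ Equiv.swap (n+i) j) l)
      = (A.erase i).filter (fun l => v j ≤ v (n+l)) := by
    apply Finset.filter_congr
    intro l hl
    rcases Finset.mem_erase.mp hl with ⟨hli, hlA⟩
    rw [tf_swap_eq hA hj v hlA hli, tf_swap_self v]
    exact Iff.rfl
  rw [hfe]

lemma rk_swap_other {n m i j i' : ℕ} {A : Finset ℕ} (hA : A ⊆ Finset.Icc 1 m)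
    (hiA : i ∈ A) (hj : j ∈ Dset n i) (v : ℕ → ℝ) (hi' : i' ∈ A.erase i) :
    rk A (tf n (v ∘ Equiv.swap (n+i) j)) i'
      = rk (A.erase i) (tf n v) i' + (if v (n+i') ≤ v j then 1 else 0) := by
  rcases Finset.mem_erase.mp hi' with ⟨hi'i, hi'A⟩
  have hTi' : tf n (v ∘ Equiv.swap (n+i) j) i' = v (n + i') :=
    tf_swap_eq hA hj v hi'A hi'i
  have hTi : tf n (v ∘ Equiv.swap (n+i) j) i = v j := tf_swap_self v
  rw [rk, card_filter_split hiA]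
  have hfe : (A.erase i).filter
      (fun l => tf n (v ∘ Equiv.swap (n+i) j) i' ≤ tf n (v ∘ Equiv.swap (n+i) j) l)
      = (A.erase i).filter (fun l => tf n v i' ≤ tf n v l) := by
    apply Finset.filter_congr
    intro l hl
    rcases Finset.mem_erase.mp hl with ⟨hli, hlA⟩
    rw [tf_swap_eq hA hj v hlA hli, hTi']
    exact Iff.rfl
  rw [hfe, rk]
  congr 1
  rw [hTi', hTi]

/-- (F7): being below the swapped-in value means a strictly larger `Dset`-rank. -/
lemma below_iff_q {n m i j i' : ℕ} {A : Finset ℕ} (hA : A ⊆ Finset.Icc 1 m)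
    (hiA : i ∈ A) (hj : j ∈ Dset n i) {v : ℕ → ℝ}
    (hv : Set.InjOn v (Finset.Icc 1 (n+m))) (hi' : i' ∈ A.erase i) :
    (v (n+i') ≤ v j ↔ rk (Dset n i) v j < 1 + rk (Dset n i) v (n+i')) := by
  rcases Finset.mem_erase.mp hi' with ⟨hi'i, hi'A⟩
  rcases Finset.mem_Icc.mp (hA hi'A) with ⟨hi'1, hi'2⟩
  rcases Finset.mem_Icc.mp (hA hiA) with ⟨hi1, hi2⟩
  have hDsub := Dset_subset (n := n) hi1 hi2
  have hni'm : n + i' ∈ Finset.Icc 1 (n+m) := Finset.mem_Icc.mpr ⟨by omega, by omega⟩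
  have hvne : v (n+i') ≠ v j := by
    intro h
    have := hv hni'm (hDsub hj) h
    exact (nplus_not_mem_Dset hi'1 hi'i) (this ▸ hj)
  constructor
  · intro hle
    have hlt : v (n+i') < v j := lt_of_le_of_ne hle hvne
    have hsub : (Dset n i).filter (fun l => v j ≤ v l)
        ⊆ (Dset n i).filter (fun l => v (n+i') ≤ v l) := by
      intro l hl
      rcases Finset.mem_filter.mp hl with ⟨h1, h2⟩
      exact Finset.mem_filter.mpr ⟨h1, (le_of_lt hlt).trans h2⟩
    have := Finset.card_le_card hsub
    rw [rk, rk]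
    omega
  · intro hlt
    by_contra hc
    have hgt : v j < v (n+i') := lt_of_le_of_ne (le_of_not_ge hc) (fun h => hvne h.symm)
    have hsub : (Dset n i).filter (fun l => v (n+i') ≤ v l)
        ⊆ ((Dset n i).filter (fun l => v j ≤ v l)).erase j := by
      intro l hl
      rcases Finset.mem_filter.mp hl with ⟨h1, h2⟩
      refine Finset.mem_erase.mpr ⟨?_, Finset.mem_filter.mpr ⟨h1, (le_of_lt hgt).trans h2⟩⟩
      intro hlj
      subst hlj
      exact absurd h2 (not_le.mpr hgt)
    have hjmem : j ∈ (Dset n i).filter (fun l => v j ≤ v l) :=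
      Finset.mem_filter.mpr ⟨hj, le_refl _⟩
    have hcard := Finset.card_le_card hsub
    rw [Finset.card_erase_of_mem hjmem] at hcard
    rw [rk, rk] at hlt
    have h1 : 1 ≤ ((Dset n i).filter (fun l => v j ≤ v l)).card :=
      Finset.card_pos.mpr ⟨j, Finset.mem_filter.mpr ⟨hj, le_refl _⟩⟩
    omega

/-- (U): being above the swapped-in value is equivalent to having a small rank
among the other test points of `A`. -/
lemma above_iff_rank {n m i j i' : ℕ} {A : Finset ℕ} (hA : A ⊆ Finset.Icc 1 m)
    (hj : j ∈ Dset n i) {v : ℕ → ℝ}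
    (hv : Set.InjOn v (Finset.Icc 1 (n+m))) (hiA : i ∈ A) (hi' : i' ∈ A.erase i) :
    (v j ≤ v (n+i') ↔ rk (A.erase i) (tf n v) i'
      ≤ ((A.erase i).filter (fun l => v j ≤ v (n+l))).card) := by
  rcases Finset.mem_erase.mp hi' with ⟨hi'i, hi'A⟩
  rcases Finset.mem_Icc.mp (hA hi'A) with ⟨hi'1, hi'2⟩
  constructor
  · intro hle
    apply Finset.card_le_card
    intro l hl
    rcases Finset.mem_filter.mp hl with ⟨h1, h2⟩
    exact Finset.mem_filter.mpr ⟨h1, hle.trans h2⟩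
  · intro hrk
    by_contra hc
    have hgt : v (n+i') < v j := not_le.mp hc
    have hsub : insert i' ((A.erase i).filter (fun l => v j ≤ v (n+l)))
        ⊆ (A.erase i).filter (fun l => tf n v i' ≤ tf n v l) := by
      intro l hl
      rcases Finset.mem_insert.mp hl with rfl | hl
      · exact Finset.mem_filter.mpr ⟨hi', le_refl _⟩
      · rcases Finset.mem_filter.mp hl with ⟨h1, h2⟩
        exact Finset.mem_filter.mpr ⟨h1, le_of_lt (lt_of_lt_of_le hgt h2)⟩
    have hni : i' ∉ (A.erase i).filter (fun l => v j ≤ v (n+l)) := by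
      intro h
      exact absurd (Finset.mem_filter.mp h).2 hc
    have := Finset.card_le_card hsub
    rw [Finset.card_insert_of_notMem hni] at this
    rw [rk] at hrk
    omega

/-- `Dset`-ranks of test points are monotone w.r.t. ranks in `A.erase i`. -/
lemma q_mono {n m i i₁ i₂ : ℕ} {A : Finset ℕ} (hA : A ⊆ Finset.Icc 1 m)
    {v : ℕ → ℝ} (hv : Set.InjOn v (Finset.Icc 1 (n+m)))
    (hinj : Set.InjOn (tf n v) (A.erase i))
    (h₁ : i₁ ∈ A.erase i) (h₂ : i₂ ∈ A.erase i)
    (hle : rk (A.erase i) (tf n v) i₁ ≤ rk (A.erase i) (tf n v) i₂) :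
    rk (Dset n i) v (n + i₁) ≤ rk (Dset n i) v (n + i₂) := by
  have hscore : tf n v i₂ ≤ tf n v i₁ :=
    (rk_le_iff hinj (by exact_mod_cast h₂) (by exact_mod_cast h₁)).mp hle
  apply Finset.card_le_card
  intro l hl
  rcases Finset.mem_filter.mp hl with ⟨h1, h2⟩
  exact Finset.mem_filter.mpr ⟨h1, hscore.trans h2⟩

/-! ### Stage F3: ordered p-values in the swapped configuration -/

def Qfun (n i : ℕ) (A : Finset ℕ) (v : ℕ → ℝ) (l : ℕ) : ℕ :=
  ∑ i' ∈ A.erase i, if rk (A.erase i) (tf n v) i' = l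
    then (1 + rk (Dset n i) v (n + i')) else 0

lemma injOn_tf {n m : ℕ} {A : Finset ℕ} (hA : A ⊆ Finset.Icc 1 m)
    {v : ℕ → ℝ} (hv : Set.InjOn v (Finset.Icc 1 (n+m))) :
    Set.InjOn (tf n v) A := by
  intro l hl l' hl' heq
  have h1 := Finset.mem_Icc.mp (hA (by exact_mod_cast hl))
  have h2 := Finset.mem_Icc.mp (hA (by exact_mod_cast hl'))
  have := hv (Finset.mem_Icc.mpr ⟨by omega, by omega⟩ : n + l ∈ Finset.Icc 1 (n+m))
    (Finset.mem_Icc.mpr ⟨by omega, by omega⟩ : n + l' ∈ Finset.Icc 1 (n+m)) heq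
  omega

lemma injOn_tfw {n m i j : ℕ} {A : Finset ℕ} (hA : A ⊆ Finset.Icc 1 m)
    (hiA : i ∈ A) (hj : j ∈ Dset n i) {v : ℕ → ℝ}
    (hv : Set.InjOn v (Finset.Icc 1 (n+m))) :
    Set.InjOn (tf n (v ∘ Equiv.swap (n+i) j)) A := by
  rcases Finset.mem_Icc.mp (hA hiA) with ⟨hi1, hi2⟩
  have hDsub := Dset_subset (n := n) hi1 hi2
  have hmem : ∀ l ∈ A, Equiv.swap (n+i) j (n + l) ∈ (Finset.Icc 1 (n+m) : Finset ℕ) := by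
    intro l hl
    rcases Finset.mem_Icc.mp (hA hl) with ⟨hl1, hl2⟩
    rcases eq_or_ne (n+l) (n+i) with h | h
    · rw [h, Equiv.swap_apply_left]; exact hDsub hj
    · rcases eq_or_ne (n+l) j with h' | h'
      · rw [h', Equiv.swap_apply_right]
        exact Finset.mem_Icc.mpr ⟨by omega, by omega⟩
      · rw [Equiv.swap_apply_of_ne_of_ne h h']
        exact Finset.mem_Icc.mpr ⟨by omega, by omega⟩
  intro l hl l' hl' heq
  have hlA : l ∈ A := by exact_mod_cast hl
  have hl'A : l' ∈ A := by exact_mod_cast hl'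
  have := hv (by exact_mod_cast hmem l hlA) (by exact_mod_cast hmem l' hl'A) heq
  have := (Equiv.swap (n+i) j).injective this
  omega

lemma vne_helper {n m i j i' : ℕ} {A : Finset ℕ} (hA : A ⊆ Finset.Icc 1 m)
    (hiA : i ∈ A) (hj : j ∈ Dset n i) {v : ℕ → ℝ}
    (hv : Set.InjOn v (Finset.Icc 1 (n+m))) (hi' : i' ∈ A.erase i) :
    v (n + i') ≠ v j := by
  rcases Finset.mem_erase.mp hi' with ⟨hi'i, hi'A⟩
  rcases Finset.mem_Icc.mp (hA hi'A) with ⟨hi'1, hi'2⟩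
  rcases Finset.mem_Icc.mp (hA hiA) with ⟨hi1, hi2⟩
  have hDsub := Dset_subset (n := n) hi1 hi2
  intro h
  have := hv (Finset.mem_Icc.mpr ⟨by omega, by omega⟩ : n + i' ∈ Finset.Icc 1 (n+m))
    (hDsub hj) h
  exact (nplus_not_mem_Dset hi'1 hi'i) (this ▸ hj)

lemma Qfun_eq {n m i i' l : ℕ} {A : Finset ℕ} (hA : A ⊆ Finset.Icc 1 m)
    {v : ℕ → ℝ} (hv : Set.InjOn v (Finset.Icc 1 (n+m)))
    (hi' : i' ∈ A.erase i) (hl : rk (A.erase i) (tf n v) i' = l) :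
    Qfun n i A v l = 1 + rk (Dset n i) v (n + i') := by
  have hinj : Set.InjOn (tf n v) (A.erase i) :=
    (injOn_tf hA hv).mono (by exact_mod_cast Finset.erase_subset i A)
  rw [Qfun, Finset.sum_eq_single_of_mem i' hi']
  · rw [if_pos hl]
  · intro b hb hne
    rw [if_neg]
    intro hrb
    exact hne (rk_injOn hinj (by exact_mod_cast hb) (by exact_mod_cast hi')
      (by rw [hrb, hl]))

/-- value of `POv` at the null's rank. -/
lemma PO_self {n m t i j : ℕ} {A : Finset ℕ} (hA : A ⊆ Finset.Icc 1 m)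
    (hAc : A.card = t) (hiA : i ∈ A) (hj : j ∈ Dset n i) {v : ℕ → ℝ}
    (hv : Set.InjOn v (Finset.Icc 1 (n+m))) :
    POv n A (v ∘ Equiv.swap (n+i) j)
        (rk A (tf n (v ∘ Equiv.swap (n+i) j)) i)
      = (rk (Dset n i) v j : ℝ) / (n+1) := by
  rcases Finset.mem_Icc.mp (hA hiA) with ⟨hi1, hi2⟩
  have hinjw := injOn_tfw hA hiA hj hv
  rw [POv, Finset.sum_eq_single_of_mem i hiA]
  · rw [if_pos rfl]
    exact pval_swap_self hi1 hj v
  · intro b hb hne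
    rw [if_neg]
    intro hrb
    exact hne (rk_injOn hinjw (by exact_mod_cast hb) (by exact_mod_cast hiA) hrb)

/-- value of `POv` strictly above the null's rank (in score order). -/
lemma PO_left {n m t i j k : ℕ} {A : Finset ℕ} (hA : A ⊆ Finset.Icc 1 m)
    (hAc : A.card = t) (hiA : i ∈ A) (hj : j ∈ Dset n i) {v : ℕ → ℝ}
    (hv : Set.InjOn v (Finset.Icc 1 (n+m)))
    (hk1 : 1 ≤ k) (hkR : k < rk A (tf n (v ∘ Equiv.swap (n+i) j)) i) :
    POv n A (v ∘ Equiv.swap (n+i) j) k = (Qfun n i A v k : ℝ) / (n+1) := by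
  rcases Finset.mem_Icc.mp (hA hiA) with ⟨hi1, hi2⟩
  have hinjw := injOn_tfw hA hiA hj hv
  have hinje : Set.InjOn (tf n v) (A.erase i) :=
    (injOn_tf hA hv).mono (by exact_mod_cast Finset.erase_subset i A)
  have hR := rk_swap_null hA hiA hj v
  have hUcard : k ≤ ((A.erase i).filter (fun l => v j ≤ v (n+l))).card := by omega
  have hkt : k ∈ Finset.Icc 1 (A.erase i).card := by
    have h1 : ((A.erase i).filter (fun l => v j ≤ v (n+l))).card ≤ (A.erase i).card :=
      Finset.card_le_card (Finset.filter_subset _ _)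
    exact Finset.mem_Icc.mpr ⟨hk1, by omega⟩
  obtain ⟨i', hi'mem, hi'rk⟩ := rk_surj hinje hkt
  rcases Finset.mem_erase.mp hi'mem with ⟨hi'i, hi'A⟩
  rcases Finset.mem_Icc.mp (hA hi'A) with ⟨hi'1, hi'2⟩
  -- i' is above the swapped-in value
  have habove : v j ≤ v (n + i') := by
    rw [above_iff_rank hA hj hv hiA hi'mem, hi'rk]
    exact hUcard
  have hnotbelow : ¬ (v (n + i') ≤ v j) := by
    intro h
    exact (vne_helper hA hiA hj hv hi'mem) (le_antisymm h habove)
  have hrkw : rk A (tf n (v ∘ Equiv.swap (n+i) j)) i' = k := by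
    rw [rk_swap_other hA hiA hj v hi'mem, if_neg hnotbelow, add_zero, hi'rk]
  rw [POv, Finset.sum_eq_single_of_mem i' hi'A]
  · rw [if_pos hrkw, pval_swap_other hi1 hi2 hj hi'1 hi'2 hi'i v, if_neg hnotbelow,
      Qfun_eq hA hv hi'mem hi'rk]
    push_cast
    ring
  · intro b hb hne
    rw [if_neg]
    intro hrb
    exact hne (rk_injOn hinjw (by exact_mod_cast hb) (by exact_mod_cast hi'A)
      (by rw [hrb, hrkw]))

/-- value of `POv` strictly below the null's rank (in score order). -/
lemma PO_right {n m t i j k : ℕ} {A : Finset ℕ} (hA : A ⊆ Finset.Icc 1 m)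
    (hAc : A.card = t) (hiA : i ∈ A) (hj : j ∈ Dset n i) {v : ℕ → ℝ}
    (hv : Set.InjOn v (Finset.Icc 1 (n+m)))
    (hkR : rk A (tf n (v ∘ Equiv.swap (n+i) j)) i < k) (hkt : k ≤ t) :
    POv n A (v ∘ Equiv.swap (n+i) j) k = ((Qfun n i A v (k-1) : ℝ) - 1) / (n+1) := by
  rcases Finset.mem_Icc.mp (hA hiA) with ⟨hi1, hi2⟩
  have hinjw := injOn_tfw hA hiA hj hv
  have hinje : Set.InjOn (tf n v) (A.erase i) :=
    (injOn_tf hA hv).mono (by exact_mod_cast Finset.erase_subset i A)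
  have hR := rk_swap_null hA hiA hj v
  have hRk : 1 ≤ rk A (tf n (v ∘ Equiv.swap (n+i) j)) i := by omega
  have hcarde : (A.erase i).card = t - 1 := by
    rw [Finset.card_erase_of_mem hiA, hAc]
  have hk2 : 2 ≤ k := by omega
  have hkt' : k - 1 ∈ Finset.Icc 1 (A.erase i).card := by
    rw [hcarde]
    exact Finset.mem_Icc.mpr ⟨by omega, by omega⟩
  obtain ⟨i', hi'mem, hi'rk⟩ := rk_surj hinje hkt'
  rcases Finset.mem_erase.mp hi'mem with ⟨hi'i, hi'A⟩
  rcases Finset.mem_Icc.mp (hA hi'A) with ⟨hi'1, hi'2⟩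
  -- i' is below the swapped-in value
  have hnotabove : ¬ (v j ≤ v (n + i')) := by
    rw [above_iff_rank hA hj hv hiA hi'mem, hi'rk]
    omega
  have hbelow : v (n + i') ≤ v j := le_of_not_ge hnotabove
  have hrkw : rk A (tf n (v ∘ Equiv.swap (n+i) j)) i' = k := by
    rw [rk_swap_other hA hiA hj v hi'mem, if_pos hbelow, hi'rk]
    omega
  rw [POv, Finset.sum_eq_single_of_mem i' hi'A]
  · rw [if_pos hrkw, pval_swap_other hi1 hi2 hj hi'1 hi'2 hi'i v, if_pos hbelow,
      Qfun_eq hA hv hi'mem hi'rk]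
    push_cast
    ring
  · intro b hb hne
    rw [if_neg]
    intro hrb
    exact hne (rk_injOn hinjw (by exact_mod_cast hb) (by exact_mod_cast hi'A)
      (by rw [hrb, hrkw]))

/-- `POv` is always at least `1/(n+1)` at ranks `1,…,card A`. -/
lemma PO_pos {n m : ℕ} {A : Finset ℕ} (hA : A ⊆ Finset.Icc 1 m) {u : ℕ → ℝ}
    (hinj : Set.InjOn (tf n u) A) {k : ℕ} (hk : k ∈ Finset.Icc 1 A.card) :
    0 < POv n A u k := by
  obtain ⟨i', hi'A, hi'rk⟩ := rk_surj hinj hk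
  rw [POv, Finset.sum_eq_single_of_mem i' hi'A]
  · rw [if_pos hi'rk, pval]
    positivity
  · intro b hb hne
    rw [if_neg]
    intro hrb
    exact hne (rk_injOn hinj (by exact_mod_cast hb) (by exact_mod_cast hi'A)
      (by rw [hrb, hi'rk]))

/-- monotonicity of `Qfun`. -/
lemma Qfun_mono {n m i l l' : ℕ} {A : Finset ℕ} (hA : A ⊆ Finset.Icc 1 m)
    (hiA : i ∈ A) {v : ℕ → ℝ} (hv : Set.InjOn v (Finset.Icc 1 (n+m)))
    (hl1 : 1 ≤ l) (hll' : l ≤ l') (hl' : l' ≤ (A.erase i).card) :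
    Qfun n i A v l ≤ Qfun n i A v l' := by
  have hinje : Set.InjOn (tf n v) (A.erase i) :=
    (injOn_tf hA hv).mono (by exact_mod_cast Finset.erase_subset i A)
  obtain ⟨i₁, h₁mem, h₁rk⟩ := rk_surj hinje (Finset.mem_Icc.mpr ⟨hl1, by omega⟩)
  obtain ⟨i₂, h₂mem, h₂rk⟩ := rk_surj hinje (Finset.mem_Icc.mpr ⟨by omega, hl'⟩)
  rw [Qfun_eq hA hv h₁mem h₁rk, Qfun_eq hA hv h₂mem h₂rk]
  have := q_mono hA hv hinje h₁mem h₂mem (by rw [h₁rk, h₂rk]; exact hll')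
  omega

/-! ### Stage F4: the swap-count bound -/

lemma swap_count {n m t : ℕ} (α : ℝ) (hα0 : 0 < α) (ht : 1 ≤ t)
    {A : Finset ℕ} (hA : A ⊆ Finset.Icc 1 m) (hAc : A.card = t) {i : ℕ} (hiA : i ∈ A)
    {v : ℕ → ℝ} (hv : Set.InjOn v (Finset.Icc 1 (n+m))) :
    (((Dset n i).filter
        (fun j => (v ∘ Equiv.swap (n+i) j) ∈ Bev n t α A i)).card : ℝ)
      ≤ (n+1) * α / t := by
  have hN : (0:ℝ) < (n:ℝ) + 1 := by positivity
  have ht0 : (0:ℝ) < (t:ℝ) := by exact_mod_cast ht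
  rcases Finset.mem_Icc.mp (hA hiA) with ⟨hi1, hi2⟩
  by_cases hc : α / t - 1 / ((n:ℝ)+1) ≤ 0
  · -- degenerate case: the procedure never rejects
    have hempty : (Dset n i).filter
        (fun j => (v ∘ Equiv.swap (n+i) j) ∈ Bev n t α A i) = ∅ := by
      rw [Finset.filter_eq_empty_iff]
      intro j hj hmem
      have hKH0 : KHv n t α A (v ∘ Equiv.swap (n+i) j) = 0 := by
        apply maxArgmin_eq_zero
        intro k hk1 hkt
        have hmax : max (α / (t:ℝ) - 1 / ((n:ℝ)+1)) 0 = 0 := max_eq_right hc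
        have hpos := PO_pos (u := v ∘ Equiv.swap (n+i) j) hA
          (injOn_tfw hA hiA hj hv) (Finset.mem_Icc.mpr ⟨hk1, by omega⟩)
        simp only [hmax, mul_zero, sub_zero, if_neg (by omega : ¬ k = 0), if_pos rfl]
        push_cast
        linarith
      have := hmem.1
      omega
    rw [hempty]
    simp only [Finset.card_empty, Nat.cast_zero]
    positivity
  · push_neg at hc
    set cR := α / (t:ℝ) - 1 / ((n:ℝ)+1) with hcR
    have hmax : max cR 0 = cR := max_eq_left (le_of_lt hc)
    set C := ((n:ℝ)+1) * cR with hC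
    have hCpos : 0 < C := by positivity
    set Good := fun j => (v ∘ Equiv.swap (n+i) j) ∈ Bev n t α A i with hGood
    have hDsub := Dset_subset (n := n) hi1 hi2
    have hDinj : Set.InjOn v (Dset n i) := hv.mono (by exact_mod_cast hDsub)
    set G := ((Dset n i).filter Good).image (rk (Dset n i) v) with hG
    have hcardeq : G.card = ((Dset n i).filter Good).card :=
      Finset.card_image_of_injOn ((rk_injOn hDinj).mono
        (by exact_mod_cast Finset.filter_subset Good (Dset n i)))
    set K : ℕ → ℕ := fun x =>
      if h : ∃ j, j ∈ Dset n i ∧ Good j ∧ rk (Dset n i) v j = x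
      then rk A (tf n (v ∘ Equiv.swap (n+i) (Classical.choose h))) i else 0 with hK
    -- the master fact extractor
    have hmaster : ∀ x ∈ G, ∃ j₀, j₀ ∈ Dset n i ∧ Good j₀ ∧ rk (Dset n i) v j₀ = x ∧
        K x = rk A (tf n (v ∘ Equiv.swap (n+i) j₀)) i := by
      intro x hx
      obtain ⟨j₁, hj₁, hj₁x⟩ := Finset.mem_image.mp hx
      rcases Finset.mem_filter.mp hj₁ with ⟨hj₁D, hj₁G⟩
      have hex : ∃ j, j ∈ Dset n i ∧ Good j ∧ rk (Dset n i) v j = x :=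
        ⟨j₁, hj₁D, hj₁G, hj₁x⟩
      obtain ⟨hD₀, hG₀, hx₀⟩ := Classical.choose_spec hex
      exact ⟨Classical.choose hex, hD₀, hG₀, hx₀, by rw [hK]; exact dif_pos hex⟩
    have hcount := count_core t C hCpos (Qfun n i A v) G K ?_ ?_ ?_ ?_ ?_ ?_
    · -- conclude
      rw [← hcardeq]
      have : C + 1 = ((n:ℝ)+1) * α / t := by
        rw [hC, hcR]
        field_simp
        ring
      rw [← this]
      exact hcount
    · -- hKmem
      intro x hx
      obtain ⟨j₀, hj₀D, hj₀G, hax, hKx⟩ := hmaster x hx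
      have h1 := hj₀G.1
      have h2 := hj₀G.2
      rw [hKx, h2]
      exact ⟨h1, KHv_le n t α A _⟩
    · -- hpos
      intro x hx
      obtain ⟨j₀, hj₀D, hj₀G, hax, hKx⟩ := hmaster x hx
      have := (Finset.mem_Icc.mp (rk_mem_Icc (f := v) hj₀D)).1
      omega
    · -- h0 : x ≤ K x * C
      intro x hx
      obtain ⟨j₀, hj₀D, hj₀G, hax, hKx⟩ := hmaster x hx
      have h1 := hj₀G.1
      have h2 := hj₀G.2
      have hmm := maxArgmin_mem t (fun k =>
        (if k = 0 then (0:ℝ) else POv n A (v ∘ Equiv.swap (n+i) j₀) k)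
        - k * max (α / (t:ℝ) - 1 / ((n:ℝ)+1)) 0)
      have hf := hmm.2 0 (by omega)
      rw [← KHv, ← h2] at hf
      rw [if_neg (by rw [h2]; omega :
          ¬ rk A (tf n (v ∘ Equiv.swap (n+i) j₀)) i = 0),
        PO_self hA hAc hiA hj₀D hv, hax, hmax] at hf
      norm_num at hf
      have h3 : (x:ℝ)/((n:ℝ)+1)
          ≤ (rk A (tf n (v ∘ Equiv.swap (n+i) j₀)) i : ℝ) * cR := by linarith
      have h4 := mul_le_mul_of_nonneg_right h3 (le_of_lt hN)
      rw [div_mul_cancel₀ _ (ne_of_gt hN)] at h4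
      rw [hKx, hC]
      nlinarith [h4]
    · -- hlow
      intro x hx hKx2
      obtain ⟨j₀, hj₀D, hj₀G, hax, hKx⟩ := hmaster x hx
      have hRnull := rk_swap_null hA hiA hj₀D v
      rw [hKx] at hKx2 ⊢
      have hinje : Set.InjOn (tf n v) (A.erase i) :=
        (injOn_tf hA hv).mono (by exact_mod_cast Finset.erase_subset i A)
      have hUcard : ((A.erase i).filter (fun l => v j₀ ≤ v (n+l))).card
          = rk A (tf n (v ∘ Equiv.swap (n+i) j₀)) i - 1 := by omega
      have hkmem : rk A (tf n (v ∘ Equiv.swap (n+i) j₀)) i - 1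
          ∈ Finset.Icc 1 (A.erase i).card := by
        have : ((A.erase i).filter (fun l => v j₀ ≤ v (n+l))).card ≤ (A.erase i).card :=
          Finset.card_le_card (Finset.filter_subset _ _)
        exact Finset.mem_Icc.mpr ⟨by omega, by omega⟩
      obtain ⟨i', hi'mem, hi'rk⟩ := rk_surj hinje hkmem
      have habove : v j₀ ≤ v (n + i') := by
        rw [above_iff_rank hA hj₀D hv hiA hi'mem, hi'rk, hUcard]
      have hnotbelow : ¬ (v (n + i') ≤ v j₀) := fun h =>
        (vne_helper hA hiA hj₀D hv hi'mem) (le_antisymm h habove)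
      have hq : ¬ (rk (Dset n i) v j₀ < 1 + rk (Dset n i) v (n + i')) := by
        rw [← below_iff_q hA hiA hj₀D hv hi'mem]
        exact hnotbelow
      rw [Qfun_eq hA hv hi'mem hi'rk, ← hax]
      omega
    · -- hlt
      intro x hx k' hk'1 hk'K
      obtain ⟨j₀, hj₀D, hj₀G, hax, hKx⟩ := hmaster x hx
      have h1 := hj₀G.1
      have h2 := hj₀G.2
      rw [hKx] at hk'K ⊢
      have hRt : rk A (tf n (v ∘ Equiv.swap (n+i) j₀)) i ≤ t := by
        rw [h2]; exact KHv_le n t α A _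
      have hmm := maxArgmin_mem t (fun k =>
        (if k = 0 then (0:ℝ) else POv n A (v ∘ Equiv.swap (n+i) j₀) k)
        - k * max (α / (t:ℝ) - 1 / ((n:ℝ)+1)) 0)
      have hf := hmm.2 k' (by omega)
      rw [← KHv, ← h2] at hf
      rw [if_neg (by rw [h2]; omega :
          ¬ rk A (tf n (v ∘ Equiv.swap (n+i) j₀)) i = 0),
        if_neg (by omega : ¬ k' = 0),
        PO_self hA hAc hiA hj₀D hv, hax, hmax,
        PO_left hA hAc hiA hj₀D hv hk'1 hk'K] at hf
      have h4 := mul_le_mul_of_nonneg_right hf (le_of_lt hN)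
      rw [sub_mul, sub_mul, div_mul_cancel₀ _ (ne_of_gt hN),
        div_mul_cancel₀ _ (ne_of_gt hN)] at h4
      rw [hC]
      nlinarith [h4]
    · -- hgt
      intro x hx k' hk't hKk'
      obtain ⟨j₀, hj₀D, hj₀G, hax, hKx⟩ := hmaster x hx
      have h1 := hj₀G.1
      have h2 := hj₀G.2
      rw [hKx] at hKk' ⊢
      have hstrict := maxArgmin_lt_strict t (fun k =>
        (if k = 0 then (0:ℝ) else POv n A (v ∘ Equiv.swap (n+i) j₀) k)
        - k * max (α / (t:ℝ) - 1 / ((n:ℝ)+1)) 0) k' hk't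
        (by rw [← KHv, ← h2]; exact hKk')
      rw [← KHv, ← h2] at hstrict
      beta_reduce at hstrict
      rw [if_neg (by rw [h2]; omega :
          ¬ rk A (tf n (v ∘ Equiv.swap (n+i) j₀)) i = 0),
        if_neg (by omega : ¬ k' = 0),
        PO_self hA hAc hiA hj₀D hv, hax, hmax,
        PO_right hA hAc hiA hj₀D hv hKk' hk't] at hstrict
      have h4 := mul_lt_mul_of_pos_right hstrict hN
      rw [sub_mul, sub_mul, div_mul_cancel₀ _ (ne_of_gt hN),
        div_mul_cancel₀ _ (ne_of_gt hN)] at h4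
      rw [hC]
      push_cast
      nlinarith [h4]

/-! ### Stage G: probabilistic bound for a fixed subsample and null index -/

lemma key_bound {Ω : Type*} [MeasurableSpace Ω] (μ : Measure Ω)
    [IsProbabilityMeasure μ]
    (n m t : ℕ) (α : ℝ) (hα0 : 0 < α) (ht : 1 ≤ t)
    (S : Ω → ℕ → ℝ) (hS : Measurable S)
    (H0 : Finset ℕ) (hH0 : H0 ⊆ Finset.Icc 1 m)
    (hexch : ExchangeableNulls μ n H0 S)
    (hdist : ∀ᵐ ω ∂μ, Set.InjOn (S ω) (Finset.Icc 1 (n + m)))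
    (A : Finset ℕ) (hA : A ⊆ Finset.Icc 1 m) (hAc : A.card = t)
    (i : ℕ) (hiA : i ∈ A) (hiH : i ∈ H0) :
    μ (S ⁻¹' Bev n t α A i) ≤ ENNReal.ofReal (α / t) := by
  rcases Finset.mem_Icc.mp (hA hiA) with ⟨hi1, hi2⟩
  have hBmeas := measurable_Bev n t α A i
  -- the swapped score maps
  set F : ℕ → Ω → (ℕ → ℝ) := fun j ω => fun l => S ω (Equiv.swap (n+i) j l) with hF
  have hFmeas : ∀ j, Measurable (F j) := by
    intro j
    exact measurable_pi_lambda _ (fun l => (measurable_pi_apply _).comp hS)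
  -- each swap preserves the law
  have hlaw : ∀ j ∈ Dset n i, μ (F j ⁻¹' (Bev n t α A i)) = μ (S ⁻¹' Bev n t α A i) := by
    intro j hj
    have hperm : ∀ l ∉ NullIdx n H0, Equiv.swap (n+i) j l = l := by
      intro l hl
      apply Equiv.swap_apply_of_ne_of_ne
      · intro h
        exact hl (h ▸ (Finset.mem_union_right _
          (Finset.mem_image.mpr ⟨i, hiH, rfl⟩)))
      · intro h
        subst h
        rcases mem_Dset.mp hj with hcal | hni
        · exact hl (Finset.mem_union_left _ hcal)
        · exact hl (hni ▸ (Finset.mem_union_right _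
            (Finset.mem_image.mpr ⟨i, hiH, rfl⟩)))
    have hmap := hexch (Equiv.swap (n+i) j) hperm
    calc μ (F j ⁻¹' (Bev n t α A i))
        = (Measure.map (F j) μ) (Bev n t α A i) :=
          (Measure.map_apply (hFmeas j) hBmeas).symm
      _ = (Measure.map S μ) (Bev n t α A i) := by rw [hF]; rw [hmap]
      _ = μ (S ⁻¹' Bev n t α A i) := Measure.map_apply hS hBmeas
  -- sum over the swaps
  have hsum1 : ∑ j ∈ Dset n i, μ (F j ⁻¹' (Bev n t α A i))
      = (n+1 : ℕ) * μ (S ⁻¹' Bev n t α A i) := by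
    rw [Finset.sum_congr rfl hlaw, Finset.sum_const, Dset_card n i hi1, nsmul_eq_mul]
  -- the sum as an integral of a counting function
  have hsum2 : ∑ j ∈ Dset n i, μ (F j ⁻¹' (Bev n t α A i))
      = ∫⁻ ω, (((Dset n i).filter (fun j => F j ω ∈ Bev n t α A i)).card : ℝ≥0∞) ∂μ := by
    have h1 : ∀ j ∈ Dset n i, μ (F j ⁻¹' (Bev n t α A i))
        = ∫⁻ ω, (F j ⁻¹' (Bev n t α A i)).indicator (fun _ => (1:ℝ≥0∞)) ω ∂μ := by
      intro j _
      rw [lintegral_indicator ((hFmeas j) hBmeas)]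
      simp
    rw [Finset.sum_congr rfl h1, ← lintegral_finset_sum]
    · apply lintegral_congr
      intro ω
      rw [Finset.card_filter]
      push_cast
      apply Finset.sum_congr rfl
      intro j _
      rw [Set.indicator_apply]
      simp only [Set.mem_preimage]
    · intro j _
      exact (measurable_const).indicator ((hFmeas j) hBmeas)
  -- a.e. pointwise bound via the deterministic counting lemma
  have hptwise : ∀ᵐ ω ∂μ,
      (((Dset n i).filter (fun j => F j ω ∈ Bev n t α A i)).card : ℝ≥0∞)
        ≤ ENNReal.ofReal ((n+1) * α / t) := by
    filter_upwards [hdist] with ω hω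
    have hs := swap_count (n := n) (m := m) (t := t) α hα0 ht hA hAc hiA hω
    have hfe : (Dset n i).filter (fun j => F j ω ∈ Bev n t α A i)
        = (Dset n i).filter (fun j => (S ω ∘ Equiv.swap (n+i) j) ∈ Bev n t α A i) := rfl
    rw [hfe]
    rw [← ENNReal.ofReal_natCast]
    exact ENNReal.ofReal_le_ofReal hs
  -- integrate
  have hint : ∫⁻ ω, (((Dset n i).filter (fun j => F j ω ∈ Bev n t α A i)).card : ℝ≥0∞) ∂μ
      ≤ ENNReal.ofReal ((n+1) * α / t) := by
    calc ∫⁻ ω, (((Dset n i).filter (fun j => F j ω ∈ Bev n t α A i)).card : ℝ≥0∞) ∂μ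
        ≤ ∫⁻ _, ENNReal.ofReal ((n+1) * α / t) ∂μ := lintegral_mono_ae hptwise
      _ = ENNReal.ofReal ((n+1) * α / t) := by
          rw [lintegral_const, measure_univ, mul_one]
  -- conclude
  have hmain : ((n+1 : ℕ) : ℝ≥0∞) * μ (S ⁻¹' Bev n t α A i)
      ≤ ((n+1 : ℕ) : ℝ≥0∞) * ENNReal.ofReal (α / t) := by
    rw [← hsum1]
    rw [hsum2]
    refine hint.trans (le_of_eq ?_)
    rw [← ENNReal.ofReal_natCast (n+1), ← ENNReal.ofReal_mul (by positivity)]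
    congr 1
    push_cast
    ring
  have hne0 : ((n+1 : ℕ) : ℝ≥0∞) ≠ 0 := by simp
  have hnetop : ((n+1 : ℕ) : ℝ≥0∞) ≠ ⊤ := by simp
  exact (ENNReal.mul_le_mul_iff_right hne0 hnetop).mp hmain

/-! ### Stage H: counting subsets -/

lemma card_powersetCard_mem {s : Finset ℕ} {i : ℕ} (hi : i ∈ s) {t : ℕ} (ht : 1 ≤ t) :
    ((s.powersetCard t).filter (fun A => i ∈ A)).card
      = (s.card - 1).choose (t - 1) := by
  have hbij : ((s.powersetCard t).filter (fun A => i ∈ A)).card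
      = ((s.erase i).powersetCard (t-1)).card := by
    apply Finset.card_bij (fun A _ => A.erase i)
    · intro A hA
      rcases Finset.mem_filter.mp hA with ⟨hA1, hA2⟩
      rcases Finset.mem_powersetCard.mp hA1 with ⟨hAs, hAc⟩
      apply Finset.mem_powersetCard.mpr
      constructor
      · intro x hx
        rcases Finset.mem_erase.mp hx with ⟨hxi, hxA⟩
        exact Finset.mem_erase.mpr ⟨hxi, hAs hxA⟩
      · rw [Finset.card_erase_of_mem hA2, hAc]
    · intro A hA A' hA' heq
      have h2 := (Finset.mem_filter.mp hA).2
      have h2' := (Finset.mem_filter.mp hA').2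
      rw [← Finset.insert_erase h2, ← Finset.insert_erase h2', heq]
    · intro B hB
      rcases Finset.mem_powersetCard.mp hB with ⟨hBs, hBc⟩
      have hiB : i ∉ B := fun h => (Finset.mem_erase.mp (hBs h)).1 rfl
      refine ⟨insert i B, Finset.mem_filter.mpr ⟨Finset.mem_powersetCard.mpr
        ⟨?_, ?_⟩, Finset.mem_insert_self i B⟩, Finset.erase_insert hiB⟩
      · intro x hx
        rcases Finset.mem_insert.mp hx with rfl | hx
        · exact hi
        · exact (Finset.erase_subset i s) (hBs hx)
      · rw [Finset.card_insert_of_notMem hiB, hBc]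
        omega
  rw [hbij, Finset.card_powersetCard, Finset.card_erase_of_mem hi]

lemma sum_inter_card {s H0 : Finset ℕ} (hH0 : H0 ⊆ s) {t : ℕ} (ht : 1 ≤ t) :
    ∑ A ∈ s.powersetCard t, (A ∩ H0).card
      = H0.card * (s.card - 1).choose (t - 1) := by
  have h1 : ∀ A ∈ s.powersetCard t, (A ∩ H0).card
      = ∑ i ∈ H0, if i ∈ A then 1 else 0 := by
    intro A _
    rw [← Finset.card_filter]
    congr 1
    ext x
    simp only [Finset.mem_inter, Finset.mem_filter]
    tauto
  rw [Finset.sum_congr rfl h1, Finset.sum_comm]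
  have h2 : ∀ i ∈ H0, (∑ A ∈ s.powersetCard t, if i ∈ A then 1 else 0)
      = (s.card - 1).choose (t - 1) := by
    intro i hi
    rw [← Finset.card_filter]
    exact card_powersetCard_mem (hH0 hi) ht
  rw [Finset.sum_congr rfl h2, Finset.sum_const, smul_eq_mul]

end SLCAux

/-- Theorem 3.2 of the paper: under Assumption (A1), the
single-subsampled procedure SLC+ at level `α ∈ (0,1)` with subsample size
`t ∈ {1,…,m}` satisfies `bFDR(SLC+) ≤ α·m₀/m`, the probability being taken
marginally over both the scores and the subsampling randomization. -/
theorem SLCplus_bFDR_control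
    {Ω : Type*} [MeasurableSpace Ω] (μ : Measure Ω) [IsProbabilityMeasure μ]
    (n m : ℕ) (hn : 1 ≤ n) (hm : 1 ≤ m)
    (α : ℝ) (hα : α ∈ Set.Ioo (0 : ℝ) 1)
    (t : ℕ) (ht1 : 1 ≤ t) (htm : t ≤ m)
    (S : Ω → ℕ → ℝ) (hS : Measurable S)
    (H0 : Finset ℕ) (hH0 : H0 ⊆ Finset.Icc 1 m)
    (hexch : ExchangeableNulls μ n H0 S)
    (hdist : ∀ᵐ ω ∂μ, Set.InjOn (S ω) (Finset.Icc 1 (n + m)))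
    (σ : Ω → ℕ → ℕ) (hσ : ∀ᵐ ω ∂μ, SortsTest n m (S ω) (σ ω))
    -- the subsample: uniformly distributed over size-`t` subsets of `{1,…,m}`,
    -- independent of the scores
    (𝒮 : Ω → Finset ℕ)
    (hsub : ∀ (A : Finset ℕ) (E : Set (ℕ → ℝ)), MeasurableSet E →
      μ ({ω | 𝒮 ω = A} ∩ S ⁻¹' E) = subProb m t A * μ (S ⁻¹' E))
    -- the enumeration of the subsample ordering its test scores decreasingly
    (σ' : Ω → ℕ → ℕ) (hσ' : ∀ᵐ ω ∂μ, SortsSub n (S ω) (𝒮 ω) (σ' ω)) :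
    μ {ω | rejSet n m (S ω) (σ' ω) (khatSLC n t α (S ω) (σ' ω)) ≠ ∅
          ∧ σ ω (rejSet n m (S ω) (σ' ω) (khatSLC n t α (S ω) (σ' ω))).card ∈ H0}
      ≤ ENNReal.ofReal (α * H0.card / m) := by
  classical
  obtain ⟨hα0, hα1⟩ := hα
  have hα0' : 0 < α := hα0
  set PP := (Finset.Icc 1 m).powersetCard t with hPP
  set E₀ := {ω | rejSet n m (S ω) (σ' ω) (khatSLC n t α (S ω) (σ' ω)) ≠ ∅
          ∧ σ ω (rejSet n m (S ω) (σ' ω) (khatSLC n t α (S ω) (σ' ω))).card ∈ H0}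
    with hE₀
  set P : Ω → Prop := fun ω => Set.InjOn (S ω) (Finset.Icc 1 (n + m))
    ∧ SortsTest n m (S ω) (σ ω) ∧ SortsSub n (S ω) (𝒮 ω) (σ' ω) with hP
  have hPae : ∀ᵐ ω ∂μ, P ω := by
    filter_upwards [hdist, hσ, hσ'] with ω h1 h2 h3
    exact ⟨h1, h2, h3⟩
  have hNP : μ {ω | ¬ P ω} = 0 := by
    have := ae_iff.mp hPae
    exact this
  set junkf : Finset ℕ → Set Ω := fun A => if A ∈ PP then ∅ else {ω | 𝒮 ω = A}
    with hjunkf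
  set junk : Set Ω := ⋃ (A : Finset ℕ), junkf A with hjunkdef
  have hjunk : μ junk = 0 := by
    apply measure_iUnion_null
    intro A
    simp only [hjunkf]
    by_cases hA : A ∈ PP
    · simp [hA]
    · rw [if_neg hA]
      have h1 := hsub A Set.univ MeasurableSet.univ
      rw [Set.preimage_univ, Set.inter_univ, measure_univ, mul_one] at h1
      rw [h1, subProb, if_neg (by rw [hPP] at hA; exact hA)]
  set bigU : Set Ω := ⋃ A ∈ PP, ⋃ i ∈ A ∩ H0,
    ({ω | 𝒮 ω = A} ∩ S ⁻¹' (SLCAux.Bev n t α A i)) with hbigU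
  have hincl : E₀ ⊆ (bigU ∪ junk) ∪ {ω | ¬ P ω} := by
    intro ω hω
    by_cases hPω : P ω
    · left
      obtain ⟨hinj, hst, hss⟩ := hPω
      by_cases hAPP : 𝒮 ω ∈ PP
      · left
        rw [hPP] at hAPP
        rcases Finset.mem_powersetCard.mp hAPP with ⟨hAsub, hAcard⟩
        obtain ⟨i, hiA, hiH, hBev⟩ := SLCAux.event_incl hAsub hAcard hst hss
          (SLCAux.injOn_tf (Finset.Subset.refl (Finset.Icc 1 m)) hinj) hω.1 hω.2
        rw [hbigU]
        refine Set.mem_biUnion (by rw [hPP]; exact hAPP) ?_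
        exact Set.mem_biUnion (Finset.mem_inter.mpr ⟨hiA, hiH⟩) ⟨rfl, hBev⟩
      · right
        rw [hjunkdef]
        refine Set.mem_iUnion.mpr ⟨𝒮 ω, ?_⟩
        simp only [hjunkf]
        rw [if_neg hAPP]
        exact rfl
    · right; exact hPω
  have hkb : ∀ A ∈ PP, ∀ i ∈ A ∩ H0,
      μ ({ω | 𝒮 ω = A} ∩ S ⁻¹' (SLCAux.Bev n t α A i))
        ≤ subProb m t A * ENNReal.ofReal (α / t) := by
    intro A hA i hi
    rw [hPP] at hA
    rcases Finset.mem_powersetCard.mp hA with ⟨hAsub, hAcard⟩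
    rcases Finset.mem_inter.mp hi with ⟨hiA, hiH⟩
    rw [hsub A _ (SLCAux.measurable_Bev n t α A i)]
    exact mul_le_mul_right (SLCAux.key_bound μ n m t α hα0' ht1 S hS H0 hH0
      hexch hdist A hAsub hAcard i hiA hiH) _
  have hsubP : ∀ A ∈ PP, subProb m t A = ((PP.card : ℝ≥0∞))⁻¹ := by
    intro A hA
    rw [subProb, if_pos (by rw [hPP] at hA; exact hA), hPP]
  -- main chain
  have hchain : μ E₀ ≤ ∑ A ∈ PP, ∑ i ∈ A ∩ H0,
      subProb m t A * ENNReal.ofReal (α / t) := by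
    calc μ E₀ ≤ μ ((bigU ∪ junk) ∪ {ω | ¬ P ω}) := measure_mono hincl
      _ ≤ μ (bigU ∪ junk) + μ {ω | ¬ P ω} := measure_union_le _ _
      _ ≤ (μ bigU + μ junk) + 0 := by
          rw [hNP]
          exact add_le_add_left (measure_union_le _ _) 0
      _ = μ bigU := by rw [hjunk, add_zero, add_zero]
      _ ≤ ∑ A ∈ PP, μ (⋃ i ∈ A ∩ H0, ({ω | 𝒮 ω = A} ∩ S ⁻¹' (SLCAux.Bev n t α A i))) := by
          rw [hbigU]
          exact measure_biUnion_finset_le _ _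
      _ ≤ ∑ A ∈ PP, ∑ i ∈ A ∩ H0, μ ({ω | 𝒮 ω = A} ∩ S ⁻¹' (SLCAux.Bev n t α A i)) := by
          apply Finset.sum_le_sum
          intro A _
          exact measure_biUnion_finset_le _ _
      _ ≤ ∑ A ∈ PP, ∑ i ∈ A ∩ H0, subProb m t A * ENNReal.ofReal (α / t) := by
          apply Finset.sum_le_sum
          intro A hA
          apply Finset.sum_le_sum
          intro i hi
          exact hkb A hA i hi
  -- evaluate the double sum
  have heval : ∑ A ∈ PP, ∑ i ∈ A ∩ H0, subProb m t A * ENNReal.ofReal (α / t)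
      = ((∑ A ∈ PP, (A ∩ H0).card : ℕ) : ℝ≥0∞)
        * ((PP.card : ℝ≥0∞)⁻¹ * ENNReal.ofReal (α / t)) := by
    have h1 : ∀ A ∈ PP, ∑ i ∈ A ∩ H0, subProb m t A * ENNReal.ofReal (α / t)
        = (((A ∩ H0).card : ℕ) : ℝ≥0∞) * ((PP.card : ℝ≥0∞)⁻¹ * ENNReal.ofReal (α / t)) := by
      intro A hA
      rw [Finset.sum_const, hsubP A hA, nsmul_eq_mul]
    rw [Finset.sum_congr rfl h1, ← Finset.sum_mul, Nat.cast_sum]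
  -- final arithmetic
  have hT : ∑ A ∈ PP, (A ∩ H0).card = H0.card * (m - 1).choose (t - 1) := by
    rw [hPP]
    have := SLCAux.sum_inter_card (s := Finset.Icc 1 m) hH0 ht1
    rwa [Nat.card_Icc, Nat.add_sub_cancel] at this
  have hPPcard : PP.card = m.choose t := by
    rw [hPP, Finset.card_powersetCard, Nat.card_Icc, Nat.add_sub_cancel]
  have hid : m * ((m-1).choose (t-1)) = m.choose t * t := by
    have h := Nat.add_one_mul_choose_eq (m-1) (t-1)
    have hm' : m - 1 + 1 = m := by omega
    have ht' : t - 1 + 1 = t := by omega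
    rw [hm', ht'] at h
    exact h
  have hCpos : 0 < m.choose t := Nat.choose_pos htm
  have hCposR : (0:ℝ) < (m.choose t : ℝ) := by exact_mod_cast hCpos
  have hm0 : (0:ℝ) < (m:ℝ) := by exact_mod_cast hm
  have ht0 : (0:ℝ) < (t:ℝ) := by exact_mod_cast ht1
  refine hchain.trans ?_
  rw [heval, hT, hPPcard]
  have hofr : (((H0.card * (m - 1).choose (t - 1) : ℕ)) : ℝ≥0∞)
      * (((m.choose t : ℕ) : ℝ≥0∞)⁻¹ * ENNReal.ofReal (α / t))
      = ENNReal.ofReal (((H0.card * (m - 1).choose (t - 1) : ℕ) : ℝ)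
          * (((m.choose t : ℕ) : ℝ)⁻¹ * (α / t))) := by
    rw [ENNReal.ofReal_mul (by positivity), ENNReal.ofReal_mul (by positivity),
      ENNReal.ofReal_natCast, ENNReal.ofReal_inv_of_pos hCposR, ENNReal.ofReal_natCast]
  rw [hofr]
  apply ENNReal.ofReal_le_ofReal
  apply le_of_eq
  have hidR : (m:ℝ) * (((m-1).choose (t-1) : ℕ) : ℝ) = ((m.choose t : ℕ) : ℝ) * t := by
    exact_mod_cast hid
  push_cast
  field_simp
  linear_combination ((H0.card : ℝ)) * hidR


end
end
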